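/- arXiv:2505.06220 — 7 statements merged into one kernel-verified Lean document; each statement's English description precedes it below -/
import Mathlib

section
/- Let Γ be torsionless Christoffel symbols on U satisfying the flat-unit condition Σ_{σ=1}^r Γ^{i(α)}_{j(β)1(σ)} = 0 and the condition d_∇V = 0, i.e. ∂_{j(β)}V^{i(α)}_{k(γ)} − ∂_{k(γ)}V^{i(α)}_{j(β)} + Σ_{s(σ)}(Γ^{i(α)}_{j(β)s(σ)}V^{s(σ)}_{k(γ)} − Γ^{i(α)}_{k(γ)s(σ)}V^{s(σ)}_{j(β)}) = 0 for all indices, where V^{i(α)}_{j(β)} = δ_{αβ} X^{(i−j+1)(α)} (zero for i < j) for smooth functions X^{i(α)} on U such that at every point X^{1(α)} ≠ X^{1(β)} for α ≠ β and X^{2(α)} ≠ 0 for every α with m_α ≥ 2. Define A^{i(α)}_{j(β)k(γ)s(σ)} := Σ_{t(τ)} (Γ^{i(α)}_{j(β)t(τ)}c^{t(τ)}_{k(γ)s(σ)} − Γ^{t(τ)}_{j(β)s(σ)}c^{i(α)}_{k(γ)t(τ)} − Γ^{i(α)}_{k(γ)t(τ)}c^{t(τ)}_{j(β)s(σ)}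 + Γ^{t(τ)}_{k(γ)s(σ)}c^{i(α)}_{j(β)t(τ)}). If Σ_{s(σ)} A^{i(α)}_{j(β)k(γ)s(σ)} X^{s(σ)} = 0 on U for all indices i(α), j(β), k(γ), then A^{i(α)}_{j(β)k(γ)s(σ)} = 0 identically on U for all index quadruples; equivalently the tensor ∇_j c^i_{ks} is symmetric in its lower indices. -/
open scoped BigOperators

/-- Coordinate domain: one real coordinate `u^{i(α)}` for each block `α` and each
1-based index `i ∈ {1,…,m α}`; the element `⟨α, p⟩` corresponds to `(p+1)(α)`. -/
abbrev Dom (r : ℕ) (m : Fin r → ℕ) : Type := ((α : Fin r) × Fin (m α)) → ℝ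

/-- `InR m α i`: the 1-based integer index `i` is admissible in block `α`. -/
abbrev InR {r : ℕ} (m : Fin r → ℕ) (α : Fin r) (i : ℤ) : Prop :=
  1 ≤ i ∧ i ≤ (m α : ℤ)

/-- The unit coordinate vector in the direction `j(β)` (zero if out of range). -/
def coordVec {r : ℕ} (m : Fin r → ℕ) (β : Fin r) (j : ℤ) : Dom r m :=
  fun p => if p.1 = β ∧ ((p.2.val : ℤ) + 1 = j) then 1 else 0

/-- Partial derivative `∂_{j(β)} f` at `x`. -/
noncomputable def pd {r : ℕ} {m : Fin r → ℕ} (β : Fin r) (j : ℤ)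
    (f : Dom r m → ℝ) (x : Dom r m) : ℝ :=
  fderiv ℝ f x (coordVec m β j)

/-- David–Hertling structure constants `c^{i(α)}_{j(β)k(γ)}`; out-of-range
values are interpreted as `0`. -/
def cDH {r : ℕ} (m : Fin r → ℕ) (α : Fin r) (i : ℤ) (β : Fin r) (j : ℤ)
    (γ : Fin r) (k : ℤ) : ℝ :=
  if α = β ∧ α = γ ∧ i = j + k - 1 ∧ InR m α i ∧ InR m β j ∧ InR m γ k then 1 else 0

/-- Sum over all ambient indices `s(σ)`. -/
noncomputable def sumIdx {r : ℕ} (m : Fin r → ℕ) (f : Fin r → ℤ → ℝ) : ℝ :=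
  ∑ σ : Fin r, ∑ s ∈ Finset.Icc (1 : ℤ) ((m σ : ℤ)), f σ s

/-- The components `V^{i(α)}_{j(β)} = δ_{αβ} X^{(i-j+1)(α)}` of `V = X∘`. -/
def Vcomp {r : ℕ} {m : Fin r → ℕ} (X : Fin r → ℤ → Dom r m → ℝ)
    (α : Fin r) (i : ℤ) (β : Fin r) (j : ℤ) : Dom r m → ℝ :=
  fun x => if α = β then X α (i - j + 1) x else 0

/-- The tensor `A^{i(α)}_{j(β)k(γ)s(σ)}` measuring the failure of symmetry of `∇c`. -/
noncomputable def Atens {r : ℕ} {m : Fin r → ℕ}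
    (Γ : Fin r → ℤ → Fin r → ℤ → Fin r → ℤ → Dom r m → ℝ)
    (α : Fin r) (i : ℤ) (β : Fin r) (j : ℤ) (γ : Fin r) (k : ℤ)
    (σ : Fin r) (s : ℤ) : Dom r m → ℝ :=
  fun x => sumIdx m (fun τ t =>
    Γ α i β j τ t x * cDH m τ t γ k σ s
      - Γ τ t β j σ s x * cDH m α i γ k τ t
      - Γ α i γ k τ t x * cDH m τ t β j σ s
      + Γ τ t γ k σ s x * cDH m α i β j τ t)

/-- The curvature tensor `R^{a(α)}_{b(β)c(γ)d(δ)}` of the connection `Γ`. -/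
noncomputable def Rm {r : ℕ} {m : Fin r → ℕ}
    (Γ : Fin r → ℤ → Fin r → ℤ → Fin r → ℤ → Dom r m → ℝ)
    (α : Fin r) (a : ℤ) (β : Fin r) (b : ℤ) (γ : Fin r) (c : ℤ)
    (δ : Fin r) (d : ℤ) (x : Dom r m) : ℝ :=
  pd β b (Γ α a γ c δ d) x - pd γ c (Γ α a β b δ d) x
    + sumIdx m (fun σ s => Γ α a β b σ s x * Γ σ s γ c δ d x
        - Γ α a γ c σ s x * Γ σ s β b δ d x)

namespace DH0

open Polynomial

variable {r : ℕ} {m : Fin r → ℕ}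

/-- index type -/
abbrev Ix (r : ℕ) (m : Fin r → ℕ) : Type := (α : Fin r) × Fin (m α)

/-- coordinate vector -/
def delt (p₀ : Ix r m) : Dom r m := fun p => if p = p₀ then 1 else 0

/-- the 1-based integer index of `p` -/
def ti (p : Ix r m) : ℤ := (p.2.val : ℤ) + 1

/-- block polynomial -/
noncomputable def bp (Y : Dom r m) (α : Fin r) : Polynomial ℝ :=
  ∑ j : Fin (m α), Polynomial.C (Y ⟨α, j⟩) * Polynomial.X ^ (j : ℕ)

lemma bp_coeff (Y : Dom r m) (α : Fin r) (i : ℕ) :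
    (bp Y α).coeff i = if h : i < m α then Y ⟨α, ⟨i, h⟩⟩ else 0 := by
  unfold bp
  rw [Polynomial.finset_sum_coeff]
  split
  · next h =>
    rw [Finset.sum_eq_single (⟨i, h⟩ : Fin (m α))]
    · simp
    · intro b _ hb
      rw [Polynomial.coeff_C_mul, Polynomial.coeff_X_pow, if_neg, mul_zero]
      intro he; exact hb (by ext; simp [← he])
    · simp
  · next h =>
    apply Finset.sum_eq_zero
    intro b _
    rw [Polynomial.coeff_C_mul, Polynomial.coeff_X_pow, if_neg, mul_zero]
    intro he; exact h (he ▸ b.isLt)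

lemma bp_coeff_lt (Y : Dom r m) (α : Fin r) (i : ℕ) (h : i < m α) :
    (bp Y α).coeff i = Y ⟨α, ⟨i, h⟩⟩ := by rw [bp_coeff, dif_pos h]

lemma bp_add (Y Z : Dom r m) (α : Fin r) : bp (Y + Z) α = bp Y α + bp Z α := by
  unfold bp
  rw [← Finset.sum_add_distrib]
  refine Finset.sum_congr rfl fun j _ => ?_
  simp [Pi.add_apply, map_add, add_mul]

lemma bp_smul (c : ℝ) (Y : Dom r m) (α : Fin r) : bp (c • Y) α = Polynomial.C c * bp Y α := by
  unfold bp
  rw [Finset.mul_sum]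
  refine Finset.sum_congr rfl fun j _ => ?_
  simp [mul_assoc, map_mul]

/-- the unit -/
def oneE : Dom r m := fun p => if p.2.val = 0 then 1 else 0

lemma bp_one (α : Fin r) (h : 0 < m α) : bp (oneE : Dom r m) α = 1 := by
  unfold bp oneE
  rw [Finset.sum_eq_single (⟨0, h⟩ : Fin (m α))]
  · simp
  · intro b _ hb
    have : b.val ≠ 0 := fun hv => hb (by ext; exact hv)
    simp [this]
  · simp

/-- truncated block multiplication -/
noncomputable def mulE (Y Z : Dom r m) : Dom r m :=
  fun p => ((bp Y p.1) * (bp Z p.1)).coeff p.2.val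

lemma coeff_mul_congr {P P' Q Q' : Polynomial ℝ} {i : ℕ}
    (hP : ∀ j ≤ i, P.coeff j = P'.coeff j) (hQ : ∀ j ≤ i, Q.coeff j = Q'.coeff j) :
    (P * Q).coeff i = (P' * Q').coeff i := by
  rw [Polynomial.coeff_mul, Polynomial.coeff_mul]
  refine Finset.sum_congr rfl fun x hx => ?_
  rw [Finset.HasAntidiagonal.mem_antidiagonal] at hx
  rw [hP x.1 (le_of_add_le_left hx.le), hQ x.2 (le_of_add_le_right hx.le)]

lemma bp_mulE_coeff (Y Z : Dom r m) (α : Fin r) {j : ℕ} (hj : j < m α) :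
    (bp (mulE Y Z) α).coeff j = (bp Y α * bp Z α).coeff j := by
  rw [bp_coeff_lt _ _ _ hj]; rfl

lemma mulE_comm (Y Z : Dom r m) : mulE Y Z = mulE Z Y := by
  funext p; unfold mulE; rw [mul_comm]

lemma mulE_assoc (Y Z W : Dom r m) : mulE (mulE Y Z) W = mulE Y (mulE Z W) := by
  funext p
  show ((bp (mulE Y Z) p.1) * (bp W p.1)).coeff p.2.val = _
  have h1 : ((bp (mulE Y Z) p.1) * (bp W p.1)).coeff p.2.val
      = ((bp Y p.1 * bp Z p.1) * bp W p.1).coeff p.2.val := by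
    refine coeff_mul_congr (fun j hj => ?_) (fun _ _ => rfl)
    exact bp_mulE_coeff Y Z p.1 (lt_of_le_of_lt hj p.2.isLt)
  have h2 : ((bp Y p.1) * (bp (mulE Z W) p.1)).coeff p.2.val
      = (bp Y p.1 * (bp Z p.1 * bp W p.1)).coeff p.2.val := by
    refine coeff_mul_congr (fun _ _ => rfl) (fun j hj => ?_)
    exact bp_mulE_coeff Z W p.1 (lt_of_le_of_lt hj p.2.isLt)
  rw [h1, mul_assoc, ← h2]; rfl

lemma one_mulE (Z : Dom r m) : mulE oneE Z = Z := by
  funext p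
  show ((bp oneE p.1) * (bp Z p.1)).coeff p.2.val = Z p
  have hpos : 0 < m p.1 := lt_of_le_of_lt (Nat.zero_le _) p.2.isLt
  rw [bp_one p.1 hpos, one_mul, bp_coeff_lt Z p.1 p.2.val p.2.isLt]

lemma mulE_one (Z : Dom r m) : mulE Z oneE = Z := by rw [mulE_comm, one_mulE]

lemma mulE_add_right (Y Z W : Dom r m) : mulE Y (Z + W) = mulE Y Z + mulE Y W := by
  funext p
  show ((bp Y p.1) * (bp (Z + W) p.1)).coeff p.2.val = _
  rw [bp_add, mul_add, Polynomial.coeff_add]; rfl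

lemma mulE_add_left (Y Z W : Dom r m) : mulE (Y + Z) W = mulE Y W + mulE Z W := by
  rw [mulE_comm, mulE_add_right, mulE_comm W Y, mulE_comm W Z]

lemma mulE_smul_right (c : ℝ) (Y Z : Dom r m) : mulE Y (c • Z) = c • mulE Y Z := by
  funext p
  show ((bp Y p.1) * (bp (c • Z) p.1)).coeff p.2.val = _
  rw [bp_smul, mul_left_comm, Polynomial.coeff_C_mul]; rfl

lemma mulE_smul_left (c : ℝ) (Y Z : Dom r m) : mulE (c • Y) Z = c • mulE Y Z := by
  rw [mulE_comm, mulE_smul_right, mulE_comm]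

lemma mulE_zero_right (Y : Dom r m) : mulE Y 0 = 0 := by
  have := mulE_smul_right (0 : ℝ) Y 0
  simpa using this

lemma mulE_sub_right (Y Z W : Dom r m) : mulE Y (Z - W) = mulE Y Z - mulE Y W := by
  have h := mulE_add_right Y (Z - W) W
  rw [sub_add_cancel] at h
  rw [h]; abel

/-- powers -/
noncomputable def powE (X : Dom r m) : ℕ → Dom r m
  | 0 => oneE
  | c + 1 => mulE X (powE X c)

lemma powE_add (X : Dom r m) (a b : ℕ) :
    powE X (a + b) = mulE (powE X a) (powE X b) := by
  induction a with
  | zero => simp [powE, one_mulE]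
  | succ n ih =>
    have h1 : n + 1 + b = (n + b) + 1 := by omega
    rw [h1]
    show mulE X (powE X (n+b)) = _
    rw [ih, ← mulE_assoc]
    rfl

end DH0
namespace DH0
open Polynomial
variable {r : ℕ} {m : Fin r → ℕ}

/-- evaluation of a polynomial at `X` in the truncated algebra -/
noncomputable def aev (Xv : Dom r m) (q : Polynomial ℝ) : Dom r m :=
  fun p => (q.comp (bp Xv p.1)).coeff p.2.val

lemma pow_bp (Xv : Dom r m) (α : Fin r) (c : ℕ) {i : ℕ} (h : i < m α) :
    ((bp Xv α) ^ c).coeff i = powE Xv c ⟨α, ⟨i, h⟩⟩ := by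
  induction c generalizing i with
  | zero =>
    show (1 : Polynomial ℝ).coeff i = oneE _
    rw [Polynomial.coeff_one]
    unfold oneE
    simp [eq_comm]
  | succ n ih =>
    have h1 : powE Xv (n+1) ⟨α, ⟨i, h⟩⟩
        = ((bp Xv α) * (bp (powE Xv n) α)).coeff i := rfl
    rw [h1]
    rw [pow_succ, mul_comm ((bp Xv α)^n)]
    refine (coeff_mul_congr (fun _ _ => rfl) (fun j hj => ?_)).symm
    have hjm : j < m α := lt_of_le_of_lt hj h
    rw [bp_coeff_lt _ _ _ hjm, ih hjm]

lemma aev_mem (Xv : Dom r m) (q : Polynomial ℝ) :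
    aev Xv q ∈ Submodule.span ℝ (Set.range (powE Xv)) := by
  induction q using Polynomial.induction_on' with
  | add p q hp hq =>
    have : aev Xv (p + q) = aev Xv p + aev Xv q := by
      funext pt
      unfold aev
      rw [Polynomial.add_comp, Polynomial.coeff_add]
      rfl
    rw [this]
    exact Submodule.add_mem _ hp hq
  | monomial n a =>
    have : aev Xv (Polynomial.monomial n a) = a • powE Xv n := by
      funext pt
      unfold aev
      rw [← Polynomial.C_mul_X_pow_eq_monomial, Polynomial.mul_comp, Polynomial.C_comp,
        Polynomial.pow_comp, Polynomial.X_comp, Polynomial.coeff_C_mul,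
        pow_bp Xv pt.1 n pt.2.isLt]
      rfl
    rw [this]
    exact Submodule.smul_mem _ _ (Submodule.subset_span ⟨n, rfl⟩)

/-- first coefficient (dummy 0 for empty blocks) -/
def c0 (Xv : Dom r m) (α : Fin r) : ℝ := if h : 0 < m α then Xv ⟨α, ⟨0, h⟩⟩ else 0
/-- second coefficient (dummy 1 for short blocks) -/
def c1 (Xv : Dom r m) (α : Fin r) : ℝ := if h : 1 < m α then Xv ⟨α, ⟨1, h⟩⟩ else 1

/-- the separating polynomials -/
noncomputable def qpol (Xv : Dom r m) (α : Fin r) (i : ℕ) : Polynomial ℝ :=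
  (Polynomial.X - Polynomial.C (c0 Xv α)) ^ i *
    ∏ β ∈ Finset.univ.erase α, (Polynomial.X - Polynomial.C (c0 Xv β)) ^ (m β)

lemma low_coeff {S R : Polynomial ℝ} (hS : S.coeff 0 = 0) (k : ℕ) {i : ℕ} (hi : i < k) :
    (S ^ k * R).coeff i = 0 := by
  obtain ⟨S', hS'⟩ := Polynomial.X_dvd_iff.2 hS
  rw [hS', mul_pow, mul_assoc, mul_comm ((Polynomial.X : Polynomial ℝ) ^ k),
    Polynomial.coeff_mul_X_pow', if_neg (by omega)]

lemma qpol_comp (Xv : Dom r m) (α β : Fin r) (i : ℕ) :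
    (qpol Xv α i).comp (bp Xv β)
      = (bp Xv β - Polynomial.C (c0 Xv α)) ^ i *
        ∏ β' ∈ Finset.univ.erase α, (bp Xv β - Polynomial.C (c0 Xv β')) ^ (m β') := by
  unfold qpol
  rw [Polynomial.mul_comp, Polynomial.pow_comp, Polynomial.sub_comp, Polynomial.X_comp,
    Polynomial.C_comp, Polynomial.prod_comp]
  congr 1
  refine Finset.prod_congr rfl fun β' _ => ?_
  rw [Polynomial.pow_comp, Polynomial.sub_comp, Polynomial.X_comp, Polynomial.C_comp]

lemma sub_c0_coeff_zero (Xv : Dom r m) (β : Fin r) (hβ : 0 < m β) :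
    (bp Xv β - Polynomial.C (c0 Xv β)).coeff 0 = 0 := by
  rw [Polynomial.coeff_sub, Polynomial.coeff_C, bp_coeff_lt _ _ _ hβ]
  unfold c0
  rw [dif_pos hβ]
  simp

lemma aev_qpol_other (Xv : Dom r m) (α β : Fin r) (i : ℕ) (hne : β ≠ α)
    (j : Fin (m β)) : aev Xv (qpol Xv α i) ⟨β, j⟩ = 0 := by
  unfold aev
  rw [qpol_comp]
  have hβmem : β ∈ Finset.univ.erase α := Finset.mem_erase.2 ⟨hne, Finset.mem_univ β⟩
  rw [← Finset.mul_prod_erase _ _ hβmem]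
  have : (bp Xv β - Polynomial.C (c0 Xv α)) ^ i *
      ((bp Xv β - Polynomial.C (c0 Xv β)) ^ (m β) *
        ∏ β' ∈ (Finset.univ.erase α).erase β, (bp Xv β - Polynomial.C (c0 Xv β')) ^ (m β'))
      = (bp Xv β - Polynomial.C (c0 Xv β)) ^ (m β) *
        ((bp Xv β - Polynomial.C (c0 Xv α)) ^ i *
          ∏ β' ∈ (Finset.univ.erase α).erase β, (bp Xv β - Polynomial.C (c0 Xv β')) ^ (m β')) := by
    ring
  rw [this]
  exact low_coeff (sub_c0_coeff_zero Xv β (lt_of_le_of_lt (Nat.zero_le _) j.isLt)) _ j.isLt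

lemma aev_qpol_below (Xv : Dom r m) (α : Fin r) (i : ℕ) (j : Fin (m α))
    (hj : j.val < i) : aev Xv (qpol Xv α i) ⟨α, j⟩ = 0 := by
  unfold aev
  rw [qpol_comp]
  exact low_coeff (sub_c0_coeff_zero Xv α (lt_of_le_of_lt (Nat.zero_le _) j.isLt)) _ hj

lemma aev_qpol_diag (Xv : Dom r m) (α : Fin r) (i : ℕ) (hi : i < m α)
    (hsep : ∀ α' β', α' ≠ β' → 0 < m α' → 0 < m β' → c0 Xv α' ≠ c0 Xv β')
    (hn : ∀ α', c1 Xv α' ≠ 0) :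
    aev Xv (qpol Xv α i) ⟨α, ⟨i, hi⟩⟩ ≠ 0 := by
  have hα : 0 < m α := lt_of_le_of_lt (Nat.zero_le _) hi
  unfold aev
  rw [qpol_comp]
  obtain ⟨N', hN'⟩ := Polynomial.X_dvd_iff.2 (sub_c0_coeff_zero Xv α hα)
  set U := ∏ β' ∈ Finset.univ.erase α, (bp Xv α - Polynomial.C (c0 Xv β')) ^ (m β') with hU
  rw [hN', mul_pow, mul_assoc, mul_comm ((Polynomial.X : Polynomial ℝ) ^ i),
    Polynomial.coeff_mul_X_pow', if_pos (le_refl i), Nat.sub_self]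
  rw [Polynomial.coeff_zero_eq_eval_zero, Polynomial.eval_mul, Polynomial.eval_pow]
  apply mul_ne_zero
  · -- (N'.eval 0)^i ≠ 0
    rcases Nat.eq_zero_or_pos i with h0 | hpos
    · rw [h0]; norm_num
    · apply pow_ne_zero
      have h1m : 1 < m α := lt_of_le_of_lt hpos hi
      have : N'.eval 0 = (bp Xv α - Polynomial.C (c0 Xv α)).coeff 1 := by
        rw [← Polynomial.coeff_zero_eq_eval_zero, hN', Polynomial.coeff_X_mul]
      rw [this, Polynomial.coeff_sub, Polynomial.coeff_C, bp_coeff_lt _ _ _ h1m]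
      have hthis := hn α
      unfold c1 at hthis
      rw [dif_pos h1m] at hthis
      simpa using hthis
  · -- U.eval 0 ≠ 0
    rw [hU, Polynomial.eval_prod]
    refine Finset.prod_ne_zero_iff.2 fun β' hβ' => ?_
    rw [Polynomial.eval_pow]
    rcases Nat.eq_zero_or_pos (m β') with h0 | hβ'pos
    · rw [h0]; norm_num
    · apply pow_ne_zero
      rw [Polynomial.eval_sub, Polynomial.eval_C, ← Polynomial.coeff_zero_eq_eval_zero,
        bp_coeff_lt _ _ _ hα]
      have hne : α ≠ β' := fun h => (Finset.mem_erase.1 hβ').1 h.symm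
      have := hsep α β' hne hα hβ'pos
      unfold c0 at this
      rw [dif_pos hα, dif_pos hβ'pos] at this
      intro hcon
      apply this
      rw [sub_eq_zero] at hcon
      rw [hcon]
      unfold c0
      rw [dif_pos hβ'pos]

end DH0
namespace DH0
open Polynomial
variable {r : ℕ} {m : Fin r → ℕ}

lemma ix_eq_iff {α : Fin r} {i j : Fin (m α)} : ((⟨α,i⟩ : Ix r m) = ⟨α,j⟩) ↔ i = j := by
  constructor
  · intro h
    have := congrArg (fun q : Ix r m => (q.2 : ℕ)) h
    exact Fin.ext this
  · intro h; rw [h]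

lemma delt_mem (Xv : Dom r m)
    (hsep : ∀ α' β', α' ≠ β' → 0 < m α' → 0 < m β' → c0 Xv α' ≠ c0 Xv β')
    (hn : ∀ α', c1 Xv α' ≠ 0) :
    ∀ p : Ix r m, delt p ∈ Submodule.span ℝ (Set.range (powE Xv)) := by
  set Sp := Submodule.span ℝ (Set.range (powE Xv)) with hSp
  suffices H : ∀ (d : ℕ) (α : Fin r) (i : Fin (m α)), m α - i.val ≤ d →
      delt (⟨α, i⟩ : Ix r m) ∈ Sp by
    intro p
    exact H (m p.1) p.1 p.2 (Nat.sub_le _ _)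
  intro d
  induction d with
  | zero => intro α i h; omega
  | succ d ih =>
    intro α i hle
    set v := aev Xv (qpol Xv α i.val) with hv
    set lam := v ⟨α, i⟩ with hlam
    have hlam0 : lam ≠ 0 := by
      have := aev_qpol_diag Xv α i.val i.isLt hsep hn
      simpa [hlam, hv] using this
    have key : delt (⟨α, i⟩ : Ix r m)
        = lam⁻¹ • (v - ∑ i' ∈ Finset.univ.filter (fun i' : Fin (m α) => i.val < i'.val),
            v ⟨α, i'⟩ • delt (⟨α, i'⟩ : Ix r m)) := by
      funext q
      have hsum : (∑ i' ∈ Finset.univ.filter (fun i' : Fin (m α) => i.val < i'.val),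
          v ⟨α, i'⟩ • delt (⟨α, i'⟩ : Ix r m)) q
          = ∑ i' ∈ Finset.univ.filter (fun i' : Fin (m α) => i.val < i'.val),
            v ⟨α, i'⟩ * delt (⟨α, i'⟩ : Ix r m) q := by
        rw [Finset.sum_apply]; rfl
      rcases q with ⟨β, j⟩
      by_cases hβ : β = α
      · subst hβ
        have hdq : ∀ i' : Fin (m β), delt (⟨β, i'⟩ : Ix r m) ⟨β, j⟩
            = if i' = j then 1 else 0 := by
          intro i'
          unfold delt
          by_cases h : i' = j
          · subst h; simp
          · rw [if_neg (fun hcon => h (ix_eq_iff.1 hcon).symm), if_neg h]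
        have hsum2 : (∑ i' ∈ Finset.univ.filter (fun i' : Fin (m β) => i.val < i'.val),
            v ⟨β, i'⟩ * delt (⟨β, i'⟩ : Ix r m) ⟨β, j⟩)
            = if j ∈ Finset.univ.filter (fun i' : Fin (m β) => i.val < i'.val)
              then v ⟨β, j⟩ else 0 := by
          rw [← Finset.sum_ite_eq' (Finset.univ.filter (fun i' : Fin (m β) => i.val < i'.val))
            j (fun i' => v ⟨β, i'⟩)]
          refine Finset.sum_congr rfl fun i' _ => ?_
          rw [hdq i']
          by_cases h : i' = j <;> simp [h]
        show (if (⟨β, j⟩ : Ix r m) = ⟨β, i⟩ then (1:ℝ) else 0) = _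
        rw [Pi.smul_apply, Pi.sub_apply, hsum, hsum2]
        rcases lt_trichotomy j.val i.val with hlt | heq | hgt
        · have hne : ¬((⟨β,j⟩ : Ix r m) = ⟨β,i⟩) := by
            rw [ix_eq_iff]; intro h; rw [h] at hlt; omega
          have hmem : ¬(j ∈ Finset.univ.filter (fun i' : Fin (m β) => i.val < i'.val)) := by
            simp; omega
          rw [if_neg hne, if_neg hmem]
          have hv0 : v ⟨β, j⟩ = 0 := aev_qpol_below Xv β i.val j hlt
          rw [hv0]
          simp
        · have hji : j = i := Fin.ext heq
          subst hji
          have hmem : ¬(j ∈ Finset.univ.filter (fun i' : Fin (m β) => j.val < i'.val)) := by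
            simp
          rw [if_pos rfl, if_neg hmem, sub_zero, smul_eq_mul, ← hlam,
            inv_mul_cancel₀ hlam0]
        · have hne : ¬((⟨β,j⟩ : Ix r m) = ⟨β,i⟩) := by
            rw [ix_eq_iff]; intro h; rw [h] at hgt; omega
          have hmem : j ∈ Finset.univ.filter (fun i' : Fin (m β) => i.val < i'.val) := by
            simp; omega
          rw [if_neg hne, if_pos hmem]
          simp
      · -- other block
        have hv0 : v ⟨β, j⟩ = 0 := aev_qpol_other Xv α β i.val hβ j
        have hsum0 : (∑ i' ∈ Finset.univ.filter (fun i' : Fin (m α) => i.val < i'.val),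
            v ⟨α, i'⟩ * delt (⟨α, i'⟩ : Ix r m) ⟨β, j⟩) = 0 := by
          refine Finset.sum_eq_zero fun i' _ => ?_
          have : delt (⟨α, i'⟩ : Ix r m) ⟨β, j⟩ = 0 := by
            unfold delt
            rw [if_neg]
            intro hcon
            exact hβ (congrArg Sigma.fst hcon)
          rw [this, mul_zero]
        show (if (⟨β, j⟩ : Ix r m) = ⟨α, i⟩ then (1:ℝ) else 0) = _
        rw [Pi.smul_apply, Pi.sub_apply, hsum, hsum0, hv0]
        rw [if_neg (fun hcon => hβ (congrArg Sigma.fst hcon))]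
        simp
    rw [key]
    refine Submodule.smul_mem _ _ (Submodule.sub_mem _ (aev_mem Xv _) (Submodule.sum_mem _ ?_))
    intro i' hi'
    refine Submodule.smul_mem _ _ (ih α i' ?_)
    have : i.val < i'.val := by
      simpa using (Finset.mem_filter.1 hi').2
    omega

lemma mem_span_powE (Xv : Dom r m)
    (hsep : ∀ α' β', α' ≠ β' → 0 < m α' → 0 < m β' → c0 Xv α' ≠ c0 Xv β')
    (hn : ∀ α', c1 Xv α' ≠ 0) (v : Dom r m) :
    v ∈ Submodule.span ℝ (Set.range (powE Xv)) := by
  have hrepr : v = ∑ p : Ix r m, v p • delt p := by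
    funext q
    rw [Finset.sum_apply]
    rw [Finset.sum_eq_single q]
    · unfold delt; simp
    · intro p _ hp
      unfold delt
      rw [Pi.smul_apply]
      rw [if_neg (fun hcon => hp hcon.symm), smul_zero]
    · intro h; exact absurd (Finset.mem_univ q) h
  rw [hrepr]
  exact Submodule.sum_mem _ fun p _ => Submodule.smul_mem _ _ (delt_mem Xv hsep hn p)

end DH0
namespace DH0
open Polynomial
variable {r : ℕ} {m : Fin r → ℕ}

/-- the failure-of-symmetry tensor, abstractly -/
noncomputable def AE (G : Dom r m → Dom r m → Dom r m) (Y Z W : Dom r m) : Dom r m :=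
  G Y (mulE Z W) - mulE Z (G Y W) - G Z (mulE Y W) + mulE Y (G Z W)

lemma mulE_zero_left (Y : Dom r m) : mulE 0 Y = 0 := by
  rw [mulE_comm]; exact mulE_zero_right Y

theorem AE_zero (G : Dom r m → Dom r m → Dom r m)
    (hadd : ∀ Y Y' Z, G (Y + Y') Z = G Y Z + G Y' Z)
    (hsmul : ∀ (c : ℝ) Y Z, G (c • Y) Z = c • G Y Z)
    (hsym : ∀ Y Z, G Y Z = G Z Y)
    (hone : ∀ Z, G oneE Z = 0)
    (Xv : Dom r m)
    (hspan : ∀ v : Dom r m, v ∈ Submodule.span ℝ (Set.range (powE Xv)))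
    (hAX : ∀ Y Z, AE G Y Z Xv = 0) :
    ∀ Y Z W, AE G Y Z W = 0 := by
  set pw := powE Xv with hpw
  have gz1 : ∀ Z : Dom r m, G 0 Z = 0 := by
    intro Z
    have h := hsmul 0 0 Z
    rw [zero_smul, zero_smul] at h
    exact h
  have gz2 : ∀ Y : Dom r m, G Y 0 = 0 := fun Y => by rw [hsym]; exact gz1 Y
  have hadd2 : ∀ Y Z Z' : Dom r m, G Y (Z + Z') = G Y Z + G Y Z' := by
    intro Y Z Z'
    rw [hsym, hadd, hsym Z Y, hsym Z' Y]
  have hsmul2 : ∀ (c : ℝ) (Y Z : Dom r m), G Y (c • Z) = c • G Y Z := by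
    intro c Y Z
    rw [hsym, hsmul, hsym]
  have hone2 : ∀ Y : Dom r m, G Y oneE = 0 := fun Y => by rw [hsym]; exact hone Y
  have hXv1 : pw 1 = Xv := by
    show mulE Xv oneE = Xv
    exact mulE_one Xv
  have Mlin : ∀ (u t t' s s' : Dom r m), t + t' = s + s' →
      mulE u t + mulE u t' = mulE u s + mulE u s' := by
    intro u t t' s s' h
    rw [← mulE_add_right, ← mulE_add_right, h]
  have Mswap : ∀ u v t : Dom r m, mulE u (mulE v t) = mulE v (mulE u t) := by
    intro u v t
    rw [← mulE_assoc, mulE_comm u v, mulE_assoc]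
  have Msig : ∀ (p q : ℕ) (t : Dom r m),
      mulE (pw (p + q)) t = mulE (pw p) (mulE (pw q) t) := by
    intro p q t
    rw [hpw, powE_add, mulE_assoc]
  have sym1 : ∀ a b : ℕ, G (pw a) (pw (b+1)) + mulE (pw a) (G (pw b) (pw 1))
      = G (pw b) (pw (a+1)) + mulE (pw b) (G (pw a) (pw 1)) := by
    intro a b
    have h := hAX (pw a) (pw b)
    unfold AE at h
    rw [← hXv1] at h
    rw [show mulE (pw b) (pw 1) = pw (b+1) from (powE_add Xv b 1).symm,
        show mulE (pw a) (pw 1) = pw (a+1) from (powE_add Xv a 1).symm] at h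
    linear_combination h
  have symc : ∀ c a b : ℕ, G (pw a) (pw (b+c)) + mulE (pw a) (G (pw b) (pw c))
      = G (pw b) (pw (a+c)) + mulE (pw b) (G (pw a) (pw c)) := by
    intro c
    induction c with
    | zero =>
      intro a b
      simp only [Nat.add_zero]
      rw [show pw 0 = oneE from rfl, hone2, hone2, mulE_zero_right, mulE_zero_right,
        hsym (pw a) (pw b)]
    | succ c ih =>
      intro a b
      have i1 : b + (c+1) = (b+c)+1 := by omega
      have i2 : a + (c+1) = (a+1)+c := by omega
      rw [i1, i2]
      have h1 := sym1 a (b+c)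
      have h2 := ih (a+1) b
      have h3 := sym1 c a
      have h4 := ih b 1
      rw [show (1:ℕ) + c = c + 1 from by omega] at h4
      have APP3 := Mlin (pw b) _ _ _ _ h3
      have APP4 := Mlin (pw a) _ _ _ _ h4
      rw [hsym (pw 1) (pw (b+c))] at APP4
      rw [hsym (pw 1) (pw c)] at APP4
      rw [Mswap (pw a) (pw b) (G (pw c) (pw 1))] at APP4
      rw [hsym (pw c) (pw (a+1))] at APP3
      rw [hsym (pw (b+c)) (pw (a+1))] at h1
      rw [Msig b c (G (pw a) (pw 1))] at h1
      rw [Msig a 1 (G (pw b) (pw c))] at h2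
      linear_combination h1 + h2 + APP3 + APP4
  have powzero : ∀ a b c : ℕ, AE G (pw a) (pw b) (pw c) = 0 := by
    intro a b c
    unfold AE
    rw [show mulE (pw b) (pw c) = pw (b+c) from (powE_add Xv b c).symm,
        show mulE (pw a) (pw c) = pw (a+c) from (powE_add Xv a c).symm]
    linear_combination symc c a b
  -- linearity of AE in each slot
  have AEadd3 : ∀ Y Z W W' : Dom r m, AE G Y Z (W + W') = AE G Y Z W + AE G Y Z W' := by
    intro Y Z W W'
    simp only [AE, mulE_add_right, hadd2]
    abel
  have AEsmul3 : ∀ (c : ℝ) (Y Z W : Dom r m), AE G Y Z (c • W) = c • AE G Y Z W := by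
    intro c Y Z W
    simp only [AE, mulE_smul_right, hsmul2]
    module
  have AEzero3 : ∀ Y Z : Dom r m, AE G Y Z 0 = 0 := by
    intro Y Z
    simp only [AE, mulE_zero_right, gz2]
    abel
  have AEadd2 : ∀ Y Z Z' W : Dom r m, AE G Y (Z + Z') W = AE G Y Z W + AE G Y Z' W := by
    intro Y Z Z' W
    simp only [AE, mulE_add_left, mulE_add_right, hadd, hadd2]
    abel
  have AEsmul2 : ∀ (c : ℝ) (Y Z W : Dom r m), AE G Y (c • Z) W = c • AE G Y Z W := by
    intro c Y Z W
    simp only [AE, mulE_smul_left, mulE_smul_right, hsmul, hsmul2]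
    module
  have AEzero2 : ∀ Y W : Dom r m, AE G Y 0 W = 0 := by
    intro Y W
    simp only [AE, mulE_zero_left, mulE_zero_right, gz1, gz2]
    abel
  have AEadd1 : ∀ Y Y' Z W : Dom r m, AE G (Y + Y') Z W = AE G Y Z W + AE G Y' Z W := by
    intro Y Y' Z W
    simp only [AE, mulE_add_left, mulE_add_right, hadd, hadd2]
    abel
  have AEsmul1 : ∀ (c : ℝ) (Y Z W : Dom r m), AE G (c • Y) Z W = c • AE G Y Z W := by
    intro c Y Z W
    simp only [AE, mulE_smul_left, mulE_smul_right, hsmul, hsmul2]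
    module
  have AEzero1 : ∀ Z W : Dom r m, AE G 0 Z W = 0 := by
    intro Z W
    simp only [AE, mulE_zero_left, mulE_zero_right, gz1, gz2]
    abel
  -- span induction, slot 3 first
  have step3 : ∀ a b : ℕ, ∀ W : Dom r m, AE G (pw a) (pw b) W = 0 := by
    intro a b W
    refine Submodule.span_induction (p := fun W _ => AE G (pw a) (pw b) W = 0)
      ?_ ?_ ?_ ?_ (hspan W)
    · rintro _ ⟨c, rfl⟩
      exact powzero a b c
    · exact AEzero3 _ _
    · intro x y _ _ hx hy
      rw [AEadd3, hx, hy, add_zero]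
    · intro c x _ hx
      rw [AEsmul3, hx, smul_zero]
  have step2 : ∀ a : ℕ, ∀ Z W : Dom r m, AE G (pw a) Z W = 0 := by
    intro a Z W
    refine Submodule.span_induction (p := fun Z _ => ∀ W, AE G (pw a) Z W = 0)
      ?_ ?_ ?_ ?_ (hspan Z) W
    · rintro _ ⟨b, rfl⟩ W
      exact step3 a b W
    · intro W; exact AEzero2 _ _
    · intro x y _ _ hx hy W
      rw [AEadd2, hx, hy, add_zero]
    · intro c x _ hx W
      rw [AEsmul2, hx, smul_zero]
  intro Y Z W
  refine Submodule.span_induction (p := fun Y _ => ∀ Z W, AE G Y Z W = 0)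
    ?_ ?_ ?_ ?_ (hspan Y) Z W
  · rintro _ ⟨a, rfl⟩ Z W
    exact step2 a Z W
  · intro Z W; exact AEzero1 _ _
  · intro x y _ _ hx hy Z W
    rw [AEadd1, hx, hy, add_zero]
  · intro c x _ hx Z W
    rw [AEsmul1, hx, smul_zero]

end DH0
namespace DH0
open Polynomial
variable {r : ℕ} {m : Fin r → ℕ}

lemma InR_ti (p : Ix r m) : InR m p.1 (ti p) := by
  unfold ti
  constructor
  · omega
  · have := p.2.isLt; omega

lemma sumIcc (M : ℕ) (f : ℤ → ℝ) :
    ∑ s ∈ Finset.Icc (1:ℤ) (M:ℤ), f s = ∑ j : Fin M, f ((j:ℕ) + 1) := by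
  induction M with
  | zero => simp
  | succ M ih =>
    have h1 : Finset.Icc (1:ℤ) ((M+1:ℕ):ℤ) = insert ((M:ℤ)+1) (Finset.Icc 1 (M:ℤ)) := by
      ext z
      simp [Finset.mem_Icc, Finset.mem_insert]
      omega
    rw [h1, Finset.sum_insert (by simp), ih, Fin.sum_univ_castSucc]
    simp only [Fin.coe_castSucc, Fin.val_last]
    rw [add_comm]

lemma sumIdx_ix (f : Fin r → ℤ → ℝ) :
    sumIdx m f = ∑ q : Ix r m, f q.1 (ti q) := by
  unfold sumIdx
  rw [← Finset.univ_sigma_univ, Finset.sum_sigma]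
  exact Finset.sum_congr rfl fun σ _ => by
    rw [sumIcc (m σ) (f σ)]
    rfl

/-- structure constants in index form -/
def ccI (p q q' : Ix r m) : ℝ :=
  if p.1 = q.1 ∧ p.1 = q'.1 ∧ p.2.val = q.2.val + q'.2.val then 1 else 0

lemma ccI_swap (p q q' : Ix r m) : ccI p q q' = ccI p q' q := by
  unfold ccI
  refine if_congr ?_ rfl rfl
  constructor
  · rintro ⟨h1, h2, h3⟩; exact ⟨h2, h1, by omega⟩
  · rintro ⟨h1, h2, h3⟩; exact ⟨h2, h1, by omega⟩

lemma cDH_ix (p q q' : Ix r m) :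
    cDH m p.1 (ti p) q.1 (ti q) q'.1 (ti q') = ccI p q q' := by
  unfold cDH ccI
  refine if_congr ?_ rfl rfl
  constructor
  · rintro ⟨h1, h2, h3, -⟩
    refine ⟨h1, h2, ?_⟩
    unfold ti at h3
    omega
  · rintro ⟨h1, h2, h3⟩
    refine ⟨h1, h2, by unfold ti; omega, InR_ti p, InR_ti q, InR_ti q'⟩

lemma sum_delt (v : Ix r m) (F : Ix r m → ℝ) :
    ∑ q : Ix r m, delt v q * F q = F v := by
  rw [Finset.sum_eq_single v]
  · unfold delt; simp
  · intro q _ hq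
    unfold delt
    rw [if_neg (fun h => hq (by rw [h])), zero_mul]
  · intro h; exact absurd (Finset.mem_univ v) h

/-- convolution formula for `mulE` -/
lemma mulE_conv (Y Z : Dom r m) (α : Fin r) (i : Fin (m α)) :
    mulE Y Z ⟨α, i⟩ = ∑ j : Fin (m α), ∑ k : Fin (m α),
      (if (j:ℕ) + (k:ℕ) = (i:ℕ) then Y ⟨α, j⟩ * Z ⟨α, k⟩ else 0) := by
  show ((bp Y α) * (bp Z α)).coeff i.val = _
  unfold bp
  rw [Finset.sum_mul, Polynomial.finset_sum_coeff]
  refine Finset.sum_congr rfl fun j _ => ?_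
  rw [Finset.mul_sum, Polynomial.finset_sum_coeff]
  refine Finset.sum_congr rfl fun k _ => ?_
  have : (Polynomial.C (Y ⟨α, j⟩) * Polynomial.X ^ (j:ℕ)) *
      (Polynomial.C (Z ⟨α, k⟩) * Polynomial.X ^ (k:ℕ))
      = Polynomial.C (Y ⟨α, j⟩ * Z ⟨α, k⟩) * Polynomial.X ^ ((j:ℕ) + (k:ℕ)) := by
    rw [map_mul, pow_add]; ring
  rw [this, Polynomial.coeff_C_mul, Polynomial.coeff_X_pow]
  by_cases h : (j:ℕ) + (k:ℕ) = (i:ℕ)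
  · rw [if_pos h, if_pos h.symm, mul_one]
  · rw [if_neg h, if_neg (fun hh => h hh.symm), mul_zero]

lemma sum_ix (F : Ix r m → ℝ) :
    ∑ q : Ix r m, F q = ∑ β : Fin r, ∑ j : Fin (m β), F ⟨β, j⟩ := by
  rw [← Finset.univ_sigma_univ, Finset.sum_sigma]

/-- `mulE` in terms of the structure constants -/
lemma mulE_ix (Y Z : Dom r m) (p : Ix r m) :
    mulE Y Z p = ∑ q : Ix r m, ∑ q' : Ix r m, Y q * Z q' * ccI p q q' := by
  rcases p with ⟨α, i⟩
  rw [mulE_conv]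
  rw [sum_ix (fun q => ∑ q' : Ix r m, Y q * Z q' * ccI ⟨α,i⟩ q q')]
  rw [Finset.sum_eq_single α]
  rotate_left
  · intro β _ hβ
    refine Finset.sum_eq_zero fun j _ => Finset.sum_eq_zero fun q' _ => ?_
    have : ccI (⟨α,i⟩ : Ix r m) ⟨β,j⟩ q' = 0 := by
      unfold ccI
      rw [if_neg]
      rintro ⟨h1, -, -⟩
      exact hβ h1.symm
    rw [this, mul_zero]
  · intro h; exact absurd (Finset.mem_univ α) h
  refine Finset.sum_congr rfl fun j _ => ?_
  rw [sum_ix (fun q' => Y ⟨α,j⟩ * Z q' * ccI ⟨α,i⟩ ⟨α,j⟩ q')]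
  rw [Finset.sum_eq_single α]
  rotate_left
  · intro β _ hβ
    refine Finset.sum_eq_zero fun k _ => ?_
    have : ccI (⟨α,i⟩ : Ix r m) ⟨α,j⟩ ⟨β,k⟩ = 0 := by
      unfold ccI
      rw [if_neg]
      rintro ⟨-, h2, -⟩
      exact hβ h2.symm
    rw [this, mul_zero]
  · intro h; exact absurd (Finset.mem_univ α) h
  refine Finset.sum_congr rfl fun k _ => ?_
  unfold ccI
  by_cases h : (j:ℕ) + (k:ℕ) = (i:ℕ)
  · rw [if_pos h, if_pos ⟨rfl, rfl, h.symm⟩, mul_one]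
  · rw [if_neg h, if_neg (by rintro ⟨-, -, hc⟩; exact h hc.symm), mul_zero]

end DH0
namespace DH0
open Polynomial
variable {r : ℕ} {m : Fin r → ℕ}

/-- bilinear map from components -/
def GbOf (f : Ix r m → Ix r m → Ix r m → ℝ) : Dom r m → Dom r m → Dom r m :=
  fun Y Z p => ∑ q : Ix r m, ∑ q' : Ix r m, Y q * Z q' * f p q q'

lemma GbOf_add (f : Ix r m → Ix r m → Ix r m → ℝ) (Y Y' Z : Dom r m) :
    GbOf f (Y + Y') Z = GbOf f Y Z + GbOf f Y' Z := by
  funext p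
  show ∑ q : Ix r m, ∑ q' : Ix r m, (Y q + Y' q) * Z q' * f p q q' = _
  rw [Pi.add_apply]
  unfold GbOf
  rw [← Finset.sum_add_distrib]
  refine Finset.sum_congr rfl fun q _ => ?_
  rw [← Finset.sum_add_distrib]
  refine Finset.sum_congr rfl fun q' _ => ?_
  ring

lemma GbOf_smul (f : Ix r m → Ix r m → Ix r m → ℝ) (c : ℝ) (Y Z : Dom r m) :
    GbOf f (c • Y) Z = c • GbOf f Y Z := by
  funext p
  unfold GbOf
  rw [Pi.smul_apply, smul_eq_mul, Finset.mul_sum]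
  refine Finset.sum_congr rfl fun q _ => ?_
  rw [Finset.mul_sum]
  refine Finset.sum_congr rfl fun q' _ => ?_
  rw [Pi.smul_apply, smul_eq_mul]
  ring

lemma GbOf_sym (f : Ix r m → Ix r m → Ix r m → ℝ)
    (hf : ∀ p q q', f p q q' = f p q' q) (Y Z : Dom r m) :
    GbOf f Y Z = GbOf f Z Y := by
  funext p
  unfold GbOf
  rw [Finset.sum_comm]
  refine Finset.sum_congr rfl fun q _ => Finset.sum_congr rfl fun q' _ => ?_
  rw [hf p q' q]
  ring

lemma GbOf_delt_left (f : Ix r m → Ix r m → Ix r m → ℝ) (u : Ix r m) (W : Dom r m)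
    (p : Ix r m) : GbOf f (delt u) W p = ∑ q' : Ix r m, W q' * f p u q' := by
  unfold GbOf
  have h : ∀ q : Ix r m, (∑ q' : Ix r m, delt u q * W q' * f p q q')
      = delt u q * (∑ q' : Ix r m, W q' * f p q q') := by
    intro q
    rw [Finset.mul_sum]
    refine Finset.sum_congr rfl fun q' _ => by ring
  rw [Finset.sum_congr rfl (fun q _ => h q), sum_delt u (fun q => ∑ q' : Ix r m, W q' * f p q q')]

lemma GbOf_delt2 (f : Ix r m → Ix r m → Ix r m → ℝ) (u v : Ix r m) (p : Ix r m) :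
    GbOf f (delt u) (delt v) p = f p u v := by
  rw [GbOf_delt_left]
  exact sum_delt v (fun q' => f p u q')

lemma mulE_delt_left (v : Ix r m) (W : Dom r m) (p : Ix r m) :
    mulE (delt v) W p = ∑ q' : Ix r m, W q' * ccI p v q' := by
  rw [mulE_ix]
  have h : ∀ q : Ix r m, (∑ q' : Ix r m, delt v q * W q' * ccI p q q')
      = delt v q * (∑ q' : Ix r m, W q' * ccI p q q') := by
    intro q
    rw [Finset.mul_sum]
    refine Finset.sum_congr rfl fun q' _ => by ring
  rw [Finset.sum_congr rfl (fun q _ => h q), sum_delt v (fun q => ∑ q' : Ix r m, W q' * ccI p q q')]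

lemma mulE_delt2 (v w : Ix r m) (p : Ix r m) :
    mulE (delt v) (delt w) p = ccI p v w := by
  rw [mulE_delt_left]
  exact sum_delt w (fun q' => ccI p v q')

lemma GbOf_one (f : Ix r m → Ix r m → Ix r m → ℝ) (g : Ix r m → Ix r m → Fin r → ℝ)
    (hg : ∀ (p q' : Ix r m) (β : Fin r) (h : 0 < m β), f p ⟨β, ⟨0, h⟩⟩ q' = g p q' β)
    (hzero : ∀ (p q' : Ix r m) (β : Fin r), m β = 0 → g p q' β = 0)
    (hflat0 : ∀ p q' : Ix r m, ∑ β : Fin r, g p q' β = 0)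
    (Z : Dom r m) : GbOf f oneE Z = 0 := by
  funext p
  show ∑ q : Ix r m, ∑ q' : Ix r m, oneE q * Z q' * f p q q' = 0
  rw [Finset.sum_comm]
  rw [show (0:ℝ) = ∑ q' : Ix r m, (0:ℝ) by simp]
  refine Finset.sum_congr rfl fun q' _ => ?_
  have key : ∑ q : Ix r m, oneE q * f p q q' = 0 := by
    rw [sum_ix (fun q => oneE q * f p q q')]
    rw [← hflat0 p q']
    refine Finset.sum_congr rfl fun β _ => ?_
    rcases Nat.eq_zero_or_pos (m β) with h0 | hpos
    · rw [hzero p q' β h0]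
      apply Finset.sum_eq_zero
      intro j _
      have := j.isLt
      omega
    · rw [Finset.sum_eq_single (⟨0, hpos⟩ : Fin (m β))]
      · show oneE (⟨β, ⟨0,hpos⟩⟩ : Ix r m) * f p ⟨β, ⟨0,hpos⟩⟩ q' = g p q' β
        unfold oneE
        rw [if_pos rfl, one_mul, hg]
      · intro b _ hb
        show oneE (⟨β, b⟩ : Ix r m) * f p ⟨β, b⟩ q' = 0
        unfold oneE
        rw [if_neg (fun h => hb (Fin.ext h)), zero_mul]
      · intro h; exact absurd (Finset.mem_univ _) h
  calc ∑ q : Ix r m, oneE q * Z q' * f p q q'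
      = ∑ q : Ix r m, Z q' * (oneE q * f p q q') := by
        refine Finset.sum_congr rfl fun q _ => by ring
    _ = Z q' * ∑ q : Ix r m, oneE q * f p q q' := by rw [Finset.mul_sum]
    _ = 0 := by rw [key, mul_zero]

/-- a linear map vanishing on coordinate vectors vanishes -/
lemma repr_delt (v : Dom r m) : v = ∑ p : Ix r m, v p • delt p := by
  funext q
  rw [Finset.sum_apply]
  rw [Finset.sum_eq_single q]
  · unfold delt; simp
  · intro p _ hp
    unfold delt
    rw [Pi.smul_apply, if_neg (fun hcon => hp hcon.symm), smul_zero]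
  · intro h; exact absurd (Finset.mem_univ q) h

lemma vanish_lin (L : Dom r m → Dom r m)
    (hadd : ∀ a b, L (a + b) = L a + L b)
    (hsmul : ∀ (c : ℝ) a, L (c • a) = c • L a)
    (h : ∀ p, L (delt p) = 0) : ∀ v, L v = 0 := by
  intro v
  have hms := map_sum (AddMonoidHom.mk' L hadd) (fun p : Ix r m => v p • delt p) Finset.univ
  simp only [AddMonoidHom.mk'_apply] at hms
  rw [repr_delt v, hms]
  rw [show (0 : Dom r m) = ∑ p : Ix r m, (0 : Dom r m) by simp]
  refine Finset.sum_congr rfl fun p _ => ?_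
  show L (v p • delt p) = 0
  rw [hsmul, h, smul_zero]

/-- standalone AE linearity lemmas -/
lemma AE_add1' (G : Dom r m → Dom r m → Dom r m)
    (hadd : ∀ Y Y' Z, G (Y + Y') Z = G Y Z + G Y' Z)
    (hsym : ∀ Y Z, G Y Z = G Z Y)
    (Y Y' Z W : Dom r m) : AE G (Y + Y') Z W = AE G Y Z W + AE G Y' Z W := by
  have hadd2 : ∀ Y Z Z' : Dom r m, G Y (Z + Z') = G Y Z + G Y Z' := by
    intro Y Z Z'
    rw [hsym, hadd, hsym Z Y, hsym Z' Y]
  simp only [AE, mulE_add_left, mulE_add_right, hadd, hadd2]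
  abel

lemma AE_smul1' (G : Dom r m → Dom r m → Dom r m)
    (hsmul : ∀ (c : ℝ) Y Z, G (c • Y) Z = c • G Y Z)
    (hsym : ∀ Y Z, G Y Z = G Z Y)
    (c : ℝ) (Y Z W : Dom r m) : AE G (c • Y) Z W = c • AE G Y Z W := by
  have hsmul2 : ∀ (c : ℝ) (Y Z : Dom r m), G Y (c • Z) = c • G Y Z := by
    intro c Y Z
    rw [hsym, hsmul, hsym]
  simp only [AE, mulE_smul_left, mulE_smul_right, hsmul, hsmul2]
  module

lemma AE_add2' (G : Dom r m → Dom r m → Dom r m)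
    (hadd : ∀ Y Y' Z, G (Y + Y') Z = G Y Z + G Y' Z)
    (hsym : ∀ Y Z, G Y Z = G Z Y)
    (Y Z Z' W : Dom r m) : AE G Y (Z + Z') W = AE G Y Z W + AE G Y Z' W := by
  have hadd2 : ∀ Y Z Z' : Dom r m, G Y (Z + Z') = G Y Z + G Y Z' := by
    intro Y Z Z'
    rw [hsym, hadd, hsym Z Y, hsym Z' Y]
  simp only [AE, mulE_add_left, mulE_add_right, hadd, hadd2]
  abel

lemma AE_smul2' (G : Dom r m → Dom r m → Dom r m)
    (hsmul : ∀ (c : ℝ) Y Z, G (c • Y) Z = c • G Y Z)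
    (hsym : ∀ Y Z, G Y Z = G Z Y)
    (c : ℝ) (Y Z W : Dom r m) : AE G Y (c • Z) W = c • AE G Y Z W := by
  have hsmul2 : ∀ (c : ℝ) (Y Z : Dom r m), G Y (c • Z) = c • G Y Z := by
    intro c Y Z
    rw [hsym, hsmul, hsym]
  simp only [AE, mulE_smul_left, mulE_smul_right, hsmul, hsmul2]
  module

lemma vanish_AE (G : Dom r m → Dom r m → Dom r m)
    (hadd : ∀ Y Y' Z, G (Y + Y') Z = G Y Z + G Y' Z)
    (hsmul : ∀ (c : ℝ) Y Z, G (c • Y) Z = c • G Y Z)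
    (hsym : ∀ Y Z, G Y Z = G Z Y)
    (Xv : Dom r m)
    (h : ∀ u v : Ix r m, AE G (delt u) (delt v) Xv = 0) :
    ∀ Y Z, AE G Y Z Xv = 0 := by
  have h1 : ∀ u : Ix r m, ∀ Z, AE G (delt u) Z Xv = 0 := by
    intro u
    exact vanish_lin (fun Z => AE G (delt u) Z Xv)
      (fun a b => AE_add2' G hadd hsym _ a b _)
      (fun c a => AE_smul2' G hsmul hsym c _ a _)
      (fun v => h u v)
  intro Y Z
  exact vanish_lin (fun Y => AE G Y Z Xv)
    (fun a b => AE_add1' G hadd hsym a b _ _)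
    (fun c a => AE_smul1' G hsmul hsym c a _ _)
    (fun u => h1 u Z) Y

end DH0
namespace DH0
open Polynomial
variable {r : ℕ} {m : Fin r → ℕ}

/-- `Atens` at index-type points, in terms of `ccI`. -/
lemma Atens_ix (Γ : Fin r → ℤ → Fin r → ℤ → Fin r → ℤ → Dom r m → ℝ) (x : Dom r m)
    (p u v w : Ix r m) :
    Atens Γ p.1 (ti p) u.1 (ti u) v.1 (ti v) w.1 (ti w) x
      = ∑ q' : Ix r m,
          (Γ p.1 (ti p) u.1 (ti u) q'.1 (ti q') x * ccI q' v w
            - Γ q'.1 (ti q') u.1 (ti u) w.1 (ti w) x * ccI p v q'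
            - Γ p.1 (ti p) v.1 (ti v) q'.1 (ti q') x * ccI q' u w
            + Γ q'.1 (ti q') v.1 (ti v) w.1 (ti w) x * ccI p u q') := by
  unfold Atens
  rw [sumIdx_ix]
  refine Finset.sum_congr rfl fun q' _ => ?_
  rw [cDH_ix q' v w, cDH_ix p v q', cDH_ix q' u w, cDH_ix p u q']

/-- bridge for the contraction hypothesis -/
lemma hA_bridge (f : Ix r m → Ix r m → Ix r m → ℝ) (Xv : Dom r m) (u v : Ix r m)
    (h : ∀ p : Ix r m, ∑ q'' : Ix r m,
        (∑ q' : Ix r m,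
          (f p u q' * ccI q' v q''
            - f q' u q'' * ccI p v q'
            - f p v q' * ccI q' u q''
            + f q' v q'' * ccI p u q')) * Xv q'' = 0) :
    AE (GbOf f) (delt u) (delt v) Xv = 0 := by
  funext p
  have h1 : GbOf f (delt u) (mulE (delt v) Xv) p
      = ∑ q' : Ix r m, ∑ q'' : Ix r m, Xv q'' * ccI q' v q'' * f p u q' := by
    rw [GbOf_delt_left]
    refine Finset.sum_congr rfl fun q' _ => ?_
    rw [mulE_delt_left, Finset.sum_mul]
  have h2 : mulE (delt v) (GbOf f (delt u) Xv) p
      = ∑ q' : Ix r m, ∑ q'' : Ix r m, Xv q'' * f q' u q'' * ccI p v q' := by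
    rw [mulE_delt_left]
    refine Finset.sum_congr rfl fun q' _ => ?_
    rw [GbOf_delt_left, Finset.sum_mul]
  have h3 : GbOf f (delt v) (mulE (delt u) Xv) p
      = ∑ q' : Ix r m, ∑ q'' : Ix r m, Xv q'' * ccI q' u q'' * f p v q' := by
    rw [GbOf_delt_left]
    refine Finset.sum_congr rfl fun q' _ => ?_
    rw [mulE_delt_left, Finset.sum_mul]
  have h4 : mulE (delt u) (GbOf f (delt v) Xv) p
      = ∑ q' : Ix r m, ∑ q'' : Ix r m, Xv q'' * f q' v q'' * ccI p u q' := by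
    rw [mulE_delt_left]
    refine Finset.sum_congr rfl fun q' _ => ?_
    rw [GbOf_delt_left, Finset.sum_mul]
  have hp := h p
  rw [Finset.sum_congr rfl (fun q'' (_ : q'' ∈ Finset.univ) => Finset.sum_mul
    Finset.univ _ (Xv q''))] at hp
  rw [Finset.sum_comm] at hp
  show GbOf f (delt u) (mulE (delt v) Xv) p - mulE (delt v) (GbOf f (delt u) Xv) p
      - GbOf f (delt v) (mulE (delt u) Xv) p + mulE (delt u) (GbOf f (delt v) Xv) p
      = (0 : Dom r m) p
  rw [h1, h2, h3, h4]
  have hz : (0 : Dom r m) p = 0 := rfl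
  rw [hz, ← hp]
  rw [← Finset.sum_sub_distrib, ← Finset.sum_sub_distrib, ← Finset.sum_add_distrib]
  refine Finset.sum_congr rfl fun q' _ => ?_
  rw [← Finset.sum_sub_distrib, ← Finset.sum_sub_distrib, ← Finset.sum_add_distrib]
  refine Finset.sum_congr rfl fun q'' _ => ?_
  ring

/-- component formula for `AE` at three coordinate vectors -/
lemma AE_deltdelt (f : Ix r m → Ix r m → Ix r m → ℝ) (u v w p : Ix r m) :
    AE (GbOf f) (delt u) (delt v) (delt w) p
      = ∑ q' : Ix r m,
          (f p u q' * ccI q' v w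
            - f q' u w * ccI p v q'
            - f p v q' * ccI q' u w
            + f q' v w * ccI p u q') := by
  have h1 : GbOf f (delt u) (mulE (delt v) (delt w)) p
      = ∑ q' : Ix r m, ccI q' v w * f p u q' := by
    rw [GbOf_delt_left]
    refine Finset.sum_congr rfl fun q' _ => ?_
    rw [mulE_delt2]
  have h2 : mulE (delt v) (GbOf f (delt u) (delt w)) p
      = ∑ q' : Ix r m, f q' u w * ccI p v q' := by
    rw [mulE_delt_left]
    refine Finset.sum_congr rfl fun q' _ => ?_
    rw [GbOf_delt2]
  have h3 : GbOf f (delt v) (mulE (delt u) (delt w)) p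
      = ∑ q' : Ix r m, ccI q' u w * f p v q' := by
    rw [GbOf_delt_left]
    refine Finset.sum_congr rfl fun q' _ => ?_
    rw [mulE_delt2]
  have h4 : mulE (delt u) (GbOf f (delt v) (delt w)) p
      = ∑ q' : Ix r m, f q' v w * ccI p u q' := by
    rw [mulE_delt_left]
    refine Finset.sum_congr rfl fun q' _ => ?_
    rw [GbOf_delt2]
  show GbOf f (delt u) (mulE (delt v) (delt w)) p
      - mulE (delt v) (GbOf f (delt u) (delt w)) p
      - GbOf f (delt v) (mulE (delt u) (delt w)) p
      + mulE (delt u) (GbOf f (delt v) (delt w)) p = _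
  rw [h1, h2, h3, h4]
  rw [← Finset.sum_sub_distrib, ← Finset.sum_sub_distrib, ← Finset.sum_add_distrib]
  refine Finset.sum_congr rfl fun q' _ => ?_
  ring

end DH0

/-- If a torsionless connection with flat unit satisfies `d_∇V = 0`
for the block-Toeplitz `V` built from a nondegenerate vector field `X`, and the
contraction of `A = (failure of symmetry of ∇c)` with `X` vanishes, then `A`
vanishes identically, i.e. `∇_j c^i_{ks}` is symmetric in the lower indices. -/
theorem statement0
    {r : ℕ} (hr : 1 ≤ r) (m : Fin r → ℕ) (hm : ∀ α, 1 ≤ m α)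
    (U : Set (Dom r m)) (hU : IsOpen U)
    (Γ : Fin r → ℤ → Fin r → ℤ → Fin r → ℤ → Dom r m → ℝ)
    (X : Fin r → ℤ → Dom r m → ℝ)
    -- smoothness
    (hΓs : ∀ α i β j γ k, ContDiffOn ℝ (⊤ : ℕ∞) (Γ α i β j γ k) U)
    (hXs : ∀ α i, ContDiffOn ℝ (⊤ : ℕ∞) (X α i) U)
    -- out-of-range conventions
    (hΓ0 : ∀ α i β j γ k, ¬(InR m α i ∧ InR m β j ∧ InR m γ k) → Γ α i β j γ k = 0)
    (hX0 : ∀ α i, ¬ InR m α i → X α i = 0)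
    -- torsionlessness
    (hΓsym : ∀ α i β j γ k, Γ α i β j γ k = Γ α i γ k β j)
    -- flat unit : Σ_{σ=1}^r Γ^{i(α)}_{j(β)1(σ)} = 0
    (hflat : ∀ α i β j, ∀ x ∈ U, (∑ σ : Fin r, Γ α i β j σ 1 x) = 0)
    -- nondegeneracy of X
    (hX1 : ∀ α β, α ≠ β → ∀ x ∈ U, X α 1 x ≠ X β 1 x)
    (hX2 : ∀ α, 2 ≤ m α → ∀ x ∈ U, X α 2 x ≠ 0)
    -- d_∇V = 0
    (hdV : ∀ α i β j γ k, InR m α i → InR m β j → InR m γ k → ∀ x ∈ U,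
      pd β j (Vcomp X α i γ k) x - pd γ k (Vcomp X α i β j) x
        + sumIdx m (fun σ s =>
            Γ α i β j σ s x * Vcomp X σ s γ k x
              - Γ α i γ k σ s x * Vcomp X σ s β j x) = 0)
    -- Σ_{s(σ)} A^{i(α)}_{j(β)k(γ)s(σ)} X^{s(σ)} = 0
    (hA : ∀ α i β j γ k, InR m α i → InR m β j → InR m γ k → ∀ x ∈ U,
      sumIdx m (fun σ s => Atens Γ α i β j γ k σ s x * X σ s x) = 0) :
    ∀ α i β j γ k σ s, InR m α i → InR m β j → InR m γ k → InR m σ s →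
      ∀ x ∈ U, Atens Γ α i β j γ k σ s x = 0 := by
  classical
  intro α i β j γ k σ s hi hj hk hs x hx
  -- index-type points
  have hiN : (i - 1).toNat < m α := by omega
  have hjN : (j - 1).toNat < m β := by omega
  have hkN : (k - 1).toNat < m γ := by omega
  have hsN : (s - 1).toNat < m σ := by omega
  set p₀ : DH0.Ix r m := ⟨α, ⟨(i - 1).toNat, hiN⟩⟩ with hp₀
  set u : DH0.Ix r m := ⟨β, ⟨(j - 1).toNat, hjN⟩⟩ with hu
  set v : DH0.Ix r m := ⟨γ, ⟨(k - 1).toNat, hkN⟩⟩ with hv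
  set w : DH0.Ix r m := ⟨σ, ⟨(s - 1).toNat, hsN⟩⟩ with hw
  have tip : DH0.ti p₀ = i := by show ((i-1).toNat : ℤ) + 1 = i; omega
  have tiu : DH0.ti u = j := by show ((j-1).toNat : ℤ) + 1 = j; omega
  have tiv : DH0.ti v = k := by show ((k-1).toNat : ℤ) + 1 = k; omega
  have tiw : DH0.ti w = s := by show ((s-1).toNat : ℤ) + 1 = s; omega
  -- components of Γ and X at x
  set f : DH0.Ix r m → DH0.Ix r m → DH0.Ix r m → ℝ :=
    fun p q q' => Γ p.1 (DH0.ti p) q.1 (DH0.ti q) q'.1 (DH0.ti q') x with hf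
  set Xv : Dom r m := fun q => X q.1 (DH0.ti q) x with hXv
  -- hypotheses for the abstract theorem
  have hsymf : ∀ p q q' : DH0.Ix r m, f p q q' = f p q' q := by
    intro p q q'
    show Γ p.1 (DH0.ti p) q.1 (DH0.ti q) q'.1 (DH0.ti q') x
      = Γ p.1 (DH0.ti p) q'.1 (DH0.ti q') q.1 (DH0.ti q) x
    exact congrFun (hΓsym p.1 (DH0.ti p) q.1 (DH0.ti q) q'.1 (DH0.ti q')) x
  have honef : ∀ Z : Dom r m, DH0.GbOf f DH0.oneE Z = 0 := by
    intro Z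
    refine DH0.GbOf_one f (fun p q' δ => Γ p.1 (DH0.ti p) q'.1 (DH0.ti q') δ 1 x) ?_ ?_ ?_ Z
    · intro p q' δ h
      have ht : DH0.ti (⟨δ, ⟨0, h⟩⟩ : DH0.Ix r m) = 1 := by
        show ((0:ℕ) : ℤ) + 1 = 1
        norm_num
      show Γ p.1 (DH0.ti p) δ (DH0.ti (⟨δ, ⟨0, h⟩⟩ : DH0.Ix r m)) q'.1 (DH0.ti q') x
        = Γ p.1 (DH0.ti p) q'.1 (DH0.ti q') δ 1 x
      rw [ht]
      exact congrFun (hΓsym p.1 (DH0.ti p) δ 1 q'.1 (DH0.ti q')) x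
    · intro p q' δ h0
      have : ¬(InR m p.1 (DH0.ti p) ∧ InR m q'.1 (DH0.ti q') ∧ InR m δ 1) := by
        rintro ⟨-, -, h1, h2⟩
        omega
      exact congrFun (hΓ0 _ _ _ _ _ _ this) x
    · intro p q'
      exact hflat p.1 (DH0.ti p) q'.1 (DH0.ti q') x hx
  have hspan : ∀ vv : Dom r m, vv ∈ Submodule.span ℝ (Set.range (DH0.powE Xv)) := by
    refine DH0.mem_span_powE Xv ?_ ?_
    · intro α' β' hne h1 h2
      unfold DH0.c0
      rw [dif_pos h1, dif_pos h2]
      have e1 : Xv ⟨α', ⟨0, h1⟩⟩ = X α' 1 x := by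
        rw [hXv]
        show X α' (((0:ℕ) : ℤ) + 1) x = X α' 1 x
        norm_num
      have e2 : Xv ⟨β', ⟨0, h2⟩⟩ = X β' 1 x := by
        rw [hXv]
        show X β' (((0:ℕ) : ℤ) + 1) x = X β' 1 x
        norm_num
      rw [e1, e2]
      exact hX1 α' β' hne x hx
    · intro α'
      unfold DH0.c1
      split
      · next h1 =>
        have e1 : Xv ⟨α', ⟨1, h1⟩⟩ = X α' 2 x := by
          rw [hXv]
          show X α' (((1:ℕ) : ℤ) + 1) x = X α' 2 x
          norm_num
        rw [e1]
        exact hX2 α' (by omega) x hx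
      · exact one_ne_zero
  have hAX : ∀ Y Z : Dom r m, DH0.AE (DH0.GbOf f) Y Z Xv = 0 := by
    refine DH0.vanish_AE (DH0.GbOf f) (DH0.GbOf_add f) (DH0.GbOf_smul f)
      (DH0.GbOf_sym f hsymf) Xv ?_
    intro u' v'
    refine DH0.hA_bridge f Xv u' v' ?_
    intro p
    have h0 := hA p.1 (DH0.ti p) u'.1 (DH0.ti u') v'.1 (DH0.ti v')
      (DH0.InR_ti p) (DH0.InR_ti u') (DH0.InR_ti v') x hx
    rw [DH0.sumIdx_ix] at h0
    have e : ∀ q'' : DH0.Ix r m,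
        (∑ q' : DH0.Ix r m,
          (f p u' q' * DH0.ccI q' v' q''
            - f q' u' q'' * DH0.ccI p v' q'
            - f p v' q' * DH0.ccI q' u' q''
            + f q' v' q'' * DH0.ccI p u' q')) * Xv q''
        = Atens Γ p.1 (DH0.ti p) u'.1 (DH0.ti u') v'.1 (DH0.ti v') q''.1 (DH0.ti q'') x
            * X q''.1 (DH0.ti q'') x := by
      intro q''
      rw [DH0.Atens_ix Γ x p u' v' q'']
    rw [Finset.sum_congr rfl (fun q'' _ => e q'')]
    exact h0
  -- the abstract conclusion
  have main := DH0.AE_zero (DH0.GbOf f) (DH0.GbOf_add f) (DH0.GbOf_smul f)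
    (DH0.GbOf_sym f hsymf) honef Xv hspan hAX (DH0.delt u) (DH0.delt v) (DH0.delt w)
  -- translate back
  rw [← tip, ← tiu, ← tiv, ← tiw]
  have efin : Atens Γ α (DH0.ti p₀) β (DH0.ti u) γ (DH0.ti v) σ (DH0.ti w) x
      = DH0.AE (DH0.GbOf f) (DH0.delt u) (DH0.delt v) (DH0.delt w) p₀ := by
    have h1 := DH0.Atens_ix Γ x p₀ u v w
    have h2 := DH0.AE_deltdelt f u v w p₀
    rw [h2]
    exact h1
  rw [efin, main]
  rfl
end

section
/- Let α ≠ β. Suppose Γ are torsionless Christoffel symbols on U satisfying the flat-unit condition Σ_{σ=1}^r Γ^{i(α)}_{j(β)1(σ)} = 0 and d_∇V = 0, i.e. ∂_{j(β)}V^{i(α)}_{k(γ)} − ∂_{k(γ)}V^{i(α)}_{j(β)} + Σ_{s(σ)}(Γ^{i(α)}_{j(β)s(σ)}V^{s(σ)}_{k(γ)} − Γ^{i(α)}_{k(γ)s(σ)}V^{s(σ)}_{j(β)}) = 0, where V^{i(α)}_{j(β)} = δ_{αβ} X^{(i−j+1)(α)} (zero for i < j) for smooth X^{i(α)} with X^{1(α)}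 ≠ X^{1(β)} pointwise for α ≠ β and X^{2(α)} ≠ 0 pointwise for every α with m_α ≥ 2. Then Γ^{i(α)}_{j(β)k(α)} = Γ^{(i−k+1)(α)}_{j(β)1(α)} whenever i ≥ k, and Γ^{i(α)}_{j(β)k(α)} = 0 whenever i < k. -/
open scoped BigOperators

theorem statement1
    {r : ℕ} (hr : 1 ≤ r) (m : Fin r → ℕ) (hm : ∀ α, 1 ≤ m α)
    (U : Set (Dom r m)) (hU : IsOpen U)
    (Γ : Fin r → ℤ → Fin r → ℤ → Fin r → ℤ → Dom r m → ℝ)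
    (X : Fin r → ℤ → Dom r m → ℝ)
    (hΓs : ∀ α i β j γ k, ContDiffOn ℝ (⊤ : ℕ∞) (Γ α i β j γ k) U)
    (hXs : ∀ α i, ContDiffOn ℝ (⊤ : ℕ∞) (X α i) U)
    (hΓ0 : ∀ α i β j γ k, ¬(InR m α i ∧ InR m β j ∧ InR m γ k) → Γ α i β j γ k = 0)
    (hX0 : ∀ α i, ¬ InR m α i → X α i = 0)
    (hΓsym : ∀ α i β j γ k, Γ α i β j γ k = Γ α i γ k β j)
    (hflat : ∀ α i β j, ∀ x ∈ U, (∑ σ : Fin r, Γ α i β j σ 1 x) = 0)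
    (hX1 : ∀ α β, α ≠ β → ∀ x ∈ U, X α 1 x ≠ X β 1 x)
    (hX2 : ∀ α, 2 ≤ m α → ∀ x ∈ U, X α 2 x ≠ 0)
    (hdV : ∀ α i β j γ k, InR m α i → InR m β j → InR m γ k → ∀ x ∈ U,
      pd β j (Vcomp X α i γ k) x - pd γ k (Vcomp X α i β j) x
        + sumIdx m (fun σ s =>
            Γ α i β j σ s x * Vcomp X σ s γ k x
              - Γ α i γ k σ s x * Vcomp X σ s β j x) = 0)
    :
    ∀ α β, α ≠ β → ∀ i k j, InR m α i → InR m α k → InR m β j →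
      ∀ x ∈ U,
        (k ≤ i → Γ α i β j α k x = Γ α (i - k + 1) β j α 1 x) ∧
        (i < k → Γ α i β j α k x = 0) := by
  
  intro α β hαβ
  -- X out of range vanishes pointwise
  have hXz : ∀ (γ : Fin r) (p : ℤ) (y : Dom r m), ¬ InR m γ p → X γ p y = 0 := by
    intro γ p y h; rw [hX0 γ p h]; rfl
  -- pd of an out-of-range X vanishes
  have hpdz : ∀ (γ : Fin r) (p : ℤ) (δ : Fin r) (q : ℤ) (y : Dom r m),
      ¬ InR m γ p → pd δ q (X γ p) y = 0 := by
    intro γ p δ q y h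
    rw [hX0 γ p h]
    have : pd δ q (fun _ : Dom r m => (0:ℝ)) y = 0 := by
      show fderiv ℝ (fun _ : Dom r m => (0:ℝ)) y (coordVec m δ q) = 0
      rw [fderiv_const_apply]; rfl
    exact this
  -- the master identity
  have master : ∀ (i j k : ℤ), InR m α i → InR m β j → InR m α k → ∀ x ∈ U,
      (X α 1 x - X β 1 x) * Γ α i β j α k x
        = - pd β j (X α (i - k + 1)) x
          - (∑ s ∈ Finset.Icc (1:ℤ) ((m α : ℤ)),
              if k < s then Γ α i β j α s x * X α (s - k + 1) x else 0)
          + (∑ s ∈ Finset.Icc (1:ℤ) ((m β : ℤ)),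
              if j < s then Γ α i β s α k x * X β (s - j + 1) x else 0) := by
    intro i j k hi hj hk x hx
    have E := hdV α i β j α k hi hj hk x hx
    have e1 : Vcomp X α i α k = X α (i - k + 1) := by
      funext y; simp [Vcomp]
    have e2 : pd α k (Vcomp X α i β j) x = 0 := by
      have hv : Vcomp X α i β j = fun _ : Dom r m => (0:ℝ) := by
        funext y; simp [Vcomp, hαβ]
      rw [hv]
      show fderiv ℝ (fun _ : Dom r m => (0:ℝ)) x (coordVec m α k) = 0
      rw [fderiv_const_apply]; rfl
    have e3 : sumIdx m (fun σ s =>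
          Γ α i β j σ s x * Vcomp X σ s α k x - Γ α i α k σ s x * Vcomp X σ s β j x)
        = (∑ s ∈ Finset.Icc (1:ℤ) ((m α : ℤ)), Γ α i β j α s x * X α (s - k + 1) x)
          - (∑ s ∈ Finset.Icc (1:ℤ) ((m β : ℤ)), Γ α i α k β s x * X β (s - j + 1) x) := by
      rw [sumIdx]
      have h1 : ∀ σ : Fin r,
          (∑ s ∈ Finset.Icc (1:ℤ) ((m σ : ℤ)),
            (Γ α i β j σ s x * Vcomp X σ s α k x - Γ α i α k σ s x * Vcomp X σ s β j x))
          = (if σ = α then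
              ∑ s ∈ Finset.Icc (1:ℤ) ((m σ : ℤ)), Γ α i β j σ s x * X σ (s - k + 1) x else 0)
            - (if σ = β then
              ∑ s ∈ Finset.Icc (1:ℤ) ((m σ : ℤ)), Γ α i α k σ s x * X σ (s - j + 1) x else 0) := by
        intro σ
        rw [Finset.sum_sub_distrib]
        congr 1
        · by_cases h : σ = α
          · subst h; rw [if_pos rfl]
            refine Finset.sum_congr rfl (fun s _ => ?_)
            simp [Vcomp]
          · rw [if_neg h]
            refine Finset.sum_eq_zero (fun s _ => ?_)
            simp [Vcomp, h]
        · by_cases h : σ = β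
          · subst h; rw [if_pos rfl]
            refine Finset.sum_congr rfl (fun s _ => ?_)
            simp [Vcomp]
          · rw [if_neg h]
            refine Finset.sum_eq_zero (fun s _ => ?_)
            simp [Vcomp, h]
      rw [Finset.sum_congr rfl (fun σ _ => h1 σ), Finset.sum_sub_distrib]
      simp [Finset.sum_ite_eq']
    rw [e1, e2, e3] at E
    have hsplit1 : (∑ s ∈ Finset.Icc (1:ℤ) ((m α : ℤ)), Γ α i β j α s x * X α (s - k + 1) x)
        = Γ α i β j α k x * X α 1 x
          + ∑ s ∈ Finset.Icc (1:ℤ) ((m α : ℤ)),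
              (if k < s then Γ α i β j α s x * X α (s - k + 1) x else 0) := by
      have h1 : ∀ s ∈ Finset.Icc (1:ℤ) ((m α : ℤ)),
          Γ α i β j α s x * X α (s - k + 1) x
          = (if s = k then Γ α i β j α k x * X α 1 x else 0)
            + (if k < s then Γ α i β j α s x * X α (s - k + 1) x else 0) := by
        intro s _
        rcases lt_trichotomy s k with h | h | h
        · rw [if_neg (by omega), if_neg (by omega),
            hXz α (s - k + 1) x (fun hc => by omega), mul_zero, add_zero]
        · subst h
          simp [show s - s + 1 = (1:ℤ) by ring]
        · rw [if_neg (by omega), if_pos h, zero_add]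
      rw [Finset.sum_congr rfl h1, Finset.sum_add_distrib,
        Finset.sum_ite_eq' _ k, if_pos (by rw [Finset.mem_Icc]; exact hk)]
    have hsplit2 : (∑ s ∈ Finset.Icc (1:ℤ) ((m β : ℤ)), Γ α i α k β s x * X β (s - j + 1) x)
        = Γ α i β j α k x * X β 1 x
          + ∑ s ∈ Finset.Icc (1:ℤ) ((m β : ℤ)),
              (if j < s then Γ α i β s α k x * X β (s - j + 1) x else 0) := by
      have h1 : ∀ s ∈ Finset.Icc (1:ℤ) ((m β : ℤ)),
          Γ α i α k β s x * X β (s - j + 1) x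
          = (if s = j then Γ α i β j α k x * X β 1 x else 0)
            + (if j < s then Γ α i β s α k x * X β (s - j + 1) x else 0) := by
        intro s _
        rcases lt_trichotomy s j with h | h | h
        · rw [if_neg (by omega), if_neg (by omega),
            hXz β (s - j + 1) x (fun hc => by omega), mul_zero, add_zero]
        · subst h
          rw [show Γ α i α k β s = Γ α i β s α k from (hΓsym α i β s α k).symm]
          simp [show s - s + 1 = (1:ℤ) by ring]
        · rw [if_neg (by omega), if_pos h, zero_add,
            show Γ α i α k β s = Γ α i β s α k from (hΓsym α i β s α k).symm]
      rw [Finset.sum_congr rfl h1, Finset.sum_add_distrib,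
        Finset.sum_ite_eq' _ j, if_pos (by rw [Finset.mem_Icc]; exact hj)]
    rw [hsplit1, hsplit2] at E
    linear_combination E
  -- nonvanishing of the eigenvalue difference
  have hne : ∀ x ∈ U, X α 1 x - X β 1 x ≠ 0 := fun x hx =>
    sub_ne_zero.mpr (hX1 α β hαβ x hx)
  -- Step 1 : strictly "upper" components vanish
  have step1 : ∀ (n : ℕ) (i j k : ℤ), InR m α i → InR m β j → InR m α k → i < k →
      ((m α : ℤ) - k).toNat + ((m β : ℤ) - j).toNat ≤ n → ∀ x ∈ U, Γ α i β j α k x = 0 := by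
    intro n
    induction n using Nat.strong_induction_on with
    | _ n ih =>
      intro i j k hi hj hk hik hn x hx
      have M := master i j k hi hj hk x hx
      have hpd : pd β j (X α (i - k + 1)) x = 0 :=
        hpdz α (i - k + 1) β j x (fun hc => by omega)
      have hs1 : (∑ s ∈ Finset.Icc (1:ℤ) ((m α : ℤ)),
          if k < s then Γ α i β j α s x * X α (s - k + 1) x else 0) = 0 := by
        refine Finset.sum_eq_zero (fun s hs => ?_)
        rw [Finset.mem_Icc] at hs
        by_cases h : k < s
        · rw [if_pos h,
            ih (((m α : ℤ) - s).toNat + ((m β : ℤ) - j).toNat)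
              (by omega) i j s hi hj ⟨by omega, hs.2⟩ (by omega) le_rfl x hx, zero_mul]
        · rw [if_neg h]
      have hs2 : (∑ s ∈ Finset.Icc (1:ℤ) ((m β : ℤ)),
          if j < s then Γ α i β s α k x * X β (s - j + 1) x else 0) = 0 := by
        refine Finset.sum_eq_zero (fun s hs => ?_)
        rw [Finset.mem_Icc] at hs
        by_cases h : j < s
        · rw [if_pos h,
            ih (((m α : ℤ) - k).toNat + ((m β : ℤ) - s).toNat)
              (by omega) i s k hi ⟨by omega, hs.2⟩ hk hik le_rfl x hx, zero_mul]
        · rw [if_neg h]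
      rw [hpd, hs1, hs2] at M
      have h0 : (X α 1 x - X β 1 x) * Γ α i β j α k x = 0 := by rw [M]; ring
      exact (mul_eq_zero.mp h0).resolve_left (hne x hx)
  -- Step 2 : the shift identity
  have step2 : ∀ (i : ℤ), 2 ≤ i → i ≤ (m α : ℤ) → ∀ (n : ℕ) (j k : ℤ),
      InR m β j → 2 ≤ k → k ≤ (m α : ℤ) →
      ((m α : ℤ) - k).toNat + ((m β : ℤ) - j).toNat ≤ n → ∀ x ∈ U,
      Γ α i β j α k x = Γ α (i - 1) β j α (k - 1) x := by
    intro i hi2 him n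
    induction n using Nat.strong_induction_on with
    | _ n ih =>
      intro j k hj hk2 hkm hn x hx
      have M1 := master i j k ⟨by omega, him⟩ hj ⟨by omega, hkm⟩ x hx
      have M2 := master (i-1) j (k-1) ⟨by omega, by omega⟩ hj ⟨by omega, by omega⟩ x hx
      rw [show i - 1 - (k - 1) + 1 = i - k + 1 by ring] at M2
      have hS2 : (∑ s ∈ Finset.Icc (1:ℤ) ((m β : ℤ)),
            if j < s then Γ α i β s α k x * X β (s - j + 1) x else 0)
          = (∑ s ∈ Finset.Icc (1:ℤ) ((m β : ℤ)),
            if j < s then Γ α (i-1) β s α (k-1) x * X β (s - j + 1) x else 0) := by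
        refine Finset.sum_congr rfl (fun s hs => ?_)
        rw [Finset.mem_Icc] at hs
        by_cases h : j < s
        · rw [if_pos h, if_pos h,
            ih (((m α : ℤ) - k).toNat + ((m β : ℤ) - s).toNat) (by omega)
              s k ⟨by omega, hs.2⟩ hk2 hkm le_rfl x hx]
        · rw [if_neg h, if_neg h]
      have hS1 : (∑ s ∈ Finset.Icc (1:ℤ) ((m α : ℤ)),
            if k - 1 < s then Γ α (i-1) β j α s x * X α (s - (k - 1) + 1) x else 0)
          = (∑ s ∈ Finset.Icc (1:ℤ) ((m α : ℤ)),
            if k < s then Γ α i β j α s x * X α (s - k + 1) x else 0) := by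
        have stepA : (∑ s ∈ Finset.Icc (1:ℤ) ((m α : ℤ)),
              if k - 1 < s then Γ α (i-1) β j α s x * X α (s - (k - 1) + 1) x else 0)
            = (∑ s ∈ Finset.Icc (1:ℤ) ((m α : ℤ)),
              if k - 1 < s ∧ s + 1 ≤ (m α : ℤ) then
                Γ α i β j α (s+1) x * X α (s + 1 - k + 1) x else 0) := by
          refine Finset.sum_congr rfl (fun s hs => ?_)
          rw [Finset.mem_Icc] at hs
          by_cases h : k - 1 < s
          · by_cases h2 : s + 1 ≤ (m α : ℤ)
            · rw [if_pos h, if_pos ⟨h, h2⟩]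
              have hrec := ih (((m α : ℤ) - (s+1)).toNat + ((m β : ℤ) - j).toNat) (by omega)
                j (s+1) hj (by omega) h2 le_rfl x hx
              rw [show s + 1 - 1 = s by ring] at hrec
              rw [← hrec, show s - (k - 1) + 1 = s + 1 - k + 1 by ring]
            · rw [if_pos h, if_neg (fun hc => h2 hc.2)]
              have hsm : s = (m α : ℤ) := by omega
              rw [step1 (((m α : ℤ) - s).toNat + ((m β : ℤ) - j).toNat)
                (i-1) j s ⟨by omega, by omega⟩ hj ⟨by omega, hs.2⟩ (by omega) le_rfl x hx,
                zero_mul]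
          · rw [if_neg h, if_neg (fun hc => h hc.1)]
        have stepB : (∑ s ∈ Finset.Icc (1:ℤ) ((m α : ℤ)),
              if k - 1 < s ∧ s + 1 ≤ (m α : ℤ) then
                Γ α i β j α (s+1) x * X α (s + 1 - k + 1) x else 0)
            = (∑ s ∈ Finset.Icc (1:ℤ) ((m α : ℤ) - 1),
              if k - 1 < s then Γ α i β j α (s+1) x * X α (s + 1 - k + 1) x else 0) := by
          rw [← Finset.sum_subset
            (Finset.Icc_subset_Icc_right (by omega : (m α : ℤ) - 1 ≤ (m α : ℤ)))
            (fun s hsm hns => ?_)]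
          · refine Finset.sum_congr rfl (fun s hs => ?_)
            rw [Finset.mem_Icc] at hs
            by_cases h : k - 1 < s
            · rw [if_pos h, if_pos ⟨h, by omega⟩]
            · rw [if_neg h, if_neg (fun hc => h hc.1)]
          · rw [Finset.mem_Icc] at hsm
            rw [Finset.mem_Icc] at hns
            rw [if_neg (fun hc => by omega)]
        have stepC : (∑ s ∈ Finset.Icc (1:ℤ) ((m α : ℤ) - 1),
              if k - 1 < s then Γ α i β j α (s+1) x * X α (s + 1 - k + 1) x else 0)
            = (∑ s ∈ Finset.Icc (1+1:ℤ) (((m α : ℤ) - 1) + 1),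
              if k < s then Γ α i β j α s x * X α (s - k + 1) x else 0) := by
          rw [← Finset.map_add_right_Icc, Finset.sum_map]
          refine Finset.sum_congr rfl (fun s _ => ?_)
          show (if k - 1 < s then Γ α i β j α (s+1) x * X α (s + 1 - k + 1) x else 0)
            = if k < s + 1 then Γ α i β j α (s+1) x * X α (s + 1 - k + 1) x else 0
          exact if_congr (by omega) rfl rfl
        have stepD : (∑ s ∈ Finset.Icc (1+1:ℤ) (((m α : ℤ) - 1) + 1),
              if k < s then Γ α i β j α s x * X α (s - k + 1) x else 0)
            = (∑ s ∈ Finset.Icc (1:ℤ) ((m α : ℤ)),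
              if k < s then Γ α i β j α s x * X α (s - k + 1) x else 0) := by
          rw [show ((m α : ℤ) - 1) + 1 = (m α : ℤ) by ring]
          refine Finset.sum_subset (Finset.Icc_subset_Icc_left (by omega)) (fun s hsm hns => ?_)
          rw [Finset.mem_Icc] at hsm
          rw [Finset.mem_Icc] at hns
          rw [if_neg (by omega)]
        rw [stepA, stepB, stepC, stepD]
      rw [hS1, ← hS2] at M2
      have h0 : (X α 1 x - X β 1 x) * Γ α i β j α k x
          = (X α 1 x - X β 1 x) * Γ α (i-1) β j α (k-1) x := M1.trans M2.symm
      exact mul_left_cancel₀ (hne x hx) h0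
  -- assemble
  intro i k j hi hk hj x hx
  constructor
  · intro hki
    have main : ∀ (n : ℕ) (i k : ℤ), 1 ≤ i → i ≤ (m α : ℤ) → 1 ≤ k → k ≤ (m α : ℤ) →
        k ≤ i → k ≤ (n : ℤ) + 1 → Γ α i β j α k x = Γ α (i - k + 1) β j α 1 x := by
      intro n
      induction n with
      | zero =>
        intro i k h1 h2 h3 h4 h5 h6
        have : k = 1 := by omega
        subst this
        rw [show i - 1 + 1 = i by ring]
      | succ n ihn =>
        intro i k h1 h2 h3 h4 h5 h6
        by_cases hk1 : k ≤ (n : ℤ) + 1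
        · exact ihn i k h1 h2 h3 h4 h5 hk1
        · have h2k : 2 ≤ k := by omega
          have h2i : 2 ≤ i := by omega
          rw [step2 i h2i h2 (((m α : ℤ) - k).toNat + ((m β : ℤ) - j).toNat)
              j k hj h2k h4 le_rfl x hx,
            ihn (i-1) (k-1) (by omega) (by omega) (by omega) (by omega) (by omega)
              (by push_cast; omega),
            show i - 1 - (k - 1) + 1 = i - k + 1 by ring]
    exact main k.toNat i k hi.1 hi.2 hk.1 hk.2 hki (by omega)
  · intro hik
    exact step1 (((m α : ℤ) - k).toNat + ((m β : ℤ) - j).toNat) i j k hi hj hk hik le_rfl x hx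
end

section
/- Let α ≠ β. Suppose Γ are torsionless Christoffel symbols on U satisfying the flat-unit condition Σ_{σ=1}^r Γ^{i(α)}_{j(β)1(σ)} = 0 and d_∇V = 0, i.e. ∂_{j(β)}V^{i(α)}_{k(γ)} − ∂_{k(γ)}V^{i(α)}_{j(β)} + Σ_{s(σ)}(Γ^{i(α)}_{j(β)s(σ)}V^{s(σ)}_{k(γ)} − Γ^{i(α)}_{k(γ)s(σ)}V^{s(σ)}_{j(β)}) = 0, where V^{i(α)}_{j(β)} = δ_{αβ} X^{(i−j+1)(α)} (zero for i < j) for smooth X^{i(α)} with X^{1(α)} ≠ X^{1(β)} pointwise for α ≠ β and X^{2(α)} ≠ 0 pointwise for every α with m_α ≥ 2. Then Γ^{i(α)}_{j(β)k(β)} = Γ^{i(α)}_{(j+k−1)(β)1(β)} whenever j+k ≤ m_β + 1, and Γ^{i(α)}_{j(β)k(β)} = 0 whenever j+k > m_β + 1. -/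
open scoped BigOperators

lemma myShiftSum (M : ℤ) (F Xv : ℤ → ℝ)
    (hF : ∀ u : ℤ, u < 1 ∨ M < u → F u = 0)
    (hX : ∀ t : ℤ, t < 1 ∨ M < t → Xv t = 0)
    (k : ℤ) (hk1 : 1 ≤ k) (hkM : k ≤ M) :
    ∑ s ∈ Finset.Icc 1 M, F s * Xv (s - k + 1)
      = ∑ t ∈ Finset.Icc 1 M, F (t + k - 1) * Xv t := by
  have h1 : ∑ s ∈ Finset.Icc 1 M, F s * Xv (s - k + 1)
      = ∑ t ∈ Finset.Icc (2 - k) (M - k + 1), F (t + k - 1) * Xv t := by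
    have hmap : Finset.Icc (2 - k) (M - k + 1)
        = Finset.map (addRightEmbedding (1 - k)) (Finset.Icc (1:ℤ) M) := by
      rw [Finset.map_add_right_Icc]
      congr 1 <;> ring
    rw [hmap, Finset.sum_map]
    apply Finset.sum_congr rfl
    intro s _
    simp only [addRightEmbedding_apply]
    have e1 : s + (1 - k) + k - 1 = s := by ring
    have e2 : s + (1 - k) = s - k + 1 := by ring
    rw [e1, e2]
  have hsub1 : Finset.Icc (2 - k) (M - k + 1) ⊆ Finset.Icc (2 - M) M :=
    Finset.Icc_subset_Icc (by omega) (by omega)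
  have hsub2 : Finset.Icc (1:ℤ) M ⊆ Finset.Icc (2 - M) M :=
    Finset.Icc_subset_Icc (by omega) (by omega)
  have h2 : ∑ t ∈ Finset.Icc (2 - k) (M - k + 1), F (t + k - 1) * Xv t
      = ∑ t ∈ Finset.Icc (2 - M) M, F (t + k - 1) * Xv t := by
    apply Finset.sum_subset hsub1
    intro t ht hnt
    simp only [Finset.mem_Icc] at ht hnt
    rw [hF (t + k - 1) (by omega), zero_mul]
  have h3 : ∑ t ∈ Finset.Icc (1:ℤ) M, F (t + k - 1) * Xv t
      = ∑ t ∈ Finset.Icc (2 - M) M, F (t + k - 1) * Xv t := by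
    apply Finset.sum_subset hsub2
    intro t ht hnt
    simp only [Finset.mem_Icc] at ht hnt
    rw [hX t (by omega), mul_zero]
  rw [h1, h2, ← h3]

lemma myChain (G : ℤ → ℤ → ℝ) (n : ℤ)
    (hP : ∀ a b : ℤ, 1 ≤ a → 2 ≤ b → n < a + b → G a b = G (a+1) (b-1)) :
    ∀ a b : ℤ, 1 ≤ a → 1 ≤ b → n < a + b → G a b = G (a + b - 1) 1 := by
  have key : ∀ c : ℕ, ∀ a b : ℤ, 1 ≤ a → b = 1 + (c:ℤ) → n < a + b →
      G a b = G (a + b - 1) 1 := by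
    intro c
    induction c with
    | zero =>
      intro a b ha hb hn
      subst hb
      norm_num
    | succ c ih =>
      intro a b ha hb hn
      have h1 : G a b = G (a+1) (b-1) := hP a b ha (by push_cast at hb; omega) hn
      have h2 := ih (a+1) (b-1) (by omega) (by push_cast at hb ⊢; omega) (by omega)
      rw [h1, h2]
      congr 1
      ring
  intro a b ha hb hn
  exact key (b - 1).toNat a b ha (by rw [Int.toNat_of_nonneg (by omega)]; ring) hn

lemma myDescend (M : ℤ) (G : ℤ → ℤ → ℝ) (Xv : ℤ → ℝ)
    (hsym : ∀ a b : ℤ, G a b = G b a)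
    (hG0 : ∀ a b : ℤ, a < 1 ∨ M < a ∨ b < 1 ∨ M < b → G a b = 0)
    (hX2 : 2 ≤ M → Xv 2 ≠ 0)
    (hE : ∀ j k : ℤ, 1 ≤ j → j ≤ M → 1 ≤ k → k ≤ M →
      ∑ t ∈ Finset.Icc 1 M, (G j (t + k - 1) - G k (t + j - 1)) * Xv t = 0) :
    ∀ a b : ℤ, 1 ≤ a → 2 ≤ b → G a b = G (a+1) (b-1) := by
  suffices H : ∀ d : ℕ, ∀ a b : ℤ, 1 ≤ a → 2 ≤ b → 2*M + 1 - (a+b) ≤ (d:ℤ) → G a b = G (a+1) (b-1) by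
    intro a b ha hb
    exact H (2*M + 1 - (a+b)).toNat a b ha hb (Int.self_le_toNat _)
  intro d
  induction d with
  | zero =>
    intro a b ha hb hd
    rw [hG0 a b (by omega), hG0 (a+1) (b-1) (by omega)]
  | succ d ih =>
    intro a b ha hb hd
    by_cases hM : M ≤ 1
    · rw [hG0 a b (by omega), hG0 (a+1) (b-1) (by omega)]
    push_neg at hM
    by_cases haM : M < a
    · rw [hG0 a b (by omega), hG0 (a+1) (b-1) (by omega)]
    by_cases hbM : M < b - 1
    · rw [hG0 a b (by omega), hG0 (a+1) (b-1) (by omega)]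
    push_neg at haM hbM
    have hP : ∀ a' b' : ℤ, 1 ≤ a' → 2 ≤ b' → a + b < a' + b' → G a' b' = G (a'+1) (b'-1) := by
      intro a' b' ha' hb' hab
      exact ih a' b' ha' hb' (by omega)
    have hQ := myChain G (a + b) hP
    have hmem : (2:ℤ) ∈ Finset.Icc (1:ℤ) M := by
      simp only [Finset.mem_Icc]; omega
    have hz : ∀ t ∈ Finset.Icc (1:ℤ) M, t ≠ 2 →
        (G a (t + (b-1) - 1) - G (b-1) (t + a - 1)) * Xv t = 0 := by
      intro t ht hne
      simp only [Finset.mem_Icc] at ht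
      rcases lt_or_gt_of_ne hne with h1 | h3
      · have : t = 1 := by omega
        subst this
        have e1 : (1:ℤ) + (b-1) - 1 = b - 1 := by ring
        have e2 : (1:ℤ) + a - 1 = a := by ring
        rw [e1, e2, hsym a (b-1), sub_self, zero_mul]
      · have h4 := hQ a (t + (b-1) - 1) (by omega) (by omega) (by omega)
        have h5 := hQ (b-1) (t + a - 1) (by omega) (by omega) (by omega)
        rw [h4, h5]
        have e : a + (t + (b-1) - 1) - 1 = (b-1) + (t + a - 1) - 1 := by ring
        rw [e, sub_self, zero_mul]
    have h0 := hE a (b-1) ha (by omega) (by omega) (by omega)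
    rw [Finset.sum_eq_single_of_mem 2 hmem hz] at h0
    have e1 : (2:ℤ) + (b-1) - 1 = b := by ring
    have e2 : (2:ℤ) + a - 1 = a + 1 := by ring
    rw [e1, e2] at h0
    have h6 : G a b - G (b-1) (a+1) = 0 := by
      rcases mul_eq_zero.mp h0 with h | h
      · exact h
      · exact absurd h (hX2 (by omega))
    rw [sub_eq_zero.mp h6, hsym]

theorem statement2
    {r : ℕ} (hr : 1 ≤ r) (m : Fin r → ℕ) (hm : ∀ α, 1 ≤ m α)
    (U : Set (Dom r m)) (hU : IsOpen U)
    (Γ : Fin r → ℤ → Fin r → ℤ → Fin r → ℤ → Dom r m → ℝ)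
    (X : Fin r → ℤ → Dom r m → ℝ)
    (hΓs : ∀ α i β j γ k, ContDiffOn ℝ (⊤ : ℕ∞) (Γ α i β j γ k) U)
    (hXs : ∀ α i, ContDiffOn ℝ (⊤ : ℕ∞) (X α i) U)
    (hΓ0 : ∀ α i β j γ k, ¬(InR m α i ∧ InR m β j ∧ InR m γ k) → Γ α i β j γ k = 0)
    (hX0 : ∀ α i, ¬ InR m α i → X α i = 0)
    (hΓsym : ∀ α i β j γ k, Γ α i β j γ k = Γ α i γ k β j)
    (hflat : ∀ α i β j, ∀ x ∈ U, (∑ σ : Fin r, Γ α i β j σ 1 x) = 0)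
    (hX1 : ∀ α β, α ≠ β → ∀ x ∈ U, X α 1 x ≠ X β 1 x)
    (hX2 : ∀ α, 2 ≤ m α → ∀ x ∈ U, X α 2 x ≠ 0)
    (hdV : ∀ α i β j γ k, InR m α i → InR m β j → InR m γ k → ∀ x ∈ U,
      pd β j (Vcomp X α i γ k) x - pd γ k (Vcomp X α i β j) x
        + sumIdx m (fun σ s =>
            Γ α i β j σ s x * Vcomp X σ s γ k x
              - Γ α i γ k σ s x * Vcomp X σ s β j x) = 0)
    :
    ∀ α β, α ≠ β → ∀ i j k, InR m α i → InR m β j → InR m β k →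
      ∀ x ∈ U,
        (j + k ≤ (m β : ℤ) + 1 → Γ α i β j β k x = Γ α i β (j + k - 1) β 1 x) ∧
        ((m β : ℤ) + 1 < j + k → Γ α i β j β k x = 0) := by
  intro α β hαβ i j k hi hj hk x hx
  set M : ℤ := (m β : ℤ) with hM
  set G : ℤ → ℤ → ℝ := fun a b => Γ α i β a β b x with hGdef
  set Xv : ℤ → ℝ := fun t => X β t x with hXvdef
  have hG0 : ∀ a b : ℤ, a < 1 ∨ M < a ∨ b < 1 ∨ M < b → G a b = 0 := by
    intro a b hab
    have h := hΓ0 α i β a β b (by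
      rintro ⟨-, ⟨ha1, ha2⟩, ⟨hb1, hb2⟩⟩
      omega)
    exact congrFun h x
  have hXv0 : ∀ t : ℤ, t < 1 ∨ M < t → Xv t = 0 := by
    intro t ht
    have h := hX0 β t (by rintro ⟨h1, h2⟩; omega)
    exact congrFun h x
  have hsymG : ∀ a b : ℤ, G a b = G b a := fun a b => congrFun (hΓsym α i β a β b) x
  have hXv2 : 2 ≤ M → Xv 2 ≠ 0 := by
    intro h2
    exact hX2 β (by omega) x hx
  -- the equation from hdV
  have hV0 : ∀ j' : ℤ, Vcomp X α i β j' = fun _ => 0 := by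
    intro j'
    funext y
    simp [Vcomp, hαβ]
  have hEraw : ∀ j' k' : ℤ, 1 ≤ j' → j' ≤ M → 1 ≤ k' → k' ≤ M →
      ∑ s ∈ Finset.Icc (1:ℤ) M,
        (G j' s * Xv (s - k' + 1) - G k' s * Xv (s - j' + 1)) = 0 := by
    intro j' k' hj1 hj2 hk1 hk2
    have h := hdV α i β j' β k' hi ⟨hj1, hj2⟩ ⟨hk1, hk2⟩ x hx
    rw [hV0 j', hV0 k'] at h
    have hpd : ∀ a : ℤ, pd β a (fun _ : Dom r m => (0:ℝ)) x = 0 := by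
      intro a
      simp [pd]
    rw [hpd, hpd] at h
    have hcol : sumIdx m (fun σ s =>
        Γ α i β j' σ s x * Vcomp X σ s β k' x
          - Γ α i β k' σ s x * Vcomp X σ s β j' x)
        = ∑ s ∈ Finset.Icc (1:ℤ) M,
            (G j' s * Xv (s - k' + 1) - G k' s * Xv (s - j' + 1)) := by
      rw [sumIdx]
      rw [Finset.sum_eq_single_of_mem β (Finset.mem_univ β)]
      · apply Finset.sum_congr rfl
        intro s _
        simp [Vcomp, hGdef, hXvdef]
      · intro σ _ hσ
        apply Finset.sum_eq_zero
        intro s _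
        simp [Vcomp, hσ]
    rw [hcol] at h
    linarith
  have hE : ∀ j' k' : ℤ, 1 ≤ j' → j' ≤ M → 1 ≤ k' → k' ≤ M →
      ∑ t ∈ Finset.Icc 1 M, (G j' (t + k' - 1) - G k' (t + j' - 1)) * Xv t = 0 := by
    intro j' k' hj1 hj2 hk1 hk2
    have h := hEraw j' k' hj1 hj2 hk1 hk2
    rw [Finset.sum_sub_distrib] at h
    rw [myShiftSum M (fun s => G j' s) Xv (fun u hu => hG0 j' u (by omega)) hXv0 k' hk1 hk2,
        myShiftSum M (fun s => G k' s) Xv (fun u hu => hG0 k' u (by omega)) hXv0 j' hj1 hj2] at h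
    rw [← Finset.sum_sub_distrib] at h
    rw [← h]
    apply Finset.sum_congr rfl
    intro t _
    ring
  have hP := myDescend M G Xv hsymG hG0 hXv2 hE
  have hQ := myChain G 0 (fun a b ha hb _ => hP a b ha hb)
  constructor
  · intro hle
    exact hQ j k hj.1 hk.1 (by omega)
  · intro hlt
    exact (hQ j k hj.1 hk.1 (by omega)).trans (hG0 (j + k - 1) 1 (by omega))
end

section
/- Suppose Γ are torsionless Christoffel symbols on U satisfying the flat-unit condition Σ_{σ=1}^r Γ^{i(α)}_{j(β)1(σ)} = 0 and d_∇V = 0 for V^{i(α)}_{j(β)} = δ_{αβ} X^{(i−j+1)(α)} (zero for i < j), with smooth X^{i(α)} such that pointwise X^{1(α)} ≠ X^{1(β)} for α ≠ β and X^{2(α)} ≠ 0 for every α with m_α ≥ 2. Define A^{i(α)}_{j(β)k(γ)s(σ)} := Σ_{t(τ)} (Γ^{i(α)}_{j(β)t(τ)}c^{t(τ)}_{k(γ)s(σ)} − Γ^{t(τ)}_{j(β)s(σ)}c^{i(α)}_{k(γ)t(τ)} − Γ^{i(α)}_{k(γ)t(τ)}c^{t(τ)}_{j(β)s(σ)} +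 Γ^{t(τ)}_{k(γ)s(σ)}c^{i(α)}_{j(β)t(τ)}), and assume Σ_{s(σ)} A^{i(α)}_{j(β)k(γ)s(σ)} X^{s(σ)} = 0 on U for all indices. Then for every α with m_α ≥ 2 and all i ∈ {1,…,m_α}, j, k ∈ {2,…,m_α}: Γ^{i(α)}_{j(α)(k+1)(α)} − Γ^{i(α)}_{(j+1)(α)k(α)} = Γ^{(i−k+1)(α)}_{2(α)j(α)} − Γ^{(i−j+1)(α)}_{2(α)k(α)} (symbols with out-of-range indices being 0). -/
open scoped BigOperators

open Finset

namespace DHaux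

variable {r : ℕ} {m : Fin r → ℕ}

lemma sumIdx_eq_zero {f : Fin r → ℤ → ℝ}
    (h : ∀ σ : Fin r, ∀ s : ℤ, 1 ≤ s → s ≤ (m σ : ℤ) → f σ s = 0) : sumIdx m f = 0 := by
  unfold sumIdx
  apply Finset.sum_eq_zero
  intro σ _
  apply Finset.sum_eq_zero
  intro s hs
  rw [Finset.mem_Icc] at hs
  exact h σ s hs.1 hs.2

lemma sumIdx_mul (f : Fin r → ℤ → ℝ) (c : ℝ) :
    sumIdx m f * c = sumIdx m (fun σ s => f σ s * c) := by
  unfold sumIdx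
  rw [Finset.sum_mul]
  apply Finset.sum_congr rfl
  intro σ _
  rw [Finset.sum_mul]

lemma sumIdx_congr {f g : Fin r → ℤ → ℝ}
    (h : ∀ σ : Fin r, ∀ s : ℤ, 1 ≤ s → s ≤ (m σ : ℤ) → f σ s = g σ s) :
    sumIdx m f = sumIdx m g := by
  unfold sumIdx
  apply Finset.sum_congr rfl
  intro σ _
  apply Finset.sum_congr rfl
  intro s hs
  rw [Finset.mem_Icc] at hs
  exact h σ s hs.1 hs.2

lemma sumIdx_sub (f g : Fin r → ℤ → ℝ) :
    sumIdx m (fun σ s => f σ s - g σ s) = sumIdx m f - sumIdx m g := by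
  unfold sumIdx
  rw [← Finset.sum_sub_distrib]
  apply Finset.sum_congr rfl
  intro σ _
  rw [← Finset.sum_sub_distrib]

lemma sumIdx_add (f g : Fin r → ℤ → ℝ) :
    sumIdx m (fun σ s => f σ s + g σ s) = sumIdx m f + sumIdx m g := by
  unfold sumIdx
  rw [← Finset.sum_add_distrib]
  apply Finset.sum_congr rfl
  intro σ _
  rw [← Finset.sum_add_distrib]

/-- contraction of `cDH` in its two lower slots against a summed index -/
lemma contract3 (f : Fin r → ℤ → ℝ) (C σ : Fin r) (k s : ℤ) :
    sumIdx m (fun τ t => f τ t * cDH m τ t C k σ s)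
      = if σ = C ∧ InR m C k ∧ InR m σ s ∧ InR m C (k+s-1) then f C (k+s-1) else 0 := by
  by_cases h : σ = C ∧ InR m C k ∧ InR m σ s ∧ InR m C (k+s-1)
  · obtain ⟨hσC, hk, hs, ht⟩ := h
    rw [if_pos ⟨hσC, hk, hs, ht⟩]
    unfold sumIdx
    beta_reduce
    rw [Finset.sum_eq_single C]
    · have hone : cDH m C (k+s-1) C k σ s = 1 := by
        unfold cDH
        rw [if_pos ⟨rfl, hσC.symm, rfl, ht, hk, hσC ▸ hs⟩]
      have := Finset.sum_eq_single_of_mem (f := fun t => f C t * cDH m C t C k σ s)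
        (k+s-1) (Finset.mem_Icc.mpr ⟨ht.1, ht.2⟩) ?_
      · rw [this]; simp only [hone, mul_one]
      · intro t htm hne
        have hz : cDH m C t C k σ s = 0 := by
          unfold cDH
          rw [if_neg]
          rintro ⟨-, -, h3, -⟩
          exact hne h3
        simp only [hz, mul_zero]
    · intro τ _ hτ
      apply Finset.sum_eq_zero
      intro t _
      have : cDH m τ t C k σ s = 0 := by
        unfold cDH
        rw [if_neg]
        rintro ⟨h1, -, -, -⟩
        exact hτ h1
      rw [this, mul_zero]
    · intro hC
      exact absurd (Finset.mem_univ C) hC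
  · rw [if_neg h]
    unfold sumIdx
    beta_reduce
    apply Finset.sum_eq_zero
    intro τ _
    apply Finset.sum_eq_zero
    intro t htm
    rw [Finset.mem_Icc] at htm
    have : cDH m τ t C k σ s = 0 := by
      unfold cDH
      rw [if_neg]
      rintro ⟨h1, h2, h3, h4, h5, h6⟩
      subst h1
      subst h3
      exact h ⟨h2.symm, h5, h6, h4⟩
    rw [this, mul_zero]

/-- contraction of `cDH` in its upper and third slots against a summed index -/
lemma contract1 (f : Fin r → ℤ → ℝ) (A C : Fin r) (i k : ℤ) :
    sumIdx m (fun τ t => f τ t * cDH m A i C k τ t)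
      = if A = C ∧ InR m A i ∧ InR m C k ∧ InR m A (i-k+1) then f A (i-k+1) else 0 := by
  by_cases h : A = C ∧ InR m A i ∧ InR m C k ∧ InR m A (i-k+1)
  · obtain ⟨hAC, hi, hk, ht⟩ := h
    rw [if_pos ⟨hAC, hi, hk, ht⟩]
    unfold sumIdx
    beta_reduce
    rw [Finset.sum_eq_single A]
    · have hone : cDH m A i C k A (i-k+1) = 1 := by
        unfold cDH
        rw [if_pos ⟨hAC, rfl, by ring, hi, hAC ▸ hk, ht⟩]
      have := Finset.sum_eq_single_of_mem (f := fun t => f A t * cDH m A i C k A t)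
        (i-k+1) (Finset.mem_Icc.mpr ⟨ht.1, ht.2⟩) ?_
      · rw [this]; simp only [hone, mul_one]
      · intro t htm hne
        have hz : cDH m A i C k A t = 0 := by
          unfold cDH
          rw [if_neg]
          rintro ⟨-, -, h3, -⟩
          exact hne (by omega)
        simp only [hz, mul_zero]
    · intro τ _ hτ
      apply Finset.sum_eq_zero
      intro t _
      have : cDH m A i C k τ t = 0 := by
        unfold cDH
        rw [if_neg]
        rintro ⟨-, h2, -, -⟩
        exact hτ h2.symm
      rw [this, mul_zero]
    · intro hA
      exact absurd (Finset.mem_univ A) hA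
  · rw [if_neg h]
    unfold sumIdx
    beta_reduce
    apply Finset.sum_eq_zero
    intro τ _
    apply Finset.sum_eq_zero
    intro t htm
    rw [Finset.mem_Icc] at htm
    have : cDH m A i C k τ t = 0 := by
      unfold cDH
      rw [if_neg]
      rintro ⟨h1, h2, h3, h4, h5, h6⟩
      subst h2
      exact h ⟨h1, h4, h5, by rw [show i-k+1 = t by omega]; exact h6⟩
    rw [this, mul_zero]


lemma sumIdx_comb4 (f g h k : Fin r → ℤ → ℝ) :
    sumIdx m (fun σ s => f σ s - g σ s - h σ s + k σ s)
      = sumIdx m f - sumIdx m g - sumIdx m h + sumIdx m k := by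
  unfold sumIdx
  rw [← Finset.sum_sub_distrib, ← Finset.sum_sub_distrib, ← Finset.sum_add_distrib]
  apply Finset.sum_congr rfl
  intro σ _
  rw [← Finset.sum_sub_distrib, ← Finset.sum_sub_distrib, ← Finset.sum_add_distrib]

lemma AX4 (Γ : Fin r → ℤ → Fin r → ℤ → Fin r → ℤ → Dom r m → ℝ)
    (X : Fin r → ℤ → Dom r m → ℝ)
    (hΓ0 : ∀ α i β j γ k, ¬(InR m α i ∧ InR m β j ∧ InR m γ k) → Γ α i β j γ k = 0)
    (x : Dom r m)
    (A : Fin r) (i : ℤ) (B : Fin r) (j : ℤ) (C : Fin r) (k : ℤ)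
    (hi : InR m A i) (hj : InR m B j) (hk : InR m C k)
    (hAx : sumIdx m (fun σ s => Atens Γ A i B j C k σ s x * X σ s x) = 0) :
    (∑ s ∈ Finset.Icc (1:ℤ) ((m C : ℕ) : ℤ), Γ A i B j C (k+s-1) x * X C s x)
      - (if A = C then sumIdx m (fun σ s => Γ A (i-k+1) B j σ s x * X σ s x) else 0)
      - (∑ s ∈ Finset.Icc (1:ℤ) ((m B : ℕ) : ℤ), Γ A i C k B (j+s-1) x * X B s x)
      + (if A = B then sumIdx m (fun σ s => Γ A (i-j+1) C k σ s x * X σ s x) else 0) = 0 := by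
  have hΓz : ∀ (α : Fin r) (i' : ℤ) (β : Fin r) (j' : ℤ) (γ : Fin r) (k' : ℤ),
      ¬(InR m α i' ∧ InR m β j' ∧ InR m γ k') → Γ α i' β j' γ k' x = 0 := by
    intro α i' β j' γ k' hcon
    rw [hΓ0 α i' β j' γ k' hcon]
    rfl
  have step1 : sumIdx m (fun σ s => Atens Γ A i B j C k σ s x * X σ s x)
      = sumIdx m (fun σ s =>
          (if σ = C ∧ InR m C k ∧ InR m σ s ∧ InR m C (k+s-1)
            then Γ A i B j C (k+s-1) x * X σ s x else 0)
        - (if A = C ∧ InR m A i ∧ InR m C k ∧ InR m A (i-k+1)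
            then Γ A (i-k+1) B j σ s x * X σ s x else 0)
        - (if σ = B ∧ InR m B j ∧ InR m σ s ∧ InR m B (j+s-1)
            then Γ A i C k B (j+s-1) x * X σ s x else 0)
        + (if A = B ∧ InR m A i ∧ InR m B j ∧ InR m A (i-j+1)
            then Γ A (i-j+1) C k σ s x * X σ s x else 0)) := by
    apply sumIdx_congr
    intro σ s hs1 hs2
    show Atens Γ A i B j C k σ s x * X σ s x = _
    unfold Atens
    rw [sumIdx_mul]
    have e : sumIdx m (fun τ t =>
        (Γ A i B j τ t x * cDH m τ t C k σ s
          - Γ τ t B j σ s x * cDH m A i C k τ t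
          - Γ A i C k τ t x * cDH m τ t B j σ s
          + Γ τ t C k σ s x * cDH m A i B j τ t) * X σ s x)
        = sumIdx m (fun τ t =>
          (Γ A i B j τ t x * X σ s x) * cDH m τ t C k σ s
          - (Γ τ t B j σ s x * X σ s x) * cDH m A i C k τ t
          - (Γ A i C k τ t x * X σ s x) * cDH m τ t B j σ s
          + (Γ τ t C k σ s x * X σ s x) * cDH m A i B j τ t) := by
      apply sumIdx_congr
      intro τ t _ _
      ring
    rw [e, sumIdx_comb4,
      contract3 (fun τ t => Γ A i B j τ t x * X σ s x) C σ k s,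
      contract1 (fun τ t => Γ τ t B j σ s x * X σ s x) A C i k,
      contract3 (fun τ t => Γ A i C k τ t x * X σ s x) B σ j s,
      contract1 (fun τ t => Γ τ t C k σ s x * X σ s x) A B i j]
  have evalP1 : sumIdx m (fun σ s =>
      if σ = C ∧ InR m C k ∧ InR m σ s ∧ InR m C (k+s-1)
        then Γ A i B j C (k+s-1) x * X σ s x else 0)
      = ∑ s ∈ Finset.Icc (1:ℤ) ((m C : ℕ) : ℤ), Γ A i B j C (k+s-1) x * X C s x := by
    unfold sumIdx
    beta_reduce
    rw [Finset.sum_eq_single C]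
    · apply Finset.sum_congr rfl
      intro s hs
      rw [Finset.mem_Icc] at hs
      by_cases hC : InR m C (k+s-1)
      · rw [if_pos ⟨rfl, hk, ⟨hs.1, hs.2⟩, hC⟩]
      · rw [if_neg (fun hcon => hC hcon.2.2.2),
          hΓz A i B j C (k+s-1) (fun hcon => hC hcon.2.2), zero_mul]
    · intro σ _ hσ
      apply Finset.sum_eq_zero
      intro s _
      rw [if_neg (fun hcon => hσ hcon.1)]
    · intro hC
      exact absurd (Finset.mem_univ C) hC
  have evalP3 : sumIdx m (fun σ s =>
      if σ = B ∧ InR m B j ∧ InR m σ s ∧ InR m B (j+s-1)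
        then Γ A i C k B (j+s-1) x * X σ s x else 0)
      = ∑ s ∈ Finset.Icc (1:ℤ) ((m B : ℕ) : ℤ), Γ A i C k B (j+s-1) x * X B s x := by
    unfold sumIdx
    beta_reduce
    rw [Finset.sum_eq_single B]
    · apply Finset.sum_congr rfl
      intro s hs
      rw [Finset.mem_Icc] at hs
      by_cases hC : InR m B (j+s-1)
      · rw [if_pos ⟨rfl, hj, ⟨hs.1, hs.2⟩, hC⟩]
      · rw [if_neg (fun hcon => hC hcon.2.2.2),
          hΓz A i C k B (j+s-1) (fun hcon => hC hcon.2.2), zero_mul]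
    · intro σ _ hσ
      apply Finset.sum_eq_zero
      intro s _
      rw [if_neg (fun hcon => hσ hcon.1)]
    · intro hB
      exact absurd (Finset.mem_univ B) hB
  have evalP2 : sumIdx m (fun σ s =>
      if A = C ∧ InR m A i ∧ InR m C k ∧ InR m A (i-k+1)
        then Γ A (i-k+1) B j σ s x * X σ s x else 0)
      = (if A = C then sumIdx m (fun σ s => Γ A (i-k+1) B j σ s x * X σ s x) else 0) := by
    by_cases hAC : A = C
    · rw [if_pos hAC]
      apply sumIdx_congr
      intro σ s _ _
      by_cases hR : InR m A (i-k+1)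
      · rw [if_pos ⟨hAC, hi, hk, hR⟩]
      · rw [if_neg (fun hcon => hR hcon.2.2.2),
          hΓz A (i-k+1) B j σ s (fun hcon => hR hcon.1), zero_mul]
    · rw [if_neg hAC]
      apply sumIdx_eq_zero
      intro σ s _ _
      rw [if_neg (fun hcon => hAC hcon.1)]
  have evalP4 : sumIdx m (fun σ s =>
      if A = B ∧ InR m A i ∧ InR m B j ∧ InR m A (i-j+1)
        then Γ A (i-j+1) C k σ s x * X σ s x else 0)
      = (if A = B then sumIdx m (fun σ s => Γ A (i-j+1) C k σ s x * X σ s x) else 0) := by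
    by_cases hAB : A = B
    · rw [if_pos hAB]
      apply sumIdx_congr
      intro σ s _ _
      by_cases hR : InR m A (i-j+1)
      · rw [if_pos ⟨hAB, hi, hj, hR⟩]
      · rw [if_neg (fun hcon => hR hcon.2.2.2),
          hΓz A (i-j+1) C k σ s (fun hcon => hR hcon.1), zero_mul]
    · rw [if_neg hAB]
      apply sumIdx_eq_zero
      intro σ s _ _
      rw [if_neg (fun hcon => hAB hcon.1)]
  rw [step1] at hAx
  rw [show (fun (σ : Fin r) (s : ℤ) =>
          (if σ = C ∧ InR m C k ∧ InR m σ s ∧ InR m C (k+s-1)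
            then Γ A i B j C (k+s-1) x * X σ s x else 0)
        - (if A = C ∧ InR m A i ∧ InR m C k ∧ InR m A (i-k+1)
            then Γ A (i-k+1) B j σ s x * X σ s x else 0)
        - (if σ = B ∧ InR m B j ∧ InR m σ s ∧ InR m B (j+s-1)
            then Γ A i C k B (j+s-1) x * X σ s x else 0)
        + (if A = B ∧ InR m A i ∧ InR m B j ∧ InR m A (i-j+1)
            then Γ A (i-j+1) C k σ s x * X σ s x else 0)) = fun σ s =>
          (fun σ s => if σ = C ∧ InR m C k ∧ InR m σ s ∧ InR m C (k+s-1)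
            then Γ A i B j C (k+s-1) x * X σ s x else 0) σ s
        - (fun σ s => if A = C ∧ InR m A i ∧ InR m C k ∧ InR m A (i-k+1)
            then Γ A (i-k+1) B j σ s x * X σ s x else 0) σ s
        - (fun σ s => if σ = B ∧ InR m B j ∧ InR m σ s ∧ InR m B (j+s-1)
            then Γ A i C k B (j+s-1) x * X σ s x else 0) σ s
        + (fun σ s => if A = B ∧ InR m A i ∧ InR m B j ∧ InR m A (i-j+1)
            then Γ A (i-j+1) C k σ s x * X σ s x else 0) σ s from rfl,
    sumIdx_comb4, evalP1, evalP2, evalP3, evalP4] at hAx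
  exact hAx

end DHaux

private lemma gc (g : ℤ → ℤ → ℤ → ℝ) {a b c a' b' c' : ℤ}
    (h1 : a = a') (h2 : b = b') (h3 : c = c') : g a b c = g a' b' c' := by
  rw [h1, h2, h3]

private lemma stepC (M : ℤ) (hM : 2 ≤ M) (g : ℤ → ℤ → ℤ → ℝ) (Xa : ℤ → ℝ)
    (hg0 : ∀ a b c : ℤ, ¬(1 ≤ a ∧ a ≤ M ∧ 1 ≤ b ∧ b ≤ M ∧ 1 ≤ c ∧ c ≤ M) → g a b c = 0)
    (hgsym : ∀ a b c : ℤ, g a b c = g a c b)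
    (hpsi1 : ∀ i j k : ℤ, i ≤ M → 1 ≤ j → 1 ≤ k → g (i-j+1) k 1 = g (i-k+1) j 1)
    (hstar : ∀ i j k : ℤ, 1 ≤ i → i ≤ M → 1 ≤ j → j ≤ M → 1 ≤ k → k ≤ M →
      ∑ s ∈ Finset.Icc (1:ℤ) M,
        (g i j (k+s-1) - g i k (j+s-1) + g (i-j+1) k s - g (i-k+1) j s) * Xa s = 0)
    (hX2 : Xa 2 ≠ 0) :
    ∀ i j k : ℤ, i ≤ M → 1 ≤ j → 1 ≤ k →
      g i j (k+1) - g i k (j+1) + g (i-j+1) k 2 - g (i-k+1) j 2 = 0 := by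
  -- abbreviation
  set H : ℤ → ℤ → ℤ → ℝ :=
    fun a b c => g a b (c+1) - g a c (b+1) + g (a-b+1) c 2 - g (a-c+1) b 2 with hHdef
  have hHval : ∀ a b c : ℤ, H a b c = g a b (c+1) - g a c (b+1) + g (a-b+1) c 2 - g (a-c+1) b 2 :=
    fun a b c => rfl
  -- automatic vanishing
  have Ha0 : ∀ a b c : ℤ, a ≤ 0 → 1 ≤ b → 1 ≤ c → H a b c = 0 := by
    intro a b c ha hb hc
    rw [hHval, hg0 a b (c+1) (by omega), hg0 a c (b+1) (by omega),
      hg0 (a-b+1) c 2 (by omega), hg0 (a-c+1) b 2 (by omega)]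
    ring
  have HaJ : ∀ a b c : ℤ, a ≤ M → M < b → H a b c = 0 := by
    intro a b c ha hb
    rw [hHval, hg0 a b (c+1) (by omega), hg0 a c (b+1) (by omega),
      hg0 (a-b+1) c 2 (by omega), hg0 (a-c+1) b 2 (by omega)]
    ring
  have HaK : ∀ a b c : ℤ, a ≤ M → M < c → H a b c = 0 := by
    intro a b c ha hc
    rw [hHval, hg0 a b (c+1) (by omega), hg0 a c (b+1) (by omega),
      hg0 (a-b+1) c 2 (by omega), hg0 (a-c+1) b 2 (by omega)]
    ring
  -- first telescoping
  have TEL1 : ∀ (n : ℕ) (i j k : ℤ), g i j (k+n+1) - g i k (j+n+1) =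
      ∑ t ∈ Finset.range (n+1),
        (H i (j+t) (k+n-t) + g (i-k-n+t+1) (j+t) 2 - g (i-j-t+1) (k+n-t) 2) := by
    intro n i j k
    have h0 := Finset.sum_range_sub' (fun t : ℕ => g i (j+(t:ℤ)) (k+(n:ℤ)+1-t)) (n+1)
    have e0 : g i (j+((0:ℕ):ℤ)) (k+(n:ℤ)+1-((0:ℕ):ℤ)) = g i j (k+n+1) :=
      gc g rfl (by push_cast; ring) (by push_cast; ring)
    have e1 : g i (j+((n+1:ℕ):ℤ)) (k+(n:ℤ)+1-((n+1:ℕ):ℤ)) = g i k (j+n+1) := by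
      rw [gc g (rfl : i = i) (show (j+((n+1:ℕ):ℤ)) = j+(n:ℤ)+1 by push_cast; ring)
        (show k+(n:ℤ)+1-((n+1:ℕ):ℤ) = k by push_cast; ring)]
      exact hgsym i (j+(n:ℤ)+1) k
    rw [e0, e1] at h0
    rw [← h0]
    apply Finset.sum_congr rfl
    intro t _
    rw [hHval]
    have c1 : g i (j+(t:ℤ)) (k+(n:ℤ)-t+1) = g i (j+(t:ℤ)) (k+(n:ℤ)+1-t) :=
      gc g rfl rfl (by ring)
    have c2 : g i (k+(n:ℤ)-t) (j+(t:ℤ)+1) = g i (j+((t+1:ℕ):ℤ)) (k+(n:ℤ)+1-((t+1:ℕ):ℤ)) := by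
      rw [hgsym]
      exact gc g rfl (by push_cast; ring) (by push_cast; ring)
    have c3 : g (i-(j+(t:ℤ))+1) (k+(n:ℤ)-t) 2 = g (i-j-t+1) (k+(n:ℤ)-t) 2 :=
      gc g (by ring) rfl rfl
    have c4 : g (i-(k+(n:ℤ)-t)+1) (j+(t:ℤ)) 2 = g (i-k-n+t+1) (j+(t:ℤ)) 2 :=
      gc g (by ring) rfl rfl
    rw [c1, c2, c3, c4]
    ring
  -- second telescoping
  have TEL2 : ∀ (n : ℕ) (a c : ℤ), g a c ((n:ℤ)+2) = g a (c+n) 2 +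
      ∑ t ∈ Finset.range n,
        (-(H a ((n:ℤ)+1-t) (c+t)) + g (a-n+t) (c+t) 2 - g (a-c-t+1) ((n:ℤ)+1-t) 2) := by
    intro n a c
    have h0 := Finset.sum_range_sub' (fun t : ℕ => g a (c+(t:ℤ)) ((n:ℤ)+2-t)) n
    have e0 : g a (c+((0:ℕ):ℤ)) ((n:ℤ)+2-((0:ℕ):ℤ)) = g a c ((n:ℤ)+2) :=
      gc g rfl (by push_cast; ring) (by push_cast; ring)
    have e1 : g a (c+((n:ℕ):ℤ)) ((n:ℤ)+2-((n:ℕ):ℤ)) = g a (c+n) 2 :=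
      gc g rfl rfl (by push_cast; ring)
    rw [e0, e1] at h0
    have h2 : ∑ t ∈ Finset.range n, (g a (c+(t:ℤ)) ((n:ℤ)+2-t) - g a (c+((t+1:ℕ):ℤ)) ((n:ℤ)+2-((t+1:ℕ):ℤ)))
        = ∑ t ∈ Finset.range n,
        (-(H a ((n:ℤ)+1-t) (c+t)) + g (a-n+t) (c+t) 2 - g (a-c-t+1) ((n:ℤ)+1-t) 2) := by
      apply Finset.sum_congr rfl
      intro t _
      rw [hHval]
      have c1 : g a ((n:ℤ)+1-t) (c+(t:ℤ)+1) = g a (c+((t+1:ℕ):ℤ)) ((n:ℤ)+2-((t+1:ℕ):ℤ)) := by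
        rw [hgsym]
        exact gc g rfl (by push_cast; ring) (by push_cast; ring)
      have c2 : g a (c+(t:ℤ)) ((n:ℤ)+1-t+1) = g a (c+(t:ℤ)) ((n:ℤ)+2-t) :=
        gc g rfl rfl (by ring)
      have c3 : g (a-((n:ℤ)+1-t)+1) (c+(t:ℤ)) 2 = g (a-n+t) (c+(t:ℤ)) 2 :=
        gc g (by ring) rfl rfl
      have c4 : g (a-(c+(t:ℤ))+1) ((n:ℤ)+1-t) 2 = g (a-c-t+1) ((n:ℤ)+1-t) 2 :=
        gc g (by ring) rfl rfl
      rw [c1, c2, c3, c4]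
      ring
    rw [h2] at h0
    linarith [h0]
  -- main graded induction
  have main : ∀ n : ℕ, ∀ i j k : ℤ, i ≤ M → 1 ≤ j → 1 ≤ k → 2*M - n ≤ j + k - i →
      H i j k = 0 := by
    intro n
    induction n with
    | zero =>
      intro i j k hi hj hk hd
      rcases le_or_gt i 0 with h0 | h0
      · exact Ha0 i j k h0 hj hk
      · rcases le_or_gt j M with hJ | hJ
        · exact HaK i j k hi (by omega)
        · exact HaJ i j k hi hJ
    | succ n ih =>
      intro i j k hi hj hk hd
      rcases le_or_gt (2*M - n) (j+k-i) with hge | hlt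
      · exact ih i j k hi hj hk hge
      rcases le_or_gt i 0 with h0 | h0
      · exact Ha0 i j k h0 hj hk
      rcases lt_or_ge M j with hJ | hJ
      · exact HaJ i j k hi hJ
      rcases lt_or_ge M k with hK | hK
      · exact HaK i j k hi hK
      have hstar' := hstar i j k h0 hi hj hJ hk hK
      have hsplit : Finset.Icc (1:ℤ) M = insert 1 (insert 2 (Finset.Icc 3 M)) := by
        ext t
        simp only [Finset.mem_Icc, Finset.mem_insert]
        omega
      have h1mem : (1:ℤ) ∉ insert 2 (Finset.Icc 3 M) := by
        simp only [Finset.mem_insert, Finset.mem_Icc]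
        omega
      have h2mem : (2:ℤ) ∉ Finset.Icc 3 M := by
        simp only [Finset.mem_Icc]; omega
      rw [hsplit, Finset.sum_insert h1mem, Finset.sum_insert h2mem] at hstar'
      -- the s = 1 term vanishes
      have hterm1 : (g i j (k+1-1) - g i k (j+1-1) + g (i-j+1) k 1 - g (i-k+1) j 1) * Xa 1 = 0 := by
        rw [gc g (rfl : i = i) (rfl : j = j) (show k+1-1 = k by ring),
          gc g (rfl : i = i) (rfl : k = k) (show j+1-1 = j by ring),
          hpsi1 i j k hi hj hk, hgsym i j k]
        ring
      -- the s ≥ 3 terms vanish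
      have hterm3 : ∑ s ∈ Finset.Icc (3:ℤ) M,
          (g i j (k+s-1) - g i k (j+s-1) + g (i-j+1) k s - g (i-k+1) j s) * Xa s = 0 := by
        apply Finset.sum_eq_zero
        intro s hs
        rw [Finset.mem_Icc] at hs
        set p : ℕ := (s-2).toNat with hp
        have hsp : s = (p:ℤ) + 2 := by omega
        have hp1 : 1 ≤ p := by omega
        -- rewrite the four g-terms
        have eA : g i j (k+s-1) = g i j (k+(p:ℤ)+1) := gc g rfl rfl (by omega)
        have eB : g i k (j+s-1) = g i k (j+(p:ℤ)+1) := gc g rfl rfl (by omega)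
        have eC : g (i-j+1) k s = g (i-j+1) k ((p:ℤ)+2) := gc g rfl rfl (by omega)
        have eD : g (i-k+1) j s = g (i-k+1) j ((p:ℤ)+2) := gc g rfl rfl (by omega)
        rw [eA, eB, eC, eD, TEL1 p i j k, TEL2 p (i-j+1) k, TEL2 p (i-k+1) j]
        -- kill all H-terms using the induction hypothesis
        have z1 : ∑ t ∈ Finset.range (p+1),
            (H i (j+t) (k+(p:ℤ)-t) + g (i-k-(p:ℤ)+t+1) (j+t) 2 - g (i-j-t+1) (k+(p:ℤ)-t) 2)
            = ∑ t ∈ Finset.range (p+1), (g (i-k-(p:ℤ)+t+1) (j+t) 2 - g (i-j-t+1) (k+(p:ℤ)-t) 2) := by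
          apply Finset.sum_congr rfl
          intro t ht
          rw [Finset.mem_range] at ht
          rw [ih i (j+t) (k+(p:ℤ)-t) hi (by omega) (by omega) (by omega)]
          ring
        have z2 : ∑ t ∈ Finset.range p,
            (-(H (i-j+1) ((p:ℤ)+1-t) (k+t)) + g (i-j+1-(p:ℤ)+t) (k+t) 2 - g ((i-j+1)-k-t+1) ((p:ℤ)+1-t) 2)
            = ∑ t ∈ Finset.range p, (g (i-j+1-(p:ℤ)+t) (k+t) 2 - g ((i-j+1)-k-t+1) ((p:ℤ)+1-t) 2) := by
          apply Finset.sum_congr rfl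
          intro t ht
          rw [Finset.mem_range] at ht
          rw [ih (i-j+1) ((p:ℤ)+1-t) (k+t) (by omega) (by omega) (by omega) (by omega)]
          ring
        have z3 : ∑ t ∈ Finset.range p,
            (-(H (i-k+1) ((p:ℤ)+1-t) (j+t)) + g (i-k+1-(p:ℤ)+t) (j+t) 2 - g ((i-k+1)-j-t+1) ((p:ℤ)+1-t) 2)
            = ∑ t ∈ Finset.range p, (g (i-k+1-(p:ℤ)+t) (j+t) 2 - g ((i-k+1)-j-t+1) ((p:ℤ)+1-t) 2) := by
          apply Finset.sum_congr rfl
          intro t ht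
          rw [Finset.mem_range] at ht
          rw [ih (i-k+1) ((p:ℤ)+1-t) (j+t) (by omega) (by omega) (by omega) (by omega)]
          ring
        rw [z1, z2, z3]
        -- now pure cancellation of the 2-form sums
        have split1 : ∑ t ∈ Finset.range (p+1), (g (i-k-(p:ℤ)+t+1) (j+t) 2 - g (i-j-t+1) (k+(p:ℤ)-t) 2)
            = (∑ t ∈ Finset.range p, g (i-k-(p:ℤ)+t+1) (j+(t:ℤ)) 2) + g (i-k+1) (j+(p:ℤ)) 2
              - ((∑ t ∈ Finset.range p, g (i-j-(p:ℤ)+t+1) (k+(t:ℤ)) 2) + g (i-j+1) (k+(p:ℤ)) 2) := by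
          rw [Finset.sum_sub_distrib]
          have r1 : g (i-k-(p:ℤ)+(p:ℤ)+1) (j+(p:ℤ)) 2 = g (i-k+1) (j+(p:ℤ)) 2 := gc g (by ring) rfl rfl
          have r2 : ∑ t ∈ Finset.range (p+1), g (i-j-(t:ℤ)+1) (k+(p:ℤ)-t) 2
              = ∑ t ∈ Finset.range (p+1), g (i-j-(p:ℤ)+(t:ℤ)+1) (k+(t:ℤ)) 2 := by
            calc ∑ t ∈ Finset.range (p+1), g (i-j-(t:ℤ)+1) (k+(p:ℤ)-t) 2
                = ∑ t ∈ Finset.range (p+1),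
                    g (i-j-((p+1-1-t : ℕ):ℤ)+1) (k+(p:ℤ)-((p+1-1-t : ℕ):ℤ)) 2 :=
                  (Finset.sum_range_reflect
                    (fun t : ℕ => g (i-j-(t:ℤ)+1) (k+(p:ℤ)-t) 2) (p+1)).symm
              _ = ∑ t ∈ Finset.range (p+1), g (i-j-(p:ℤ)+(t:ℤ)+1) (k+(t:ℤ)) 2 := by
                  apply Finset.sum_congr rfl
                  intro t ht
                  rw [Finset.mem_range] at ht
                  exact gc g (by omega) (by omega) rfl
          rw [r2, Finset.sum_range_succ, Finset.sum_range_succ, r1]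
          have r3 : g (i-j-(p:ℤ)+(p:ℤ)+1) (k+(p:ℤ)) 2 = g (i-j+1) (k+(p:ℤ)) 2 := gc g (by ring) rfl rfl
          rw [r3]
        rw [split1, Finset.sum_sub_distrib, Finset.sum_sub_distrib]
        have m1 : ∑ t ∈ Finset.range p, g (i-j+1-(p:ℤ)+t) (k+(t:ℤ)) 2
            = ∑ t ∈ Finset.range p, g (i-j-(p:ℤ)+(t:ℤ)+1) (k+(t:ℤ)) 2 := by
          apply Finset.sum_congr rfl
          intro t _
          exact gc g (by ring) rfl rfl
        have m2 : ∑ t ∈ Finset.range p, g (i-k+1-(p:ℤ)+t) (j+(t:ℤ)) 2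
            = ∑ t ∈ Finset.range p, g (i-k-(p:ℤ)+(t:ℤ)+1) (j+(t:ℤ)) 2 := by
          apply Finset.sum_congr rfl
          intro t _
          exact gc g (by ring) rfl rfl
        have m3 : ∑ t ∈ Finset.range p, g ((i-j+1)-k-(t:ℤ)+1) ((p:ℤ)+1-t) 2
            = ∑ t ∈ Finset.range p, g ((i-k+1)-j-(t:ℤ)+1) ((p:ℤ)+1-t) 2 := by
          apply Finset.sum_congr rfl
          intro t _
          exact gc g (by ring) rfl rfl
        rw [m1, m2, m3]
        ring
      rw [hterm1, hterm3] at hstar'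
      have hterm2 : g i j (k+2-1) - g i k (j+2-1) + g (i-j+1) k 2 - g (i-k+1) j 2 = H i j k := by
        rw [hHval, gc g (rfl : i = i) (rfl : j = j) (show k+2-1 = k+1 by ring),
          gc g (rfl : i = i) (rfl : k = k) (show j+2-1 = j+1 by ring)]
      rw [hterm2] at hstar'
      have : H i j k * Xa 2 = 0 := by linarith
      rcases mul_eq_zero.mp this with h | h
      · exact h
      · exact absurd h hX2
  intro i j k hi hj hk
  have := main (2*M - (j+k-i)).toNat i j k hi hj hk (by omega)
  rw [hHval] at this
  exact this

private lemma gc3 (u : ℤ → ℤ → ℤ → ℝ) {a b c a' b' c' : ℤ}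
    (h1 : a = a') (h2 : b = b') (h3 : c = c') : u a b c = u a' b' c' := by
  rw [h1, h2, h3]

private lemma stepB (M Mσ : ℤ) (hM : 2 ≤ M) (hMσ : 1 ≤ Mσ)
    (u : ℤ → ℤ → ℤ → ℝ) (Xa Xσ : ℤ → ℝ) (hcne : Xσ 1 - Xa 1 ≠ 0)
    (hu0 : ∀ a b c : ℤ, ¬(1 ≤ a ∧ a ≤ M ∧ 1 ≤ b ∧ b ≤ M ∧ 1 ≤ c ∧ c ≤ Mσ) → u a b c = 0)
    (hclub : ∀ i j k : ℤ, 1 ≤ i → i ≤ M → 2 ≤ j → j ≤ M → 1 ≤ k → k ≤ Mσ →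
      ∑ s ∈ Finset.Icc (1:ℤ) Mσ, (u i j (k+s-1) - u (i-1) (j-1) (k+s-1)) * Xσ s
      = ∑ s ∈ Finset.Icc (1:ℤ) M, (u i (j+s-1) k - u (i-1) (j+s-2) k) * Xa s) :
    (∀ i j k : ℤ, i ≤ M → 2 ≤ j → j ≤ M → u i j k = u (i-1) (j-1) k)
    ∧ (∀ a b c : ℤ, a < b → u a b c = 0) := by
  have key : ∀ N : ℕ, ∀ i : ℤ, i ≤ (N:ℤ) → ∀ j k : ℤ, i ≤ M → 2 ≤ j → j ≤ M →
      1 ≤ k → k ≤ Mσ → u i j k - u (i-1) (j-1) k = 0 := by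
    intro N
    induction N with
    | zero =>
      intro i hiN j k _ _ _ _ _
      rw [hu0 i j k (by omega), hu0 (i-1) (j-1) k (by omega)]
      ring
    | succ N ih =>
      intro i hiN j k hiM hj2 hjM hk1 hkM
      rcases le_or_gt i (N:ℤ) with hle | hgt
      · exact ih i hle j k hiM hj2 hjM hk1 hkM
      have hi1 : 1 ≤ i := by omega
      have Z : ∀ p : ℕ, ∀ a b c : ℤ, a ≤ (p:ℤ) → a ≤ i-1 → a < b → u a b c = 0 := by
        intro p
        induction p with
        | zero =>
          intro a b c hap _ hab
          exact hu0 a b c (by omega)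
        | succ p ihp =>
          intro a b c hap hai hab
          rcases le_or_gt a (p:ℤ) with hle2 | hgt2
          · exact ihp a b c hle2 hai hab
          rcases le_or_gt b M with hbM | hbM
          · rcases le_or_gt 1 c with hc1 | hc1
            · rcases le_or_gt c Mσ with hcM | hcM
              · have hD := ih a (by omega) b c (by omega) (by omega) hbM hc1 hcM
                have e : u a b c = u (a-1) (b-1) c := by linarith
                rw [e]
                exact ihp (a-1) (b-1) c (by omega) (by omega) (by omega)
              · exact hu0 a b c (by omega)
            · exact hu0 a b c (by omega)
          · exact hu0 a b c (by omega)
      have inner : ∀ q : ℕ, ∀ j' k' : ℤ, 2 ≤ j' → j' ≤ M → 1 ≤ k' → k' ≤ Mσ →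
          (M - j' + (Mσ - k')).toNat < q → u i j' k' - u (i-1) (j'-1) k' = 0 := by
        intro q
        induction q with
        | zero => intro j' k' _ _ _ _ h; omega
        | succ q ihq =>
          intro j' k' hj'2 hj'M hk'1 hk'M hslack
          have club := hclub i j' k' hi1 hiM hj'2 hj'M hk'1 hk'M
          have hsL : Finset.Icc (1:ℤ) Mσ = insert 1 (Finset.Icc 2 Mσ) := by
            ext t
            simp only [Finset.mem_Icc, Finset.mem_insert]
            omega
          have hsR : Finset.Icc (1:ℤ) M = insert 1 (Finset.Icc 2 M) := by
            ext t
            simp only [Finset.mem_Icc, Finset.mem_insert]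
            omega
          have h1L : (1:ℤ) ∉ Finset.Icc (2:ℤ) Mσ := by
            simp only [Finset.mem_Icc]; omega
          have h1R : (1:ℤ) ∉ Finset.Icc (2:ℤ) M := by
            simp only [Finset.mem_Icc]; omega
          rw [hsL, Finset.sum_insert h1L] at club
          rw [hsR, Finset.sum_insert h1R] at club
          have tL : ∑ s ∈ Finset.Icc (2:ℤ) Mσ,
              (u i j' (k'+s-1) - u (i-1) (j'-1) (k'+s-1)) * Xσ s = 0 := by
            apply Finset.sum_eq_zero
            intro s hs
            rw [Finset.mem_Icc] at hs
            rcases le_or_gt (k'+s-1) Mσ with h | h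
            · rw [show u i j' (k'+s-1) - u (i-1) (j'-1) (k'+s-1) = 0 from
                ihq j' (k'+s-1) hj'2 hj'M (by omega) h (by omega)]
              ring
            · rw [hu0 i j' (k'+s-1) (by omega), hu0 (i-1) (j'-1) (k'+s-1) (by omega)]
              ring
          have tR : ∑ s ∈ Finset.Icc (2:ℤ) M,
              (u i (j'+s-1) k' - u (i-1) (j'+s-2) k') * Xa s = 0 := by
            apply Finset.sum_eq_zero
            intro s hs
            rw [Finset.mem_Icc] at hs
            rcases lt_trichotomy (j'+s-1) (M+1) with h | h | h
            · have hq := ihq (j'+s-1) k' (by omega) (by omega) hk'1 hk'M (by omega)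
              rw [gc3 u (rfl : i-1 = i-1) (show j'+s-2 = (j'+s-1)-1 by ring) (rfl : k' = k')]
              rw [hq]
              ring
            · rw [hu0 i (j'+s-1) k' (by omega),
                Z (i-1).toNat (i-1) (j'+s-2) k' (Int.self_le_toNat (i-1)) (le_refl (i-1))
                  (by omega)]
              ring
            · rw [hu0 i (j'+s-1) k' (by omega), hu0 (i-1) (j'+s-2) k' (by omega)]
              ring
          rw [tL, tR] at club
          have e1 : u i j' (k'+1-1) = u i j' k' := gc3 u rfl rfl (by ring)
          have e2 : u (i-1) (j'-1) (k'+1-1) = u (i-1) (j'-1) k' := gc3 u rfl rfl (by ring)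
          have e3 : u i (j'+1-1) k' = u i j' k' := gc3 u rfl (by ring) rfl
          have e4 : u (i-1) (j'+1-2) k' = u (i-1) (j'-1) k' := gc3 u rfl (by ring) rfl
          rw [e1, e2, e3, e4] at club
          have hz : (u i j' k' - u (i-1) (j'-1) k') * (Xσ 1 - Xa 1) = 0 := by
            linear_combination club
          rcases mul_eq_zero.mp hz with h | h
          · exact h
          · exact absurd h hcne
      exact inner ((M - j + (Mσ - k)).toNat + 1) j k hj2 hjM hk1 hkM (by omega)
  have shift : ∀ i j k : ℤ, i ≤ M → 2 ≤ j → j ≤ M → u i j k = u (i-1) (j-1) k := by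
    intro i j k hiM hj2 hjM
    rcases le_or_gt 1 k with hk1 | hk1
    · rcases le_or_gt k Mσ with hkM | hkM
      · have := key i.toNat i (Int.self_le_toNat i) j k hiM hj2 hjM hk1 hkM
        linarith
      · rw [hu0 i j k (by omega), hu0 (i-1) (j-1) k (by omega)]
    · rw [hu0 i j k (by omega), hu0 (i-1) (j-1) k (by omega)]
  refine ⟨shift, ?_⟩
  have Zfull : ∀ p : ℕ, ∀ a b c : ℤ, a ≤ (p:ℤ) → a < b → u a b c = 0 := by
    intro p
    induction p with
    | zero => intro a b c hap hab; exact hu0 a b c (by omega)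
    | succ p ihp =>
      intro a b c hap hab
      rcases le_or_gt a (p:ℤ) with hle | hgt
      · exact ihp a b c hle hab
      rcases le_or_gt b M with hbM | hbM
      · rw [shift a b c (by omega) (by omega) hbM]
        exact ihp (a-1) (b-1) c (by omega) (by omega)
      · exact hu0 a b c (by omega)
  exact fun a b c hab => Zfull a.toNat a b c (Int.self_le_toNat a) hab

theorem statement3
    {r : ℕ} (hr : 1 ≤ r) (m : Fin r → ℕ) (hm : ∀ α, 1 ≤ m α)
    (U : Set (Dom r m)) (hU : IsOpen U)
    (Γ : Fin r → ℤ → Fin r → ℤ → Fin r → ℤ → Dom r m → ℝ)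
    (X : Fin r → ℤ → Dom r m → ℝ)
    (hΓs : ∀ α i β j γ k, ContDiffOn ℝ (⊤ : ℕ∞) (Γ α i β j γ k) U)
    (hXs : ∀ α i, ContDiffOn ℝ (⊤ : ℕ∞) (X α i) U)
    (hΓ0 : ∀ α i β j γ k, ¬(InR m α i ∧ InR m β j ∧ InR m γ k) → Γ α i β j γ k = 0)
    (hX0 : ∀ α i, ¬ InR m α i → X α i = 0)
    (hΓsym : ∀ α i β j γ k, Γ α i β j γ k = Γ α i γ k β j)
    (hflat : ∀ α i β j, ∀ x ∈ U, (∑ σ : Fin r, Γ α i β j σ 1 x) = 0)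
    (hX1 : ∀ α β, α ≠ β → ∀ x ∈ U, X α 1 x ≠ X β 1 x)
    (hX2 : ∀ α, 2 ≤ m α → ∀ x ∈ U, X α 2 x ≠ 0)
    (hdV : ∀ α i β j γ k, InR m α i → InR m β j → InR m γ k → ∀ x ∈ U,
      pd β j (Vcomp X α i γ k) x - pd γ k (Vcomp X α i β j) x
        + sumIdx m (fun σ s =>
            Γ α i β j σ s x * Vcomp X σ s γ k x
              - Γ α i γ k σ s x * Vcomp X σ s β j x) = 0)
    -- Σ_{s(σ)} A^{i(α)}_{j(β)k(γ)s(σ)} X^{s(σ)} = 0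
    (hA : ∀ α i β j γ k, InR m α i → InR m β j → InR m γ k → ∀ x ∈ U,
      sumIdx m (fun σ s => Atens Γ α i β j γ k σ s x * X σ s x) = 0) :
    ∀ α, 2 ≤ m α → ∀ i j k, InR m α i →
      2 ≤ j → j ≤ (m α : ℤ) → 2 ≤ k → k ≤ (m α : ℤ) →
      ∀ x ∈ U,
        Γ α i α j α (k + 1) x - Γ α i α (j + 1) α k x
          = Γ α (i - k + 1) α 2 α j x - Γ α (i - j + 1) α 2 α k x := by
  intro α hmα i j k hiR hj2 hjM hk2 hkM x hx
  have hM2 : 2 ≤ ((m α : ℕ) : ℤ) := by exact_mod_cast hmα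
  -- pointwise versions of the hypotheses at x
  have hΓz : ∀ (β : Fin r) (a : ℤ) (γ : Fin r) (b : ℤ) (δ : Fin r) (c : ℤ),
      ¬(InR m β a ∧ InR m γ b ∧ InR m δ c) → Γ β a γ b δ c x = 0 := by
    intro β a γ b δ c hcon
    rw [hΓ0 β a γ b δ c hcon]
    rfl
  have hΓsx : ∀ (β : Fin r) (a : ℤ) (γ : Fin r) (b : ℤ) (δ : Fin r) (c : ℤ),
      Γ β a γ b δ c x = Γ β a δ c γ b x := by
    intro β a γ b δ c
    rw [hΓsym β a γ b δ c]
  -- (E1) in-block equations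
  have E1 : ∀ a b c : ℤ, 1 ≤ a → a ≤ ((m α : ℕ) : ℤ) → 1 ≤ b → b ≤ ((m α : ℕ) : ℤ) →
      1 ≤ c → c ≤ ((m α : ℕ) : ℤ) →
      (∑ s ∈ Finset.Icc (1:ℤ) ((m α : ℕ) : ℤ), Γ α a α b α (c+s-1) x * X α s x)
      - sumIdx m (fun σ s => Γ α (a-c+1) α b σ s x * X σ s x)
      - (∑ s ∈ Finset.Icc (1:ℤ) ((m α : ℕ) : ℤ), Γ α a α c α (b+s-1) x * X α s x)
      + sumIdx m (fun σ s => Γ α (a-b+1) α c σ s x * X σ s x) = 0 := by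
    intro a b c ha1 haM hb1 hbM hc1 hcM
    have h := DHaux.AX4 Γ X hΓ0 x α a α b α c ⟨ha1, haM⟩ ⟨hb1, hbM⟩ ⟨hc1, hcM⟩
      (hA α a α b α c ⟨ha1, haM⟩ ⟨hb1, hbM⟩ ⟨hc1, hcM⟩ x hx)
    rw [if_pos rfl, if_pos rfl] at h
    exact h
  -- (E2) mixed equations, extended to a ≤ 0
  have E2 : ∀ σ : Fin r, σ ≠ α → ∀ a b c : ℤ, a ≤ ((m α : ℕ) : ℤ) → 1 ≤ b →
      b ≤ ((m α : ℕ) : ℤ) → 1 ≤ c → c ≤ ((m σ : ℕ) : ℤ) →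
      (∑ s ∈ Finset.Icc (1:ℤ) ((m σ : ℕ) : ℤ), Γ α a α b σ (c+s-1) x * X σ s x)
      - (∑ s ∈ Finset.Icc (1:ℤ) ((m α : ℕ) : ℤ), Γ α a α (b+s-1) σ c x * X α s x)
      + sumIdx m (fun σ' s => Γ α (a-b+1) σ c σ' s x * X σ' s x) = 0 := by
    intro σ hσ a b c haM hb1 hbM hc1 hcM
    rcases le_or_gt 1 a with ha1 | ha1
    · have h := DHaux.AX4 Γ X hΓ0 x α a α b σ c ⟨ha1, haM⟩ ⟨hb1, hbM⟩ ⟨hc1, hcM⟩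
        (hA α a α b σ c ⟨ha1, haM⟩ ⟨hb1, hbM⟩ ⟨hc1, hcM⟩ x hx)
      rw [if_neg (fun hh => hσ hh.symm), if_pos rfl] at h
      have e : ∑ s ∈ Finset.Icc (1:ℤ) ((m α : ℕ) : ℤ), Γ α a σ c α (b+s-1) x * X α s x
          = ∑ s ∈ Finset.Icc (1:ℤ) ((m α : ℕ) : ℤ), Γ α a α (b+s-1) σ c x * X α s x := by
        apply Finset.sum_congr rfl
        intro s _
        rw [hΓsx α a σ c α (b+s-1)]
      rw [e] at h
      linarith
    · have z1 : ∑ s ∈ Finset.Icc (1:ℤ) ((m σ : ℕ) : ℤ), Γ α a α b σ (c+s-1) x * X σ s x = 0 := by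
        apply Finset.sum_eq_zero
        intro s _
        rw [hΓz α a α b σ (c+s-1) (fun hcon => absurd hcon.1.1 (by omega)), zero_mul]
      have z2 : ∑ s ∈ Finset.Icc (1:ℤ) ((m α : ℕ) : ℤ), Γ α a α (b+s-1) σ c x * X α s x = 0 := by
        apply Finset.sum_eq_zero
        intro s _
        rw [hΓz α a α (b+s-1) σ c (fun hcon => absurd hcon.1.1 (by omega)), zero_mul]
      have z3 : sumIdx m (fun σ' s => Γ α (a-b+1) σ c σ' s x * X σ' s x) = 0 := by
        apply DHaux.sumIdx_eq_zero
        intro σ' s _ _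
        rw [hΓz α (a-b+1) σ c σ' s (fun hcon => absurd hcon.1.1 (by omega)), zero_mul]
      rw [z1, z2, z3]
      ring
  -- Step B consequences, for each σ ≠ α
  have SB : ∀ σ : Fin r, σ ≠ α →
      (∀ a b c : ℤ, a ≤ ((m α : ℕ) : ℤ) → 2 ≤ b → b ≤ ((m α : ℕ) : ℤ) →
        Γ α a α b σ c x = Γ α (a-1) α (b-1) σ c x)
      ∧ (∀ a b c : ℤ, a < b → Γ α a α b σ c x = 0) := by
    intro σ hσ
    have hMσ : 1 ≤ ((m σ : ℕ) : ℤ) := by exact_mod_cast hm σ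
    have hcne : X σ 1 x - X α 1 x ≠ 0 := sub_ne_zero.mpr (hX1 σ α hσ x hx)
    have hu0 : ∀ a b c : ℤ,
        ¬(1 ≤ a ∧ a ≤ ((m α : ℕ) : ℤ) ∧ 1 ≤ b ∧ b ≤ ((m α : ℕ) : ℤ) ∧ 1 ≤ c ∧ c ≤ ((m σ : ℕ) : ℤ)) →
        Γ α a α b σ c x = 0 := by
      intro a b c h
      exact hΓz α a α b σ c (fun hcon =>
        h ⟨hcon.1.1, hcon.1.2, hcon.2.1.1, hcon.2.1.2, hcon.2.2.1, hcon.2.2.2⟩)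
    have hclub : ∀ a b c : ℤ, 1 ≤ a → a ≤ ((m α : ℕ) : ℤ) → 2 ≤ b → b ≤ ((m α : ℕ) : ℤ) →
        1 ≤ c → c ≤ ((m σ : ℕ) : ℤ) →
        ∑ s ∈ Finset.Icc (1:ℤ) ((m σ : ℕ) : ℤ),
          (Γ α a α b σ (c+s-1) x - Γ α (a-1) α (b-1) σ (c+s-1) x) * X σ s x
        = ∑ s ∈ Finset.Icc (1:ℤ) ((m α : ℕ) : ℤ),
          (Γ α a α (b+s-1) σ c x - Γ α (a-1) α (b+s-2) σ c x) * X α s x := by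
      intro a b c ha1 haM hb2 hbM hc1 hcM
      have h1 := E2 σ hσ a b c haM (by omega) hbM hc1 hcM
      have h2 := E2 σ hσ (a-1) (b-1) c (by omega) (by omega) (by omega) hc1 hcM
      have hW : sumIdx m (fun σ' s => Γ α ((a-1)-(b-1)+1) σ c σ' s x * X σ' s x)
          = sumIdx m (fun σ' s => Γ α (a-b+1) σ c σ' s x * X σ' s x) := by
        apply DHaux.sumIdx_congr
        intro σ' s _ _
        rw [show (a-1)-(b-1)+1 = a-b+1 by ring]
      rw [hW] at h2
      have h2' : ∑ s ∈ Finset.Icc (1:ℤ) ((m α : ℕ) : ℤ), Γ α (a-1) α ((b-1)+s-1) σ c x * X α s x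
          = ∑ s ∈ Finset.Icc (1:ℤ) ((m α : ℕ) : ℤ), Γ α (a-1) α (b+s-2) σ c x * X α s x := by
        apply Finset.sum_congr rfl
        intro s _
        rw [show (b-1)+s-1 = b+s-2 by ring]
      rw [h2'] at h2
      have dL : ∑ s ∈ Finset.Icc (1:ℤ) ((m σ : ℕ) : ℤ),
          (Γ α a α b σ (c+s-1) x - Γ α (a-1) α (b-1) σ (c+s-1) x) * X σ s x
          = (∑ s ∈ Finset.Icc (1:ℤ) ((m σ : ℕ) : ℤ), Γ α a α b σ (c+s-1) x * X σ s x)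
          - ∑ s ∈ Finset.Icc (1:ℤ) ((m σ : ℕ) : ℤ), Γ α (a-1) α (b-1) σ (c+s-1) x * X σ s x := by
        rw [← Finset.sum_sub_distrib]
        apply Finset.sum_congr rfl
        intro s _
        ring
      have dR : ∑ s ∈ Finset.Icc (1:ℤ) ((m α : ℕ) : ℤ),
          (Γ α a α (b+s-1) σ c x - Γ α (a-1) α (b+s-2) σ c x) * X α s x
          = (∑ s ∈ Finset.Icc (1:ℤ) ((m α : ℕ) : ℤ), Γ α a α (b+s-1) σ c x * X α s x)
          - ∑ s ∈ Finset.Icc (1:ℤ) ((m α : ℕ) : ℤ), Γ α (a-1) α (b+s-2) σ c x * X α s x := by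
        rw [← Finset.sum_sub_distrib]
        apply Finset.sum_congr rfl
        intro s _
        ring
      rw [dL, dR]
      linarith
    exact stepB ((m α : ℕ) : ℤ) ((m σ : ℕ) : ℤ) hM2 hMσ
      (fun a b c => Γ α a α b σ c x) (fun s => X α s x) (fun s => X σ s x)
      hcne hu0 hclub
  -- the function  L a b = Γ α a α b α 1 x  via flatness
  have hflatx : ∀ a b : ℤ, Γ α a α b α 1 x
      = - ∑ σ ∈ Finset.univ.erase α, Γ α a α b σ 1 x := by
    intro a b
    have h0 := hflat α a α b x hx
    have h1 := Finset.sum_erase_add Finset.univ (fun σ => Γ α a α b σ 1 x) (Finset.mem_univ α)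
    linarith [h0, h1]
  have L1 : ∀ a b : ℤ, a < b → Γ α a α b α 1 x = 0 := by
    intro a b hab
    rw [hflatx a b, neg_eq_zero]
    apply Finset.sum_eq_zero
    intro σ hσm
    exact (SB σ (Finset.ne_of_mem_erase hσm)).2 a b 1 hab
  have L2 : ∀ a b : ℤ, a ≤ ((m α : ℕ) : ℤ) → 2 ≤ b →
      Γ α a α b α 1 x = Γ α (a-1) α (b-1) α 1 x := by
    intro a b haM hb2
    rcases le_or_gt b ((m α : ℕ) : ℤ) with hbM | hbM
    · rw [hflatx a b, hflatx (a-1) (b-1)]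
      congr 1
      apply Finset.sum_congr rfl
      intro σ hσm
      exact (SB σ (Finset.ne_of_mem_erase hσm)).1 a b 1 haM hb2 hbM
    · rcases lt_or_ge ((m α : ℕ) : ℤ) (b-1) with hb1M | hb1M
      · rw [hΓz α a α b α 1 (fun hcon => absurd hcon.2.1.2 (by omega)),
          hΓz α (a-1) α (b-1) α 1 (fun hcon => absurd hcon.2.1.2 (by omega))]
      · rw [hΓz α a α b α 1 (fun hcon => absurd hcon.2.1.2 (by omega)),
          L1 (a-1) (b-1) (by omega)]
  have Lshift : ∀ d : ℕ, ∀ a b : ℤ, a ≤ ((m α : ℕ) : ℤ) → 1 ≤ b →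
      Γ α (a-(d:ℤ)) α b α 1 x = Γ α a α (b+(d:ℤ)) α 1 x := by
    intro d
    induction d with
    | zero =>
      intro a b _ _
      norm_num
    | succ d ihd =>
      intro a b haM hb1
      have e1 : Γ α (a-((d:ℤ)+1)) α b α 1 x = Γ α ((a-1)-(d:ℤ)) α b α 1 x := by
        rw [show a-((d:ℤ)+1) = (a-1)-(d:ℤ) by ring]
      have e2 := ihd (a-1) b (by omega) hb1
      have e3 := L2 a (b+(d:ℤ)+1) haM (by omega)
      have e4 : Γ α (a-1) α (b+(d:ℤ)+1-1) α 1 x = Γ α (a-1) α (b+(d:ℤ)) α 1 x := by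
        rw [show b+(d:ℤ)+1-1 = b+(d:ℤ) by ring]
      push_cast
      rw [e1, e2, show b+((d:ℤ)+1) = b+(d:ℤ)+1 by ring, e3, e4]
  -- balanced L-identity
  have Lbal : ∀ a b c s : ℤ, a ≤ ((m α : ℕ) : ℤ) → 1 ≤ b → 1 ≤ c → 1 ≤ s →
      Γ α (a-c+1) α (b+s-1) α 1 x = Γ α (a-b+1) α (c+s-1) α 1 x := by
    intro a b c s haM hb1 hc1 hs1
    rcases le_total b c with hbc | hbc
    · have hd : c - b = ((c-b).toNat : ℤ) := by omega
      have h := Lshift (c-b).toNat (a-b+1) (b+s-1) (by omega) (by omega)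
      rw [show a-b+1-((c-b).toNat : ℤ) = a-c+1 by omega,
        show b+s-1+((c-b).toNat : ℤ) = c+s-1 by omega] at h
      exact h
    · have h := Lshift (b-c).toNat (a-c+1) (c+s-1) (by omega) (by omega)
      rw [show a-c+1-((b-c).toNat : ℤ) = a-b+1 by omega,
        show c+s-1+((b-c).toNat : ℤ) = b+s-1 by omega] at h
      exact h.symm
  -- W-decomposition
  have Wform : ∀ a b : ℤ, a ≤ ((m α : ℕ) : ℤ) → 1 ≤ b → b ≤ ((m α : ℕ) : ℤ) →
      sumIdx m (fun σ s => Γ α a α b σ s x * X σ s x)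
      = (∑ s ∈ Finset.Icc (1:ℤ) ((m α : ℕ) : ℤ), Γ α a α b α s x * X α s x)
        - (∑ s ∈ Finset.Icc (1:ℤ) ((m α : ℕ) : ℤ), Γ α a α (b+s-1) α 1 x * X α s x)
        - (∑ σ ∈ Finset.univ.erase α,
            sumIdx m (fun σ' s => Γ α (a-b+1) σ 1 σ' s x * X σ' s x)) := by
    intro a b haM hb1 hbM
    have hsplit : sumIdx m (fun σ s => Γ α a α b σ s x * X σ s x)
        = (∑ σ ∈ Finset.univ.erase α,
            ∑ s ∈ Finset.Icc (1:ℤ) ((m σ : ℕ) : ℤ), Γ α a α b σ s x * X σ s x)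
          + ∑ s ∈ Finset.Icc (1:ℤ) ((m α : ℕ) : ℤ), Γ α a α b α s x * X α s x := by
      unfold sumIdx
      beta_reduce
      exact (Finset.sum_erase_add Finset.univ _ (Finset.mem_univ α)).symm
    have hper : ∀ σ ∈ Finset.univ.erase α,
        ∑ s ∈ Finset.Icc (1:ℤ) ((m σ : ℕ) : ℤ), Γ α a α b σ s x * X σ s x
        = (∑ s ∈ Finset.Icc (1:ℤ) ((m α : ℕ) : ℤ), Γ α a α (b+s-1) σ 1 x * X α s x)
          - sumIdx m (fun σ' s => Γ α (a-b+1) σ 1 σ' s x * X σ' s x) := by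
      intro σ hσm
      have hσ : σ ≠ α := Finset.ne_of_mem_erase hσm
      have hMσ : 1 ≤ ((m σ : ℕ) : ℤ) := by exact_mod_cast hm σ
      have h := E2 σ hσ a b 1 haM hb1 hbM le_rfl hMσ
      have e : ∑ s ∈ Finset.Icc (1:ℤ) ((m σ : ℕ) : ℤ), Γ α a α b σ (1+s-1) x * X σ s x
          = ∑ s ∈ Finset.Icc (1:ℤ) ((m σ : ℕ) : ℤ), Γ α a α b σ s x * X σ s x := by
        apply Finset.sum_congr rfl
        intro s _
        rw [show (1:ℤ)+s-1 = s by ring]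
      rw [e] at h
      linarith
    rw [hsplit, Finset.sum_congr rfl hper, Finset.sum_sub_distrib]
    have hcomm : ∑ σ ∈ Finset.univ.erase α,
        ∑ s ∈ Finset.Icc (1:ℤ) ((m α : ℕ) : ℤ), Γ α a α (b+s-1) σ 1 x * X α s x
        = ∑ s ∈ Finset.Icc (1:ℤ) ((m α : ℕ) : ℤ),
          ∑ σ ∈ Finset.univ.erase α, Γ α a α (b+s-1) σ 1 x * X α s x :=
      Finset.sum_comm
    have hinner : ∀ s ∈ Finset.Icc (1:ℤ) ((m α : ℕ) : ℤ),
        ∑ σ ∈ Finset.univ.erase α, Γ α a α (b+s-1) σ 1 x * X α s x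
        = -(Γ α a α (b+s-1) α 1 x * X α s x) := by
      intro s _
      rw [← Finset.sum_mul,
        show (∑ σ ∈ Finset.univ.erase α, Γ α a α (b+s-1) σ 1 x)
          = -(Γ α a α (b+s-1) α 1 x) from by linarith [hflatx a (b+s-1)]]
      ring
    rw [hcomm, Finset.sum_congr rfl hinner]
    rw [Finset.sum_neg_distrib]
    ring
  -- the (★★) family
  have star : ∀ a b c : ℤ, 1 ≤ a → a ≤ ((m α : ℕ) : ℤ) → 1 ≤ b → b ≤ ((m α : ℕ) : ℤ) →
      1 ≤ c → c ≤ ((m α : ℕ) : ℤ) →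
      ∑ s ∈ Finset.Icc (1:ℤ) ((m α : ℕ) : ℤ),
        (Γ α a α b α (c+s-1) x - Γ α a α c α (b+s-1) x
          + Γ α (a-b+1) α c α s x - Γ α (a-c+1) α b α s x) * X α s x = 0 := by
    intro a b c ha1 haM hb1 hbM hc1 hcM
    have h := E1 a b c ha1 haM hb1 hbM hc1 hcM
    have w1 := Wform (a-c+1) b (by omega) hb1 hbM
    have w2 := Wform (a-b+1) c (by omega) hc1 hcM
    have hWW : ∑ σ ∈ Finset.univ.erase α,
        sumIdx m (fun σ' s => Γ α ((a-c+1)-b+1) σ 1 σ' s x * X σ' s x)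
        = ∑ σ ∈ Finset.univ.erase α,
        sumIdx m (fun σ' s => Γ α ((a-b+1)-c+1) σ 1 σ' s x * X σ' s x) := by
      apply Finset.sum_congr rfl
      intro σ _
      apply DHaux.sumIdx_congr
      intro σ' s _ _
      rw [show (a-c+1)-b+1 = (a-b+1)-c+1 by ring]
    have hLL : ∑ s ∈ Finset.Icc (1:ℤ) ((m α : ℕ) : ℤ), Γ α (a-c+1) α (b+s-1) α 1 x * X α s x
        = ∑ s ∈ Finset.Icc (1:ℤ) ((m α : ℕ) : ℤ), Γ α (a-b+1) α (c+s-1) α 1 x * X α s x := by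
      apply Finset.sum_congr rfl
      intro s hs
      rw [Finset.mem_Icc] at hs
      rw [Lbal a b c s haM hb1 hc1 hs.1]
    have hexp : ∑ s ∈ Finset.Icc (1:ℤ) ((m α : ℕ) : ℤ),
        (Γ α a α b α (c+s-1) x - Γ α a α c α (b+s-1) x
          + Γ α (a-b+1) α c α s x - Γ α (a-c+1) α b α s x) * X α s x
        = (∑ s ∈ Finset.Icc (1:ℤ) ((m α : ℕ) : ℤ), Γ α a α b α (c+s-1) x * X α s x)
          - (∑ s ∈ Finset.Icc (1:ℤ) ((m α : ℕ) : ℤ), Γ α a α c α (b+s-1) x * X α s x)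
          + (∑ s ∈ Finset.Icc (1:ℤ) ((m α : ℕ) : ℤ), Γ α (a-b+1) α c α s x * X α s x)
          - (∑ s ∈ Finset.Icc (1:ℤ) ((m α : ℕ) : ℤ), Γ α (a-c+1) α b α s x * X α s x) := by
      rw [← Finset.sum_sub_distrib, ← Finset.sum_add_distrib, ← Finset.sum_sub_distrib]
      apply Finset.sum_congr rfl
      intro s _
      ring
    rw [hexp]
    rw [w1, w2, hWW, hLL] at h
    linarith
  -- apply step C
  have final := stepC ((m α : ℕ) : ℤ) hM2 (fun a b c => Γ α a α b α c x)
    (fun s => X α s x)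
    (fun a b c hcon => hΓz α a α b α c (fun hc2 =>
      hcon ⟨hc2.1.1, hc2.1.2, hc2.2.1.1, hc2.2.1.2, hc2.2.2.1, hc2.2.2.2⟩))
    (fun a b c => hΓsx α a α b α c)
    (fun a b c ha hb hc => by
      have h := Lbal a b c 1 ha hb hc le_rfl
      rw [show b+(1:ℤ)-1 = b by ring, show c+(1:ℤ)-1 = c by ring] at h
      exact h.symm)
    star
    (hX2 α hmα x hx)
  have hfin := final i j k hiR.2 (by omega) (by omega)
  beta_reduce at hfin
  have g1 : Γ α i α k α (j+1) x = Γ α i α (j+1) α k x := hΓsx α i α k α (j+1)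
  have g2 : Γ α (i-j+1) α k α 2 x = Γ α (i-j+1) α 2 α k x := hΓsx α (i-j+1) α k α 2
  have g3 : Γ α (i-k+1) α j α 2 x = Γ α (i-k+1) α 2 α j x := hΓsx α (i-k+1) α j α 2
  rw [g1, g2, g3] at hfin
  linarith
end

section
/- Let m ≥ 2 and let Γ^i_{jk} be real numbers defined for i, j, k ∈ {1,…,m}, symmetric in the lower indices j, k, with the convention that any symbol one of whose indices falls outside {1,…,m} equals 0. Suppose that for all i ∈ {1,…,m} and j, k ∈ {2,…,m} one has Γ^i_{j,(k+1)} − Γ^i_{(j+1),k} = Γ^{(i−k+1)}_{2,j} − Γ^{(i−j+1)}_{2,k}. Then for all i ∈ {1,…,m} and all j, k, s ∈ {2,…,m}: Γ^i_{j,(k+s−1)} − Γ^i_{(j+s−1),k} = Γ^{(i−k+1)}_{s,j} − Γ^{(i−j+1)}_{s,k}. -/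
/-- A combinatorial identity for the within-block Christoffel
symbols of a single Jordan block of size `m`: the case `s = 2` of the shift
identity propagates to all `s ∈ {2,…,m}`.  Out-of-range symbols are `0`. -/
theorem statement4 (m : ℕ) (hm : 2 ≤ m) (Γ : ℤ → ℤ → ℤ → ℝ)
    (hsym : ∀ i j k, Γ i j k = Γ i k j)
    (h0 : ∀ i j k,
      ¬((1 ≤ i ∧ i ≤ (m : ℤ)) ∧ (1 ≤ j ∧ j ≤ (m : ℤ)) ∧ (1 ≤ k ∧ k ≤ (m : ℤ))) →
      Γ i j k = 0)
    (hyp : ∀ i j k, 1 ≤ i → i ≤ (m : ℤ) → 2 ≤ j → j ≤ (m : ℤ) → 2 ≤ k → k ≤ (m : ℤ) →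
      Γ i j (k + 1) - Γ i (j + 1) k = Γ (i - k + 1) 2 j - Γ (i - j + 1) 2 k) :
    ∀ i j k s, 1 ≤ i → i ≤ (m : ℤ) → 2 ≤ j → j ≤ (m : ℤ) → 2 ≤ k → k ≤ (m : ℤ) →
      2 ≤ s → s ≤ (m : ℤ) →
      Γ i j (k + s - 1) - Γ i (j + s - 1) k = Γ (i - k + 1) s j - Γ (i - j + 1) s k := by
  have hm' : (2 : ℤ) ≤ (m : ℤ) := by exact_mod_cast hm
  -- Extended hypothesis: valid for all i ≤ m and all j, k ≥ 2.
  have H : ∀ i j k : ℤ, i ≤ (m : ℤ) → 2 ≤ j → 2 ≤ k →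
      Γ i j (k + 1) - Γ i (j + 1) k = Γ (i - k + 1) 2 j - Γ (i - j + 1) 2 k := by
    intro i j k him hj hk
    by_cases hi : 1 ≤ i
    · by_cases hjm : j ≤ (m : ℤ)
      · by_cases hkm : k ≤ (m : ℤ)
        · exact hyp i j k hi him hj hjm hk hkm
        · push_neg at hkm
          rw [h0 i j (k + 1) (by omega), h0 i (j + 1) k (by omega),
            h0 (i - k + 1) 2 j (by omega), h0 (i - j + 1) 2 k (by omega)]
      · push_neg at hjm
        rw [h0 i j (k + 1) (by omega), h0 i (j + 1) k (by omega),
          h0 (i - k + 1) 2 j (by omega), h0 (i - j + 1) 2 k (by omega)]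
    · push_neg at hi
      rw [h0 i j (k + 1) (by omega), h0 i (j + 1) k (by omega),
        h0 (i - k + 1) 2 j (by omega), h0 (i - j + 1) 2 k (by omega)]
  -- Main claim by induction on s.
  have Q : ∀ s : ℤ, 2 ≤ s → ∀ i j k : ℤ, i ≤ (m : ℤ) → 2 ≤ j → 2 ≤ k →
      Γ i j (k + s - 1) - Γ i (j + s - 1) k
        = Γ (i - k + 1) s j - Γ (i - j + 1) s k := by
    intro s
    refine Int.le_induction
      (motive := fun t _ => ∀ i j k : ℤ, i ≤ (m : ℤ) → 2 ≤ j → 2 ≤ k →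
        Γ i j (k + t - 1) - Γ i (j + t - 1) k = Γ (i - k + 1) t j - Γ (i - j + 1) t k)
      ?_ ?_ s
    · intro i j k him hj hk
      have E := H i j k him hj hk
      have e1 : k + 2 - 1 = k + 1 := by ring
      have e2 : j + 2 - 1 = j + 1 := by ring
      rw [e1, e2]
      exact E
    · intro s hs ih i j k him hj hk
      have E1 := H i j (k + s - 1) him hj (by omega)
      have E2 := ih i (j + 1) k him (by omega) hk
      have E3 := H (i - k + 1) s j (by omega) hs hj
      have E5 := ih (i - j + 1) 2 k (by omega) le_rfl hk
      have hS := hsym (i - j - k + 2) s 2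
      ring_nf at E1 E2 E3 E5 hS ⊢
      linarith [E1, E2, E3, E5, hS]
  intro i j k s _ hi2 hj1 _ hk1 _ hs1 _
  exact Q s hs1 i j k hi2 hj1 hk1
end

section
/- Suppose the Christoffel symbols Γ on U are symmetric in the lower indices and satisfy: (i) the flat-unit condition Σ_{σ=1}^r Γ^{i(α)}_{j(β)1(σ)} = 0 for all i(α), j(β); (ii) Γ^{i(α)}_{j(β)k(γ)} = 0 whenever α, β, γ are pairwise distinct; (iii) for α ≠ β: Γ^{i(α)}_{j(β)k(α)} = Γ^{(i−k+1)(α)}_{j(β)1(α)} for i ≥ k and = 0 for i < k; (iv) for α ≠ β: Γ^{i(α)}_{j(β)k(β)} = Γ^{i(α)}_{(j+k−1)(β)1(β)} for j+k ≤ m_β+1 and = 0 for j+k > m_β+1. Define A^{i(α)}_{j(β)k(γ)s(σ)} := Σ_{t(τ)} (Γ^{i(α)}_{j(β)t(τ)}c^{t(τ)}_{k(γ)s(σ)} − Γ^{t(τ)}_{j(β)s(σ)}c^{i(α)}_{k(γ)t(τ)} − Γ^{i(α)}_{k(γ)t(τ)}c^{t(τ)}_{j(β)s(σ)} + Γ^{t(τ)}_{k(γ)s(σ)}c^{i(α)}_{j(β)t(τ)}).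 Then A^{i(α)}_{j(β)k(γ)1(σ)} = 0 for all indices i(α), j(β), k(γ) and all σ ∈ {1,…,r}. -/
open scoped BigOperators

section Helpers

variable {r : ℕ} {m : Fin r → ℕ}

lemma sumIdx_eq_single (ρ : Fin r) (v : ℤ) (f : Fin r → ℤ → ℝ)
    (h : ∀ τ t, InR m τ t → f τ t ≠ 0 → τ = ρ ∧ t = v)
    (h0 : ¬ InR m ρ v → f ρ v = 0) :
    sumIdx m f = f ρ v := by
  unfold sumIdx
  by_cases hv : InR m ρ v
  · rw [Finset.sum_eq_single ρ]
    · rw [Finset.sum_eq_single v]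
      · intro t ht hne
        by_contra hfz
        exact hne (h ρ t (Finset.mem_Icc.mp ht) hfz).2
      · intro hvmem
        exact absurd (Finset.mem_Icc.mpr ⟨hv.1, hv.2⟩) hvmem
    · intro τ _ hτ
      apply Finset.sum_eq_zero
      intro t ht
      by_contra hfz
      exact hτ (h τ t (Finset.mem_Icc.mp ht) hfz).1
    · intro h'
      exact absurd (Finset.mem_univ ρ) h'
  · rw [h0 hv]
    apply Finset.sum_eq_zero
    intro τ _
    apply Finset.sum_eq_zero
    intro t ht
    by_contra hfz
    obtain ⟨h1, h2⟩ := h τ t (Finset.mem_Icc.mp ht) hfz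
    subst h1; subst h2
    exact hv (Finset.mem_Icc.mp ht)

lemma Atens_expand (hm : ∀ α, 1 ≤ m α)
    (Γ : Fin r → ℤ → Fin r → ℤ → Fin r → ℤ → Dom r m → ℝ)
    (α : Fin r) (i : ℤ) (β : Fin r) (j : ℤ) (γ : Fin r) (k : ℤ) (σ : Fin r)
    (hi : InR m α i) (hj : InR m β j) (hk : InR m γ k) (x : Dom r m) :
    Atens Γ α i β j γ k σ 1 x =
      (if γ = σ then Γ α i β j γ k x else 0)
      - (if α = γ ∧ k ≤ i then Γ α (i - k + 1) β j σ 1 x else 0)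
      - (if β = σ then Γ α i γ k β j x else 0)
      + (if α = β ∧ j ≤ i then Γ α (i - j + 1) γ k σ 1 x else 0) := by
  obtain ⟨hi1, hi2⟩ := hi; obtain ⟨hj1, hj2⟩ := hj; obtain ⟨hk1, hk2⟩ := hk
  have hσ1 : InR m σ 1 := ⟨le_refl 1, by exact_mod_cast hm σ⟩
  simp only [Atens]
  have split : sumIdx m (fun τ t =>
      Γ α i β j τ t x * cDH m τ t γ k σ 1
        - Γ τ t β j σ 1 x * cDH m α i γ k τ t
        - Γ α i γ k τ t x * cDH m τ t β j σ 1
        + Γ τ t γ k σ 1 x * cDH m α i β j τ t)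
      = sumIdx m (fun τ t => Γ α i β j τ t x * cDH m τ t γ k σ 1)
        - sumIdx m (fun τ t => Γ τ t β j σ 1 x * cDH m α i γ k τ t)
        - sumIdx m (fun τ t => Γ α i γ k τ t x * cDH m τ t β j σ 1)
        + sumIdx m (fun τ t => Γ τ t γ k σ 1 x * cDH m α i β j τ t) := by
    simp [sumIdx, Finset.sum_add_distrib, Finset.sum_sub_distrib]
  rw [split]
  have e1 : sumIdx m (fun τ t => Γ α i β j τ t x * cDH m τ t γ k σ 1)
      = if γ = σ then Γ α i β j γ k x else 0 := by
    rw [sumIdx_eq_single γ k]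
    · unfold cDH
      split_ifs with hC hσ hσ
      · rw [mul_one]
      · exact absurd hC.2.1 hσ
      · exact absurd ⟨rfl, hσ, by omega, ⟨hk1, hk2⟩, ⟨hk1, hk2⟩, hσ1⟩ hC
      · rw [mul_zero]
    · intro τ t ht hne
      have hc : cDH m τ t γ k σ 1 ≠ 0 := fun hz => hne (by rw [hz, mul_zero])
      unfold cDH at hc
      split_ifs at hc with hC
      · obtain ⟨h1, h2, h3, -⟩ := hC
        exact ⟨h1, by omega⟩
      · exact absurd rfl hc
    · intro hv; exact absurd ⟨hk1, hk2⟩ hv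
  have e3 : sumIdx m (fun τ t => Γ α i γ k τ t x * cDH m τ t β j σ 1)
      = if β = σ then Γ α i γ k β j x else 0 := by
    rw [sumIdx_eq_single β j]
    · unfold cDH
      split_ifs with hC hσ hσ
      · rw [mul_one]
      · exact absurd hC.2.1 hσ
      · exact absurd ⟨rfl, hσ, by omega, ⟨hj1, hj2⟩, ⟨hj1, hj2⟩, hσ1⟩ hC
      · rw [mul_zero]
    · intro τ t ht hne
      have hc : cDH m τ t β j σ 1 ≠ 0 := fun hz => hne (by rw [hz, mul_zero])
      unfold cDH at hc
      split_ifs at hc with hC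
      · obtain ⟨h1, h2, h3, -⟩ := hC
        exact ⟨h1, by omega⟩
      · exact absurd rfl hc
    · intro hv; exact absurd ⟨hj1, hj2⟩ hv
  have e2 : sumIdx m (fun τ t => Γ τ t β j σ 1 x * cDH m α i γ k τ t)
      = if α = γ ∧ k ≤ i then Γ α (i - k + 1) β j σ 1 x else 0 := by
    rw [sumIdx_eq_single α (i - k + 1)]
    · unfold cDH
      split_ifs with hC hG hG
      · rw [mul_one]
      · exact absurd ⟨hC.1, by
          obtain ⟨-, -, -, -, -, h6, -⟩ := hC
          omega⟩ hG
      · exact absurd ⟨hG.1, rfl, by omega, ⟨hi1, hi2⟩, ⟨hk1, hk2⟩, by omega, by omega⟩ hC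
      · rw [mul_zero]
    · intro τ t ht hne
      have hc : cDH m α i γ k τ t ≠ 0 := fun hz => hne (by rw [hz, mul_zero])
      unfold cDH at hc
      split_ifs at hc with hC
      · obtain ⟨h1, h2, h3, -⟩ := hC
        exact ⟨h2.symm, by omega⟩
      · exact absurd rfl hc
    · intro hv
      have : cDH m α i γ k α (i - k + 1) = 0 := by
        unfold cDH
        rw [if_neg]
        rintro ⟨-, -, -, -, -, hC1, hC2⟩
        exact hv ⟨hC1, hC2⟩
      rw [this, mul_zero]
  have e4 : sumIdx m (fun τ t => Γ τ t γ k σ 1 x * cDH m α i β j τ t)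
      = if α = β ∧ j ≤ i then Γ α (i - j + 1) γ k σ 1 x else 0 := by
    rw [sumIdx_eq_single α (i - j + 1)]
    · unfold cDH
      split_ifs with hC hG hG
      · rw [mul_one]
      · exact absurd ⟨hC.1, by
          obtain ⟨-, -, -, -, -, h6, -⟩ := hC
          omega⟩ hG
      · exact absurd ⟨hG.1, rfl, by omega, ⟨hi1, hi2⟩, ⟨hj1, hj2⟩, by omega, by omega⟩ hC
      · rw [mul_zero]
    · intro τ t ht hne
      have hc : cDH m α i β j τ t ≠ 0 := fun hz => hne (by rw [hz, mul_zero])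
      unfold cDH at hc
      split_ifs at hc with hC
      · obtain ⟨h1, h2, h3, -⟩ := hC
        exact ⟨h2.symm, by omega⟩
      · exact absurd rfl hc
    · intro hv
      have : cDH m α i β j α (i - j + 1) = 0 := by
        unfold cDH
        rw [if_neg]
        rintro ⟨-, -, -, -, -, hC1, hC2⟩
        exact hv ⟨hC1, hC2⟩
      rw [this, mul_zero]
  rw [e1, e2, e3, e4]

end Helpers

/-- Under the flat-unit condition and the structural properties
(ii)–(iv) of the Christoffel symbols, the components `A^{i(α)}_{j(β)k(γ)1(σ)}`
of the failure of symmetry of `∇c` vanish. -/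
theorem statement5
    {r : ℕ} (hr : 1 ≤ r) (m : Fin r → ℕ) (hm : ∀ α, 1 ≤ m α)
    (U : Set (Dom r m)) (hU : IsOpen U)
    (Γ : Fin r → ℤ → Fin r → ℤ → Fin r → ℤ → Dom r m → ℝ)
    -- out-of-range convention and torsionlessness
    (hΓ0 : ∀ α i β j γ k, ¬(InR m α i ∧ InR m β j ∧ InR m γ k) → Γ α i β j γ k = 0)
    (hΓsym : ∀ α i β j γ k, Γ α i β j γ k = Γ α i γ k β j)
    -- (i) flat unit
    (hflat : ∀ α i β j, InR m α i → InR m β j → ∀ x ∈ U,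
      (∑ σ : Fin r, Γ α i β j σ 1 x) = 0)
    -- (ii) vanishing for pairwise distinct blocks
    (hD1 : ∀ α i β j γ k, InR m α i → InR m β j → InR m γ k →
      α ≠ β → β ≠ γ → α ≠ γ → ∀ x ∈ U, Γ α i β j γ k x = 0)
    -- (iii) shift relation, mixed blocks, last index in block α
    (hD2a : ∀ α β, α ≠ β → ∀ i j k, InR m α i → InR m β j → InR m α k → ∀ x ∈ U,
      Γ α i β j α k x = if k ≤ i then Γ α (i - k + 1) β j α 1 x else 0)
    -- (iv) shift relation, mixed blocks, both lower indices in block β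
    (hD2b : ∀ α β, α ≠ β → ∀ i j k, InR m α i → InR m β j → InR m β k → ∀ x ∈ U,
      Γ α i β j β k x = if j + k ≤ (m β : ℤ) + 1 then Γ α i β (j + k - 1) β 1 x else 0) :
    ∀ α i β j γ k σ, InR m α i → InR m β j → InR m γ k →
      ∀ x ∈ U, Atens Γ α i β j γ k σ 1 x = 0 := by
  intro α i β j γ k σ hi hj hk x hx
  rw [Atens_expand hm Γ α i β j γ k σ hi hj hk x]
  have hσ1 : ∀ σ' : Fin r, InR m σ' 1 := fun σ' => ⟨le_refl 1, by exact_mod_cast hm σ'⟩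
  -- flat-unit, two-block decomposition
  have F1 : ∀ (β' : Fin r), β' ≠ α → ∀ a b, InR m α a → InR m β' b →
      Γ α a β' b α 1 x + Γ α a β' b β' 1 x = 0 := by
    intro β' hne a b ha hb
    have h0 := hflat α a β' b ha hb x hx
    have hsum : ∑ σ' : Fin r, Γ α a β' b σ' 1 x
        = ∑ σ' ∈ ({α, β'} : Finset (Fin r)), Γ α a β' b σ' 1 x := by
      symm
      apply Finset.sum_subset (Finset.subset_univ _)
      intro σ' _ hσ'
      simp only [Finset.mem_insert, Finset.mem_singleton, not_or] at hσ'
      exact hD1 α a β' b σ' 1 ha hb (hσ1 σ') hne.symm (Ne.symm hσ'.2) (Ne.symm hσ'.1) x hx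
    rw [hsum, Finset.sum_pair hne.symm] at h0
    exact h0
  have L1 : ∀ (σ' : Fin r), σ' ≠ α → ∀ a b, InR m α a → InR m α b →
      Γ α a α b σ' 1 x = if b ≤ a then Γ α (a - b + 1) α 1 σ' 1 x else 0 := by
    intro σ' hne a b ha hb
    rw [hΓsym α a α b σ' 1, hD2a α σ' hne.symm a 1 b ha (hσ1 σ') hb x hx,
      hΓsym α (a - b + 1) σ' 1 α 1]
  have C0 : ∀ a b, InR m α a → InR m α b →
      Γ α a α b α 1 x
        = if b ≤ a then -∑ σ' ∈ Finset.univ.erase α, Γ α (a - b + 1) α 1 σ' 1 x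
          else 0 := by
    intro a b ha hb
    have h0 := hflat α a α b ha hb x hx
    rw [← Finset.add_sum_erase _ _ (Finset.mem_univ α)] at h0
    have h1 : Γ α a α b α 1 x = -∑ σ' ∈ Finset.univ.erase α, Γ α a α b σ' 1 x := by
      linarith
    rw [h1, Finset.sum_congr rfl
      (fun σ' hσ' => L1 σ' (Finset.ne_of_mem_erase hσ') a b ha hb)]
    by_cases hba : b ≤ a
    · simp [hba]
    · simp [hba]
  obtain ⟨hi1, hi2⟩ := hi
  obtain ⟨hj1, hj2⟩ := hj
  obtain ⟨hk1, hk2⟩ := hk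
  by_cases hab : α = β <;> by_cases hag : α = γ
  · -- Case A : α = β = γ
    subst hab; subst hag
    have C1 : ∃ F : ℤ → ℝ, ∀ a b, InR m α a → InR m α b →
        Γ α a α b σ 1 x = if b ≤ a then F (a - b + 1) else 0 := by
      by_cases hσα : σ = α
      · refine ⟨fun d => -∑ σ' ∈ Finset.univ.erase α, Γ α d α 1 σ' 1 x, ?_⟩
        intro a b ha hb
        rw [hσα]
        exact C0 a b ha hb
      · exact ⟨fun d => Γ α d α 1 σ 1 x, fun a b ha hb => L1 σ hσα a b ha hb⟩
    obtain ⟨F, hF⟩ := C1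
    have h2 : (if α = α ∧ k ≤ i then Γ α (i - k + 1) α j σ 1 x else 0)
        = if j + k ≤ i + 1 then F (i - j - k + 2) else 0 := by
      by_cases hki : k ≤ i
      · rw [if_pos (show α = α ∧ k ≤ i from ⟨rfl, hki⟩),
          hF (i - k + 1) j ⟨by omega, by omega⟩ ⟨hj1, hj2⟩]
        by_cases hj' : j ≤ i - k + 1
        · rw [if_pos hj', if_pos (show j + k ≤ i + 1 by omega)]
          congr 1
          omega
        · rw [if_neg hj', if_neg (show ¬(j + k ≤ i + 1) by omega)]
      · rw [if_neg (show ¬(α = α ∧ k ≤ i) from fun h => hki h.2),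
          if_neg (show ¬(j + k ≤ i + 1) by omega)]
    have h4 : (if α = α ∧ j ≤ i then Γ α (i - j + 1) α k σ 1 x else 0)
        = if j + k ≤ i + 1 then F (i - j - k + 2) else 0 := by
      by_cases hji : j ≤ i
      · rw [if_pos (show α = α ∧ j ≤ i from ⟨rfl, hji⟩),
          hF (i - j + 1) k ⟨by omega, by omega⟩ ⟨hk1, hk2⟩]
        by_cases hk' : k ≤ i - j + 1
        · rw [if_pos hk', if_pos (show j + k ≤ i + 1 by omega)]
          congr 1
          omega
        · rw [if_neg hk', if_neg (show ¬(j + k ≤ i + 1) by omega)]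
      · rw [if_neg (show ¬(α = α ∧ j ≤ i) from fun h => hji h.2),
          if_neg (show ¬(j + k ≤ i + 1) by omega)]
    rw [hΓsym α i α j α k, h2, h4]
    ring
  · -- Case B : α = β, α ≠ γ
    subst hab
    have hrel : Γ α i γ k α j x = if j ≤ i then Γ α (i - j + 1) γ k α 1 x else 0 :=
      hD2a α γ hag i k j ⟨hi1, hi2⟩ ⟨hk1, hk2⟩ ⟨hj1, hj2⟩ x hx
    have hsym1 : Γ α i α j γ k x = Γ α i γ k α j x := by rw [hΓsym α i α j γ k]
    rw [if_neg (show ¬(α = γ ∧ k ≤ i) from fun h => hag h.1)]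
    by_cases hσγ : γ = σ
    · have hσα : ¬ α = σ := fun h => hag (h.trans hσγ.symm)
      rw [if_pos hσγ, if_neg hσα, ← hσγ]
      by_cases hji : j ≤ i
      · rw [if_pos (show α = α ∧ j ≤ i from ⟨rfl, hji⟩), hsym1, hrel, if_pos hji]
        have := F1 γ (fun h => hag h.symm) (i - j + 1) k ⟨by omega, by omega⟩ ⟨hk1, hk2⟩
        linarith
      · rw [if_neg (show ¬(α = α ∧ j ≤ i) from fun h => hji h.2), hsym1, hrel,
          if_neg hji]
        ring
    · by_cases hσα : α = σ
      · rw [if_neg hσγ, if_pos hσα, ← hσα, hrel]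
        by_cases hji : j ≤ i
        · rw [if_pos hji, if_pos (show α = α ∧ j ≤ i from ⟨rfl, hji⟩)]
          ring
        · rw [if_neg hji, if_neg (show ¬(α = α ∧ j ≤ i) from fun h => hji h.2)]
          ring
      · rw [if_neg hσγ, if_neg hσα]
        by_cases hji : j ≤ i
        · rw [if_pos (show α = α ∧ j ≤ i from ⟨rfl, hji⟩),
            hD1 α (i - j + 1) γ k σ 1 ⟨by omega, by omega⟩ ⟨hk1, hk2⟩ (hσ1 σ)
              hag hσγ hσα x hx]
          ring
        · rw [if_neg (show ¬(α = α ∧ j ≤ i) from fun h => hji h.2)]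
          ring
  · -- Case C : α ≠ β, α = γ
    subst hag
    have hrel : Γ α i β j α k x = if k ≤ i then Γ α (i - k + 1) β j α 1 x else 0 :=
      hD2a α β hab i j k ⟨hi1, hi2⟩ ⟨hj1, hj2⟩ ⟨hk1, hk2⟩ x hx
    rw [if_neg (show ¬(α = β ∧ j ≤ i) from fun h => hab h.1)]
    by_cases hσα : α = σ
    · have hσβ : ¬ β = σ := fun h => hab (hσα.trans h.symm)
      rw [if_pos hσα, if_neg hσβ, ← hσα, hrel]
      by_cases hki : k ≤ i
      · rw [if_pos hki, if_pos (show α = α ∧ k ≤ i from ⟨rfl, hki⟩)]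
        ring
      · rw [if_neg hki, if_neg (show ¬(α = α ∧ k ≤ i) from fun h => hki h.2)]
        ring
    · by_cases hσβ : β = σ
      · rw [if_neg hσα, if_pos hσβ, ← hσβ, hΓsym α i α k β j, hrel]
        by_cases hki : k ≤ i
        · rw [if_pos (show α = α ∧ k ≤ i from ⟨rfl, hki⟩), if_pos hki]
          have := F1 β (fun h => hab h.symm) (i - k + 1) j ⟨by omega, by omega⟩ ⟨hj1, hj2⟩
          linarith
        · rw [if_neg (show ¬(α = α ∧ k ≤ i) from fun h => hki h.2), if_neg hki]
          ring
      · rw [if_neg hσα, if_neg hσβ]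
        by_cases hki : k ≤ i
        · rw [if_pos (show α = α ∧ k ≤ i from ⟨rfl, hki⟩),
            hD1 α (i - k + 1) β j σ 1 ⟨by omega, by omega⟩ ⟨hj1, hj2⟩ (hσ1 σ)
              hab hσβ hσα x hx]
          ring
        · rw [if_neg (show ¬(α = α ∧ k ≤ i) from fun h => hki h.2)]
          ring
  · -- Case D : α ≠ β, α ≠ γ
    rw [if_neg (show ¬(α = γ ∧ k ≤ i) from fun h => hag h.1),
      if_neg (show ¬(α = β ∧ j ≤ i) from fun h => hab h.1)]
    by_cases hbg : β = γ
    · have heq : Γ α i β j γ k x = Γ α i γ k β j x := by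
        rw [← hbg] at hk2 ⊢
        rw [hD2b α β hab i j k ⟨hi1, hi2⟩ ⟨hj1, hj2⟩ ⟨hk1, hk2⟩ x hx,
          hD2b α β hab i k j ⟨hi1, hi2⟩ ⟨hk1, hk2⟩ ⟨hj1, hj2⟩ x hx, add_comm k j]
      rw [heq, hbg]
      ring
    · rw [hD1 α i β j γ k ⟨hi1, hi2⟩ ⟨hj1, hj2⟩ ⟨hk1, hk2⟩ hab hbg hag x hx,
        hD1 α i γ k β j ⟨hi1, hi2⟩ ⟨hk1, hk2⟩ ⟨hj1, hj2⟩ hag (fun h => hbg h.symm) hab x hx]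
      simp
end

section
/- Let M be a real n×n matrix with entries M_{i(α)j(β)}. If Σ_{s(σ)} c^{s(σ)}_{j(β)i(α)} M_{s(σ)k(γ)} = Σ_{s(σ)} c^{s(σ)}_{k(γ)i(α)} M_{s(σ)j(β)} for all indices i(α), j(β), k(γ), then M can be written as M_{i(α)j(β)} = Σ_{s(σ)} c^{s(σ)}_{i(α)j(β)} θ_{s(σ)} for the numbers θ_{s(σ)} := Σ_{τ=1}^r M_{s(σ)1(τ)}. Equivalently, M is block-diagonal with Hankel blocks: M_{i(α)j(β)} = 0 for α ≠ β, M_{i(α)j(α)} = 0 for i+j−1 > m_α, and M_{i(α)j(α)} = θ_{(i+j−1)(α)} for i+j−1 ≤ m_α. -/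
open scoped BigOperators

lemma sumIdx_cDH {r : ℕ} (m : Fin r → ℕ) (β : Fin r) (j : ℤ) (γ : Fin r) (k : ℤ)
    (g : Fin r → ℤ → ℝ) (hj : InR m β j) (hk : InR m γ k) :
    sumIdx m (fun σ s => cDH m σ s β j γ k * g σ s)
      = if β = γ ∧ j + k - 1 ≤ (m β : ℤ) then g β (j + k - 1) else 0 := by
  unfold sumIdx cDH
  rw [Finset.sum_eq_single β (fun σ _ hσ => Finset.sum_eq_zero (fun s _ => by
        rw [if_neg (fun h => hσ h.1), zero_mul]))
      (fun h => absurd (Finset.mem_univ β) h)]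
  rw [Finset.sum_eq_single (j + k - 1) (fun s _ hs => by
        rw [if_neg (fun h => hs h.2.2.1), zero_mul])
      (fun hs => by
        rw [if_neg, zero_mul]
        rintro ⟨-, -, -, h, -⟩
        exact hs (Finset.mem_Icc.mpr ⟨h.1, h.2⟩))]
  obtain ⟨hj1, hj2⟩ := hj
  obtain ⟨hk1, hk2⟩ := hk
  by_cases hbg : β = γ
  · subst hbg
    by_cases hle : j + k - 1 ≤ (m β : ℤ)
    · rw [if_pos (⟨rfl, rfl, rfl, ⟨by omega, hle⟩, ⟨hj1, hj2⟩, ⟨hk1, hk2⟩⟩ :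
          β = β ∧ β = β ∧ j + k - 1 = j + k - 1 ∧ InR m β (j + k - 1) ∧ InR m β j ∧ InR m β k),
        if_pos ⟨rfl, hle⟩, one_mul]
    · rw [if_neg (fun h : β = β ∧ β = β ∧ j + k - 1 = j + k - 1 ∧ InR m β (j + k - 1) ∧
          InR m β j ∧ InR m β k => hle h.2.2.2.1.2),
        if_neg (fun h : β = β ∧ j + k - 1 ≤ (m β : ℤ) => hle h.2), zero_mul]
  · rw [if_neg (fun h : β = β ∧ β = γ ∧ j + k - 1 = j + k - 1 ∧ InR m β (j + k - 1) ∧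
        InR m β j ∧ InR m γ k => hbg h.2.1),
      if_neg (fun h : β = γ ∧ j + k - 1 ≤ (m β : ℤ) => hbg h.1), zero_mul]

/-- A matrix `M` satisfying `c^s_{ji} M_{sk} = c^s_{ki} M_{sj}`
is of the form `M_{ij} = c^s_{ij} θ_s` with `θ_s = Σ_τ M_{s 1(τ)}`; equivalently
it is block-diagonal with Hankel blocks. -/
theorem statement6
    {r : ℕ} (hr : 1 ≤ r) (m : Fin r → ℕ) (hm : ∀ α, 1 ≤ m α)
    (M : Fin r → ℤ → Fin r → ℤ → ℝ)
    (hM : ∀ α i β j γ k, InR m α i → InR m β j → InR m γ k →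
      sumIdx m (fun σ s => cDH m σ s β j α i * M σ s γ k)
        = sumIdx m (fun σ s => cDH m σ s γ k α i * M σ s β j)) :
    ∀ α i β j, InR m α i → InR m β j →
      (M α i β j
          = sumIdx m (fun σ s => cDH m σ s α i β j * (∑ τ : Fin r, M σ s τ 1)))
      ∧ (α ≠ β → M α i β j = 0)
      ∧ (α = β → (m α : ℤ) < i + j - 1 → M α i β j = 0)
      ∧ (α = β → i + j - 1 ≤ (m α : ℤ) →
          M α i β j = (∑ τ : Fin r, M α (i + j - 1) τ 1)) := by
  have h1 : ∀ α : Fin r, InR m α 1 := fun α => ⟨le_refl 1, by exact_mod_cast hm α⟩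
  have key : ∀ α i β j γ k, InR m α i → InR m β j → InR m γ k →
      (if β = α ∧ j + i - 1 ≤ (m β : ℤ) then M β (j + i - 1) γ k else 0)
        = (if γ = α ∧ k + i - 1 ≤ (m γ : ℤ) then M γ (k + i - 1) β j else 0) := by
    intro α i β j γ k hi hj hk
    have := hM α i β j γ k hi hj hk
    rwa [sumIdx_cDH m β j α i _ hj hi, sumIdx_cDH m γ k α i _ hk hi] at this
  -- off-diagonal vanishing
  have offdiag : ∀ α i β j, InR m α i → InR m β j → α ≠ β → M α i β j = 0 := by
    intro α i β j hi hj hne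
    have := key α 1 α i β j (h1 α) hi hj
    have hii : i + 1 - 1 = i := by omega
    have hjj : j + 1 - 1 = j := by omega
    rw [hii, hjj, if_pos ⟨rfl, hi.2⟩, if_neg (fun h => hne h.1.symm)] at this
    exact this
  -- Hankel structure
  have hankel : ∀ α i j, InR m α i → InR m α j →
      M α i α j = if i + j - 1 ≤ (m α : ℤ) then M α (i + j - 1) α 1 else 0 := by
    intro α i j hi hj
    have := key α i α j α 1 hi hj (h1 α)
    have h11 : (1 : ℤ) + i - 1 = i := by omega
    have hji : j + i - 1 = i + j - 1 := by omega
    rw [h11, hji, if_pos (⟨rfl, hi.2⟩ : α = α ∧ i ≤ (m α : ℤ))] at this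
    by_cases hle : i + j - 1 ≤ (m α : ℤ)
    · rw [if_pos hle]
      rw [if_pos (⟨rfl, hle⟩ : α = α ∧ i + j - 1 ≤ (m α : ℤ))] at this
      exact this.symm
    · rw [if_neg hle]
      rw [if_neg (fun h : α = α ∧ i + j - 1 ≤ (m α : ℤ) => hle h.2)] at this
      exact this.symm
  have sumθ : ∀ α s, InR m α s →
      (∑ τ : Fin r, M α s τ 1) = M α s α 1 := by
    intro α s hs
    exact Finset.sum_eq_single α
      (fun τ _ hτ => offdiag α s τ 1 hs (h1 τ) (Ne.symm hτ))
      (fun h => absurd (Finset.mem_univ α) h)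
  intro α i β j hi hj
  refine ⟨?_, ?_, ?_, ?_⟩
  · rw [sumIdx_cDH m α i β j _ hi hj]
    by_cases hab : α = β
    · subst hab
      by_cases hle : i + j - 1 ≤ (m α : ℤ)
      · rw [if_pos ⟨rfl, hle⟩, hankel α i j hi hj, if_pos hle,
          sumθ α (i + j - 1) ⟨by omega, hle⟩]
      · rw [if_neg (fun h => hle h.2), hankel α i j hi hj, if_neg hle]
    · rw [if_neg (fun h => hab h.1), offdiag α i β j hi hj hab]
  · exact offdiag α i β j hi hj
  · intro hab hlt
    subst hab
    rw [hankel α i j hi hj, if_neg (by omega)]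
  · intro hab hle
    subst hab
    rw [hankel α i j hi hj, if_pos hle, sumθ α (i + j - 1) ⟨by omega, hle⟩]
end
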